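/- arXiv:1511.07043 — 9 statements merged into one kernel-verified Lean document; each statement's English description precedes it below -/
import Mathlib

section
/- Let p ≥ 1, suppose U_m > 0 for all 1 ≤ m ≤ p, and let S ⊆ ZMod L with |S| = N ≥ 1 and L ≤ N·(p+1). If S has a gap of length p+1 at some site (i.e., there is i ∈ S with i + j ∉ S for all integers 1 ≤ j ≤ p+1), then E(S) > 0. -/
/-- Atomic-limit energy of a configuration (Fock state) `S` of occupied sites on a
periodic chain of `L` sites, with interaction range `p` and two-body potentials `U`:
`E(S) = ∑_{i ∈ ZMod L} ∑_{m=1}^{p} U m · [i ∈ S] · [i + m ∈ S]`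
(the outer sum over `ZMod L` is written via its enumeration `i = 0, …, L-1`). -/
noncomputable def energy (L p : ℕ) (U : ℕ → ℝ) (S : Finset (ZMod L)) : ℝ :=
  ∑ i ∈ Finset.range L, ∑ m ∈ Finset.Icc 1 p,
    U m * (if (i : ZMod L) ∈ S then (1 : ℝ) else 0) *
      (if (i : ZMod L) + (m : ZMod L) ∈ S then (1 : ℝ) else 0)

/-- At or above the critical density `1/(p+1)` (i.e. `L ≤ N(p+1)`), if all potentials
`U_1, …, U_p` are positive and the configuration `S` has a gap of length `p+1` at some
occupied site, then its energy is strictly positive. -/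
theorem energy_pos_of_gap_succ_p (L p N : ℕ) (hL : 0 < L) (hp : 1 ≤ p)
    (U : ℕ → ℝ) (hU : ∀ m : ℕ, 1 ≤ m → m ≤ p → 0 < U m)
    (S : Finset (ZMod L)) (hS : S.card = N) (hN : 1 ≤ N) (hdens : L ≤ N * (p + 1))
    (hgap : ∃ i ∈ S, ∀ j : ℕ, 1 ≤ j → j ≤ p + 1 → i + (j : ZMod L) ∉ S) :
    0 < energy L p U S := by
  haveI : NeZero L := ⟨hL.ne'⟩
  obtain ⟨i₀, hi₀, hgap⟩ := hgap
  -- L must exceed p+1, else the gap would wrap around and exclude i₀ itself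
  have hLp : p + 2 ≤ L := by
    by_contra h
    push_neg at h
    have := hgap L hL (by omega)
    simp [ZMod.natCast_self] at this
    exact this hi₀
  -- there exists an occupied pair at distance m ∈ [1, p]
  have hpair : ∃ i ∈ S, ∃ m, 1 ≤ m ∧ m ≤ p ∧ i + (m : ZMod L) ∈ S := by
    by_contra hno
    push_neg at hno
    set B : ZMod L → Finset (ZMod L) :=
      fun i => (Finset.range (p + 1)).image (fun m : ℕ => i + (m : ZMod L)) with hB
    have hmem : ∀ (i x : ZMod L), x ∈ B i ↔ ∃ m ≤ p, x = i + (m : ZMod L) := by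
      intro i x
      simp [hB, Finset.mem_image, Finset.mem_range, Nat.lt_succ_iff, eq_comm]
    have hcard : ∀ i, (B i).card = p + 1 := by
      intro i
      rw [hB]
      rw [Finset.card_image_of_injOn, Finset.card_range]
      intro a ha b hb hab
      simp only [Finset.coe_range, Set.mem_Iio] at ha hb
      have h1 : (a : ZMod L) = b := add_left_cancel hab
      have h2 := congrArg ZMod.val h1
      rwa [ZMod.val_natCast_of_lt (by omega), ZMod.val_natCast_of_lt (by omega)] at h2
    have hdisj : ∀ i ∈ S, ∀ j ∈ S, i ≠ j → Disjoint (B i) (B j) := by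
      intro i hi j hj hij
      rw [Finset.disjoint_left]
      intro x hxi hxj
      rw [hmem] at hxi hxj
      obtain ⟨a, ha, rfl⟩ := hxi
      obtain ⟨b, hb, hab⟩ := hxj
      rcases le_or_gt a b with h | h
      · have hcast : (b : ZMod L) = ((b - a : ℕ) : ZMod L) + a := by
          rw [← Nat.cast_add]; congr 1; omega
        rw [hcast, ← add_assoc] at hab
        have hji : i = j + ((b - a : ℕ) : ZMod L) := add_right_cancel hab
        rcases Nat.eq_zero_or_pos (b - a) with h0 | h0
        · apply hij
          rw [hji, h0]; simp
        · exact hno j hj (b - a) h0 (by omega) (hji ▸ hi)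
      · have hcast : (a : ZMod L) = ((a - b : ℕ) : ZMod L) + b := by
          rw [← Nat.cast_add]; congr 1; omega
        rw [hcast, ← add_assoc] at hab
        have hji : i + ((a - b : ℕ) : ZMod L) = j := add_right_cancel hab
        exact hno i hi (a - b) (by omega) (by omega) (hji ▸ hj)
    have hbig : (S.biUnion B).card = N * (p + 1) := by
      rw [Finset.card_biUnion hdisj]
      simp [hcard, hS, Finset.sum_const, mul_comm]
    have hextra : i₀ + ((p + 1 : ℕ) : ZMod L) ∉ S.biUnion B := by
      intro hx
      rw [Finset.mem_biUnion] at hx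
      obtain ⟨j, hj, hxj⟩ := hx
      rw [hmem] at hxj
      obtain ⟨b, hb, hxb⟩ := hxj
      have hcast : ((p + 1 : ℕ) : ZMod L) = ((p + 1 - b : ℕ) : ZMod L) + b := by
        rw [← Nat.cast_add]; congr 1; omega
      rw [hcast, ← add_assoc] at hxb
      have hj' : j = i₀ + ((p + 1 - b : ℕ) : ZMod L) := (add_right_cancel hxb).symm
      exact hgap (p + 1 - b) (by omega) (by omega) (hj' ▸ hj)
    have hcontr : N * (p + 1) + 1 ≤ L := by
      have h1 : (insert (i₀ + ((p + 1 : ℕ) : ZMod L)) (S.biUnion B)).card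
          = N * (p + 1) + 1 := by
        rw [Finset.card_insert_of_notMem hextra, hbig]
      calc N * (p + 1) + 1 = _ := h1.symm
        _ ≤ Fintype.card (ZMod L) := Finset.card_le_univ _
        _ = L := ZMod.card L
    omega
  obtain ⟨i, hi, m, hm1, hm2, him⟩ := hpair
  unfold energy
  have hnn : ∀ k ∈ Finset.range L, 0 ≤ ∑ m' ∈ Finset.Icc 1 p,
      U m' * (if (k : ZMod L) ∈ S then (1 : ℝ) else 0) *
        (if (k : ZMod L) + (m' : ZMod L) ∈ S then (1 : ℝ) else 0) := by
    intro k _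
    apply Finset.sum_nonneg
    intro m' hm'
    simp only [Finset.mem_Icc] at hm'
    have hU' := (hU m' hm'.1 hm'.2).le
    split_ifs <;> simp [hU']
  apply Finset.sum_pos' hnn
  refine ⟨i.val, Finset.mem_range.mpr (ZMod.val_lt i), ?_⟩
  apply Finset.sum_pos'
  · intro m' hm'
    simp only [Finset.mem_Icc] at hm'
    have hU' := (hU m' hm'.1 hm'.2).le
    split_ifs <;> simp [hU']
  · refine ⟨m, Finset.mem_Icc.mpr ⟨hm1, hm2⟩, ?_⟩
    have hiv : ((i.val : ℕ) : ZMod L) = i := by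
      simp [ZMod.natCast_val, ZMod.cast_id]
    rw [hiv, if_pos hi, if_pos him]
    simpa using hU m hm1 hm2
end

section
/- Let p ≥ 1, suppose U_m > 0 for all 1 ≤ m ≤ p, and let S ⊆ ZMod L with |S| = N ≥ 1 and L ≤ N·(p+1). Suppose S is a thermodynamic ground state, meaning: for every integer k ≥ 1 and every S' ⊆ ZMod (k·L) with |S'| = k·N, one has k · E_L(S) ≤ E_{kL}(S'). Then the largest space between consecutive fermions in S does not exceed p sites; that is, for every i ∈ S there exists an integer j with 1 ≤ j ≤ p+1 and i + j ∈ S. -/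
open Finset


lemma eq_of_modEq_window {n a b c : ℕ} (h : a ≡ b [MOD n]) (ha1 : c ≤ a) (ha2 : a < c + n)
    (hb1 : c ≤ b) (hb2 : b < c + n) : a = b := by
  have hd : (n : ℤ) ∣ (b : ℤ) - a := h.dvd
  have habs : |(b : ℤ) - a| < n := by rw [abs_sub_lt_iff]; omega
  have := Int.eq_zero_of_abs_lt_dvd hd habs
  omega

lemma cast_eq_window {n c a b : ℕ} (h : (a : ZMod n) = b) (ha1 : c ≤ a) (ha2 : a < c + n)
    (hb1 : c ≤ b) (hb2 : b < c + n) : a = b :=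
  eq_of_modEq_window ((ZMod.natCast_eq_natCast_iff _ _ _).mp h) ha1 ha2 hb1 hb2

lemma sum_range_zmod {M : ℕ} [NeZero M] (f : ZMod M → ℝ) :
    ∑ i ∈ Finset.range M, f (i : ZMod M) = ∑ x : ZMod M, f x := by
  have himg : (Finset.range M).image (fun i : ℕ => (i : ZMod M)) = Finset.univ := by
    apply Finset.eq_univ_of_card
    rw [Finset.card_image_of_injOn, Finset.card_range]
    · exact (ZMod.card M).symm
    · intro x hx y hy hxy
      have hx' := ZMod.val_cast_of_lt (Finset.mem_range.mp hx)
      have hy' := ZMod.val_cast_of_lt (Finset.mem_range.mp hy)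
      have h2 : ((x : ZMod M)).val = ((y : ZMod M)).val := by
        simpa using congrArg ZMod.val hxy
      rwa [hx', hy'] at h2
  rw [← himg, Finset.sum_image]
  intro x hx y hy hxy
  have hx' := ZMod.val_cast_of_lt (Finset.mem_range.mp hx)
  have hy' := ZMod.val_cast_of_lt (Finset.mem_range.mp hy)
  have h2 : ((x : ZMod M)).val = ((y : ZMod M)).val := by
    simpa using congrArg ZMod.val hxy
  rwa [hx', hy'] at h2

lemma energy_occ {M p : ℕ} [NeZero M] (U : ℕ → ℝ) (S : Finset (ZMod M)) :
    energy M p U S = ∑ x ∈ S, ∑ m ∈ Finset.Icc 1 p,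
      U m * (if x + (m : ZMod M) ∈ S then (1:ℝ) else 0) := by
  have h1 : energy M p U S = ∑ x : ZMod M, ∑ m ∈ Finset.Icc 1 p,
      U m * (if x ∈ S then (1 : ℝ) else 0) * (if x + (m : ZMod M) ∈ S then (1 : ℝ) else 0) :=
    sum_range_zmod (fun x => ∑ m ∈ Finset.Icc 1 p,
      U m * (if x ∈ S then (1 : ℝ) else 0) * (if x + (m : ZMod M) ∈ S then (1 : ℝ) else 0))
  rw [h1]
  have h2 : ∀ x : ZMod M, (∑ m ∈ Finset.Icc 1 p,
      U m * (if x ∈ S then (1 : ℝ) else 0) * (if x + (m : ZMod M) ∈ S then (1 : ℝ) else 0))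
      = if x ∈ S then (∑ m ∈ Finset.Icc 1 p,
        U m * (if x + (m : ZMod M) ∈ S then (1:ℝ) else 0)) else 0 := by
    intro x
    by_cases hx : x ∈ S
    · simp [hx, mul_one]
    · simp [hx]
  rw [Finset.sum_congr rfl (fun x _ => h2 x), Finset.sum_ite_mem, Finset.univ_inter]

lemma energy_pattern {M p : ℕ} [NeZero M] (U : ℕ → ℝ) (S : Finset (ZMod M)) (T : Finset ℕ)
    (g : ℕ → ZMod M) (hST : S = T.image g)
    (hinj : ∀ t ∈ T, ∀ t' ∈ T, g t = g t' → t = t')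
    (hmem : ∀ t ∈ T, ∀ m, 1 ≤ m → m ≤ p → (g t + (m : ZMod M) ∈ S ↔ t + m ∈ T)) :
    energy M p U S = ∑ t ∈ T, ∑ m ∈ Finset.Icc 1 p,
      U m * (if t + m ∈ T then (1:ℝ) else 0) := by
  subst hST
  rw [energy_occ, Finset.sum_image hinj]
  refine Finset.sum_congr rfl (fun t ht => Finset.sum_congr rfl (fun m hm => ?_))
  rw [if_congr (hmem t ht m (Finset.mem_Icc.mp hm).1 (Finset.mem_Icc.mp hm).2) rfl rfl]


lemma ite_ind_nonneg {P : Prop} [Decidable P] : (0:ℝ) ≤ if P then 1 else 0 := by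
  split_ifs <;> norm_num

lemma term_mono {U' : ℝ} (hU' : 0 ≤ U') {P Q P' Q' : Prop} [Decidable P] [Decidable Q]
    [Decidable P'] [Decidable Q'] (hP : P → P') (hQ : Q → Q') :
    U' * (if P then (1:ℝ) else 0) * (if Q then 1 else 0)
      ≤ U' * (if P' then 1 else 0) * (if Q' then 1 else 0) := by
  have e1 : (if P then (1:ℝ) else 0) ≤ if P' then 1 else 0 := by
    split_ifs with a b
    · exact le_rfl
    · exact absurd (hP a) b
    · norm_num
    · exact le_rfl
  have e2 : (if Q then (1:ℝ) else 0) ≤ if Q' then 1 else 0 := by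
    split_ifs with a b
    · exact le_rfl
    · exact absurd (hQ a) b
    · norm_num
    · exact le_rfl
  exact mul_le_mul (mul_le_mul_of_nonneg_left e1 hU') e2 ite_ind_nonneg
    (mul_nonneg hU' ite_ind_nonneg)

lemma energy_erase_le {M p : ℕ} (U : ℕ → ℝ) (hU : ∀ m, 1 ≤ m → m ≤ p → 0 < U m)
    (S : Finset (ZMod M)) (i0 d : ℕ) (hi0 : i0 < M) (hd1 : 1 ≤ d) (hd2 : d ≤ p)
    (h1 : (i0 : ZMod M) ∈ S) (h2 : (i0 : ZMod M) + (d : ZMod M) ∈ S) :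
    energy M p U (S.erase ((i0 : ZMod M) + (d : ZMod M))) + U d ≤ energy M p U S := by
  set x := (i0 : ZMod M) + (d : ZMod M) with hx
  set A := S.erase x with hA
  have hAS : ∀ y : ZMod M, y ∈ A → y ∈ S := fun y hy => Finset.mem_of_mem_erase hy
  have hUm : ∀ m ∈ Finset.Icc 1 p, (0:ℝ) ≤ U m := fun m hm =>
    le_of_lt (hU m (Finset.mem_Icc.mp hm).1 (Finset.mem_Icc.mp hm).2)
  have hterm : ∀ i : ℕ, ∀ m ∈ Finset.Icc 1 p,
      U m * (if (i:ZMod M) ∈ A then (1:ℝ) else 0) * (if (i:ZMod M) + (m:ZMod M) ∈ A then 1 else 0)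
      ≤ U m * (if (i:ZMod M) ∈ S then 1 else 0) * (if (i:ZMod M) + (m:ZMod M) ∈ S then 1 else 0) :=
    fun i m hm => term_mono (hUm m hm) (hAS _) (hAS _)
  have hinner : ∀ i ∈ Finset.range M,
      (∑ m ∈ Finset.Icc 1 p, U m * (if (i:ZMod M) ∈ A then (1:ℝ) else 0) *
        (if (i:ZMod M) + (m:ZMod M) ∈ A then 1 else 0))
      ≤ ∑ m ∈ Finset.Icc 1 p, U m * (if (i:ZMod M) ∈ S then 1 else 0) *
        (if (i:ZMod M) + (m:ZMod M) ∈ S then 1 else 0) :=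
    fun i _ => Finset.sum_le_sum (hterm i)
  have hdmem : d ∈ Finset.Icc 1 p := Finset.mem_Icc.mpr ⟨hd1, hd2⟩
  have hi0mem : i0 ∈ Finset.range M := Finset.mem_range.mpr hi0
  have hi0A : (∑ m ∈ Finset.Icc 1 p, U m * (if (i0:ZMod M) ∈ A then (1:ℝ) else 0) *
        (if (i0:ZMod M) + (m:ZMod M) ∈ A then 1 else 0)) + U d
      ≤ ∑ m ∈ Finset.Icc 1 p, U m * (if (i0:ZMod M) ∈ S then 1 else 0) *
        (if (i0:ZMod M) + (m:ZMod M) ∈ S then 1 else 0) := by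
    rw [← Finset.add_sum_erase _ _ hdmem, ← Finset.add_sum_erase _ _ hdmem]
    have e1 : U d * (if (i0:ZMod M) ∈ A then (1:ℝ) else 0) *
        (if (i0:ZMod M) + (d:ZMod M) ∈ A then 1 else 0) = 0 := by
      rw [hA, ← hx, if_neg (Finset.notMem_erase x S), mul_zero]
    have e2 : U d * (if (i0:ZMod M) ∈ S then (1:ℝ) else 0) *
        (if (i0:ZMod M) + (d:ZMod M) ∈ S then 1 else 0) = U d := by
      rw [if_pos h1, if_pos h2, mul_one, mul_one]
    have e3 := Finset.sum_le_sum (s := (Finset.Icc 1 p).erase d) (f := fun m => U m * (if (i0:ZMod M) ∈ A then (1:ℝ) else 0) *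
        (if (i0:ZMod M) + (m:ZMod M) ∈ A then 1 else 0))
      (g := fun m => U m * (if (i0:ZMod M) ∈ S then (1:ℝ) else 0) *
        (if (i0:ZMod M) + (m:ZMod M) ∈ S then 1 else 0))
      (fun m hm => hterm i0 m (Finset.mem_of_mem_erase hm))
    rw [e1, e2]
    linarith
  unfold energy
  rw [← Finset.add_sum_erase _ _ hi0mem, ← Finset.add_sum_erase _ _ hi0mem]
  have e4 := Finset.sum_le_sum (s := (Finset.range M).erase i0)
    (f := fun i : ℕ => ∑ m ∈ Finset.Icc 1 p, U m * (if (i:ZMod M) ∈ A then (1:ℝ) else 0) *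
      (if (i:ZMod M) + (m:ZMod M) ∈ A then 1 else 0))
    (g := fun i : ℕ => ∑ m ∈ Finset.Icc 1 p, U m * (if (i:ZMod M) ∈ S then (1:ℝ) else 0) *
      (if (i:ZMod M) + (m:ZMod M) ∈ S then 1 else 0))
    (fun i hi => hinner i (Finset.mem_of_mem_erase hi))
  linarith

lemma energy_insert_eq {M p : ℕ} (U : ℕ → ℝ) (A : Finset (ZMod M)) (z : ZMod M)
    (hzA : z ∉ A)
    (h1 : ∀ m : ℕ, 1 ≤ m → m ≤ p → z + (m : ZMod M) ∉ A ∧ z + (m : ZMod M) ≠ z)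
    (h2 : ∀ m : ℕ, 1 ≤ m → m ≤ p → ∀ y ∈ A, y + (m : ZMod M) ≠ z) :
    energy M p U (insert z A) = energy M p U A := by
  unfold energy
  refine Finset.sum_congr rfl (fun i _ => Finset.sum_congr rfl (fun m hm => ?_))
  obtain ⟨hm1, hm2⟩ := Finset.mem_Icc.mp hm
  obtain ⟨hz1, hz2⟩ := h1 m hm1 hm2
  by_cases hiz : (i : ZMod M) = z
  · rw [hiz]
    have : z + (m : ZMod M) ∉ insert z A := by
      simp only [Finset.mem_insert]
      push_neg
      exact ⟨hz2, hz1⟩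
    rw [if_neg this, if_neg hzA]
    ring
  · have e1 : ((i : ZMod M) ∈ insert z A) ↔ ((i : ZMod M) ∈ A) := by
      simp [Finset.mem_insert, hiz]
    by_cases him : (i : ZMod M) + (m : ZMod M) = z
    · have hiA : (i : ZMod M) ∉ A := fun hiA => h2 m hm1 hm2 _ hiA him
      rw [if_neg (fun h => hiA (e1.mp h)), if_neg hiA]
      ring
    · have e2 : ((i : ZMod M) + (m : ZMod M) ∈ insert z A) ↔ ((i : ZMod M) + (m : ZMod M) ∈ A) := by
        simp [Finset.mem_insert, him]
      rw [if_congr e1 rfl rfl, if_congr e2 rfl rfl]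

/-- **Theorem 2 of the paper.** At or above the critical density `1/(p+1)` and with
positive potentials, a thermodynamic ground state (a configuration whose energy
density cannot be lowered by any configuration of the same particle density on any
multiple of the unit-cell length) has no space between consecutive fermions
exceeding `p` sites: every occupied site has another occupied site within `p+1`
sites to its right. -/
theorem ground_state_largest_gap_le_p (L p N : ℕ) (hL : 0 < L) (hp : 1 ≤ p)
    (U : ℕ → ℝ) (hU : ∀ m : ℕ, 1 ≤ m → m ≤ p → 0 < U m)
    (S : Finset (ZMod L)) (hS : S.card = N) (hN : 1 ≤ N) (hdens : L ≤ N * (p + 1))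
    (hgs : ∀ k : ℕ, 1 ≤ k → ∀ S' : Finset (ZMod (k * L)), S'.card = k * N →
      (k : ℝ) * energy L p U S ≤ energy (k * L) p U S') :
    ∀ i ∈ S, ∃ j : ℕ, 1 ≤ j ∧ j ≤ p + 1 ∧ i + (j : ZMod L) ∈ S := by
  intro a ha
  by_contra hcon
  push_neg at hcon
  haveI : NeZero L := ⟨hL.ne'⟩
  by_cases hLp : L ≤ p + 1
  · exact hcon L hL hLp (by rw [ZMod.natCast_self, add_zero]; exact ha)
  push_neg at hLp
  classical
  set g : ℕ → ZMod L := fun t => a + (t : ZMod L) with hgdef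
  set T : Finset ℕ := (Finset.Icc 1 L).filter (fun t => a + (t : ZMod L) ∈ S) with hTdef
  have hT_mem : ∀ t : ℕ, t ∈ T ↔ (1 ≤ t ∧ t ≤ L ∧ a + (t : ZMod L) ∈ S) := by
    intro t; rw [hTdef, Finset.mem_filter, Finset.mem_Icc, and_assoc]
  have hT_low : ∀ t ∈ T, p + 2 ≤ t := by
    intro t ht
    obtain ⟨h1, h2, h3⟩ := (hT_mem t).mp ht
    by_contra hc
    exact hcon t h1 (by omega) h3
  have hLT : L ∈ T := (hT_mem L).mpr ⟨hL, le_rfl, by rw [ZMod.natCast_self, add_zero]; exact ha⟩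
  have hginj : ∀ t ∈ T, ∀ t' ∈ T, g t = g t' → t = t' := by
    intro t ht t' ht' he
    obtain ⟨h1, h2, _⟩ := (hT_mem t).mp ht
    obtain ⟨h1', h2', _⟩ := (hT_mem t').mp ht'
    have he2 : (t : ZMod L) = (t' : ZMod L) := by
      have := he
      rw [hgdef] at this
      exact add_left_cancel this
    exact cast_eq_window he2 h1 (by omega) h1' (by omega)
  have hST : S = T.image g := by
    apply Finset.Subset.antisymm
    · intro x hx
      rw [Finset.mem_image]
      by_cases hxa : x = a
      · exact ⟨L, hLT, by rw [hgdef]; simp only [ZMod.natCast_self, add_zero]; exact hxa.symm⟩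
      · have hu : (((x - a).val : ℕ) : ZMod L) = x - a := ZMod.natCast_rightInverse _
        have hvlt : (x - a).val < L := ZMod.val_lt _
        have hv1 : 1 ≤ (x - a).val := by
          rcases Nat.eq_zero_or_pos (x - a).val with h0 | h0
          · exfalso
            apply hxa
            have h2 : x - a = 0 := by rw [← hu, h0]; simp
            exact sub_eq_zero.mp h2
          · exact h0
        refine ⟨(x - a).val, (hT_mem _).mpr ⟨hv1, le_of_lt hvlt, ?_⟩, ?_⟩
        · rw [hu]
          have : a + (x - a) = x := by ring
          rw [this]; exact hx
        · rw [hgdef]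
          show a + (((x - a).val : ℕ) : ZMod L) = x
          rw [hu]; ring
    · intro x hx
      rw [Finset.mem_image] at hx
      obtain ⟨t, ht, hrfl⟩ := hx
      rw [← hrfl]
      exact ((hT_mem t).mp ht).2.2
  have hTcard : T.card = N := by
    rw [← hS, hST, Finset.card_image_of_injOn
      (fun t ht t' ht' he => hginj t (by simpa using ht) t' (by simpa using ht') he)]
  have hmemS : ∀ t ∈ T, ∀ m, 1 ≤ m → m ≤ p → (g t + (m : ZMod L) ∈ S ↔ t + m ∈ T) := by
    intro t ht m hm1 hm2
    obtain ⟨ht1, ht2, ht3⟩ := (hT_mem t).mp ht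
    have hcast : g t + (m : ZMod L) = a + (((t + m : ℕ)) : ZMod L) := by
      rw [hgdef]; push_cast; ring
    constructor
    · intro hmem
      rw [hcast] at hmem
      by_cases hc : t + m ≤ L
      · exact (hT_mem (t + m)).mpr ⟨by omega, hc, hmem⟩
      · exfalso
        have hr : ((t + m : ℕ) : ZMod L) = ((t + m - L : ℕ) : ZMod L) := by
          have he : t + m = (t + m - L) + L := by omega
          conv_lhs => rw [he]
          push_cast
          rw [ZMod.natCast_self, add_zero]
        rw [hr] at hmem
        exact hcon (t + m - L) (by omega) (by omega) hmem
    · intro hmem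
      rw [hcast]
      exact ((hT_mem (t + m)).mp hmem).2.2
  have hE : energy L p U S = ∑ t ∈ T, ∑ m ∈ Finset.Icc 1 p,
      U m * (if t + m ∈ T then (1:ℝ) else 0) :=
    energy_pattern U S T g hST hginj hmemS
  -- existence of a close pair
  have hpair : ∃ t0 ∈ T, ∃ d, 1 ≤ d ∧ d ≤ p ∧ t0 + d ∈ T := by
    by_contra hno
    push_neg at hno
    have hdisj : ∀ x ∈ T, ∀ y ∈ T, x ≠ y →
        Disjoint (Finset.Ico (x - p) (x + 1)) (Finset.Ico (y - p) (y + 1)) := by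
      intro x hx y hy hxy
      rw [Finset.disjoint_left]
      intro u hu hu'
      rw [Finset.mem_Ico] at hu hu'
      have hxp := hT_low x hx
      have hyp := hT_low y hy
      rcases lt_trichotomy x y with h | h | h
      · refine hno x hx (y - x) (by omega) (by omega) ?_
        have he : x + (y - x) = y := by omega
        rw [he]; exact hy
      · exact hxy h
      · refine hno y hy (x - y) (by omega) (by omega) ?_
        have he : y + (x - y) = x := by omega
        rw [he]; exact hx
    have hcard1 : (T.biUnion (fun t => Finset.Ico (t - p) (t + 1))).card = N * (p + 1) := by
      rw [Finset.card_biUnion hdisj]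
      have hc : ∀ t ∈ T, (Finset.Ico (t - p) (t + 1)).card = p + 1 := by
        intro t ht; rw [Nat.card_Ico]; have := hT_low t ht; omega
      rw [Finset.sum_congr rfl hc, Finset.sum_const, hTcard, smul_eq_mul]
    have hsub : T.biUnion (fun t => Finset.Ico (t - p) (t + 1)) ⊆ Finset.Icc 2 L := by
      intro u hu
      rw [Finset.mem_biUnion] at hu
      obtain ⟨t, ht, hu⟩ := hu
      rw [Finset.mem_Ico] at hu
      have h1 := hT_low t ht
      have h2 := ((hT_mem t).mp ht).2.1
      rw [Finset.mem_Icc]; omega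
    have hle := Finset.card_le_card hsub
    rw [hcard1, Nat.card_Icc] at hle
    omega
  obtain ⟨t0, ht0, d, hd1, hd2, ht0d⟩ := hpair
  -- setup of the k = p+1 copies construction
  have hTne : T.Nonempty := ⟨L, hLT⟩
  obtain ⟨tm, htm_mem, htm_le⟩ : ∃ tm, tm ∈ T ∧ ∀ t ∈ T, tm ≤ t :=
    ⟨T.min' hTne, T.min'_mem hTne, fun t ht => T.min'_le t ht⟩
  have htm1 : p + 2 ≤ tm := hT_low tm htm_mem
  have htm2 : tm ≤ L := htm_le L hLT
  obtain ⟨B, hB⟩ : ∃ B, B + tm = L + (p + 1) := ⟨L + (p + 1) - tm, by omega⟩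
  have hK2L : 2 * L ≤ (p + 1) * L := Nat.mul_le_mul_right L (by omega)
  haveI : NeZero ((p + 1) * L) := ⟨Nat.mul_ne_zero (by omega) (by omega)⟩
  have hPB : p * B + L + p ≤ (p + 1) * L := by
    have hB1 : B + 1 ≤ L := by omega
    have h1 : p * (B + 1) ≤ p * L := Nat.mul_le_mul_left p hB1
    have h2 : p * (B + 1) = p * B + p := by ring
    have h3 : (p + 1) * L = p * L + L := by ring
    omega
  set TC : Finset ℕ := ((Finset.range (p + 1)) ×ˢ T).image (fun ct => ct.1 * B + ct.2)
    with hTCdef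
  have hTC_mem : ∀ v : ℕ, v ∈ TC ↔ ∃ c, c < p + 1 ∧ ∃ t ∈ T, c * B + t = v := by
    intro v
    rw [hTCdef, Finset.mem_image]
    constructor
    · rintro ⟨⟨c, t⟩, hct, hrfl⟩
      rw [Finset.mem_product, Finset.mem_range] at hct
      exact ⟨c, hct.1, t, hct.2, hrfl⟩
    · rintro ⟨c, hc, t, ht, hrfl⟩
      exact ⟨(c, t), Finset.mem_product.mpr ⟨Finset.mem_range.mpr hc, ht⟩, hrfl⟩
  have hTC_bound : ∀ v ∈ TC, tm ≤ v ∧ v ≤ p * B + L := by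
    intro v hv
    obtain ⟨c, hc, t, ht, hrfl⟩ := (hTC_mem v).mp hv
    have h1 := htm_le t ht
    have h2 := ((hT_mem t).mp ht).2.1
    have h3 : c * B ≤ p * B := Nat.mul_le_mul_right B (by omega)
    omega
  have hφinj : ∀ x ∈ (Finset.range (p + 1)) ×ˢ T, ∀ y ∈ (Finset.range (p + 1)) ×ˢ T,
      x.1 * B + x.2 = y.1 * B + y.2 → x = y := by
    rintro ⟨c, t⟩ hx ⟨c', t'⟩ hy he
    rw [Finset.mem_product, Finset.mem_range] at hx hy
    simp only at he
    have ht2 := ((hT_mem t).mp hx.2).2.1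
    have ht1' := htm_le t' hy.2
    have ht1 := htm_le t hx.2
    have ht2' := ((hT_mem t').mp hy.2).2.1
    have hcc : c = c' := by
      rcases lt_trichotomy c c' with h | h | h
      · exfalso
        have hh1 : (c + 1) * B ≤ c' * B := Nat.mul_le_mul_right B (by omega)
        have hh2 : (c + 1) * B = c * B + B := by ring
        omega
      · exact h
      · exfalso
        have hh1 : (c' + 1) * B ≤ c * B := Nat.mul_le_mul_right B (by omega)
        have hh2 : (c' + 1) * B = c' * B + B := by ring
        omega
    subst hcc
    have : t = t' := by omega
    rw [this]
  have hTCcard : TC.card = (p + 1) * N := by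
    rw [hTCdef, Finset.card_image_of_injOn
      (fun x hx y hy he => hφinj x (by simpa using hx) y (by simpa using hy) he),
      Finset.card_product, Finset.card_range, hTcard]
  set C : Finset (ZMod ((p + 1) * L)) := TC.image (fun v : ℕ => (v : ZMod ((p + 1) * L)))
    with hCdef
  have hdecode : ∀ w : ℕ, tm ≤ w → w < tm + (p + 1) * L → ((w : ZMod ((p + 1) * L)) ∈ C ↔ w ∈ TC) := by
    intro w h1 h2
    constructor
    · intro hw
      rw [hCdef, Finset.mem_image] at hw
      obtain ⟨v, hv, he⟩ := hw
      have hb := hTC_bound v hv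
      have hvw : v = w := cast_eq_window he hb.1 (by omega) h1 h2
      rwa [← hvw]
    · intro hw
      rw [hCdef]
      exact Finset.mem_image_of_mem _ hw
  have hCinj : ∀ v ∈ TC, ∀ v' ∈ TC, (v : ZMod ((p + 1) * L)) = (v' : ℕ) → v = v' := by
    intro v hv v' hv' he
    have hb := hTC_bound v hv
    have hb' := hTC_bound v' hv'
    exact cast_eq_window he hb.1 (by omega) hb'.1 (by omega)
  have hCcard : C.card = (p + 1) * N := by
    rw [hCdef, Finset.card_image_of_injOn
      (fun v hv v' hv' he => hCinj v (by simpa using hv) v' (by simpa using hv') he), hTCcard]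
  have hstep : ∀ c, c < p + 1 → ∀ t ∈ T, ∀ m, 1 ≤ m → m ≤ p →
      (c * B + t + m ∈ TC ↔ t + m ∈ T) := by
    intro c hc t ht m h1 h2
    have ht1 := htm_le t ht
    have ht2 := ((hT_mem t).mp ht).2.1
    constructor
    · intro hm
      obtain ⟨c', hc', t', ht', he⟩ := (hTC_mem _).mp hm
      have ht1' := htm_le t' ht'
      have ht2' := ((hT_mem t').mp ht').2.1
      have hcc : c' = c := by
        rcases lt_trichotomy c c' with h | h | h
        · exfalso
          have hh1 : (c + 1) * B ≤ c' * B := Nat.mul_le_mul_right B (by omega)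
          have hh2 : (c + 1) * B = c * B + B := by ring
          omega
        · exact h.symm
        · exfalso
          have hh1 : (c' + 1) * B ≤ c * B := Nat.mul_le_mul_right B (by omega)
          have hh2 : (c' + 1) * B = c' * B + B := by ring
          omega
      subst hcc
      have he2 : t' = t + m := by omega
      rwa [← he2]
    · intro hm
      rw [hTC_mem]
      exact ⟨c, hc, t + m, hm, by omega⟩
  have hmemC : ∀ v ∈ TC, ∀ m, 1 ≤ m → m ≤ p →
      ((v : ZMod ((p + 1) * L)) + (m : ZMod ((p + 1) * L)) ∈ C ↔ v + m ∈ TC) := by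
    intro v hv m h1 h2
    have hb := hTC_bound v hv
    have hcast : (v : ZMod ((p + 1) * L)) + (m : ZMod ((p + 1) * L))
        = ((v + m : ℕ) : ZMod ((p + 1) * L)) := by push_cast; ring
    rw [hcast]
    exact hdecode (v + m) (by omega) (by omega)
  have hEC : energy ((p + 1) * L) p U C = ∑ v ∈ TC, ∑ m ∈ Finset.Icc 1 p,
      U m * (if v + m ∈ TC then (1:ℝ) else 0) :=
    energy_pattern U C TC _ hCdef hCinj hmemC
  have hsum_gen : ∀ F : ℕ → ℝ, ∑ v ∈ TC, F v
      = ∑ c ∈ Finset.range (p + 1), ∑ t ∈ T, F (c * B + t) := by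
    intro F
    rw [hTCdef, Finset.sum_image
      (fun x hx y hy he => hφinj x hx y hy he), Finset.sum_product]
  have hEC2 : energy ((p + 1) * L) p U C = ((p : ℝ) + 1) * energy L p U S := by
    rw [hEC, hsum_gen]
    have hc1 : ∀ c ∈ Finset.range (p + 1),
        (∑ t ∈ T, ∑ m ∈ Finset.Icc 1 p, U m * (if c * B + t + m ∈ TC then (1:ℝ) else 0))
        = energy L p U S := by
      intro c hc
      rw [hE]
      refine Finset.sum_congr rfl (fun t ht => Finset.sum_congr rfl (fun m hm => ?_))
      rw [if_congr (hstep c (Finset.mem_range.mp hc) t ht m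
        (Finset.mem_Icc.mp hm).1 (Finset.mem_Icc.mp hm).2) rfl rfl]
    rw [Finset.sum_congr rfl hc1, Finset.sum_const, Finset.card_range, nsmul_eq_mul]
    push_cast
    ring
  -- the removal site
  have ht0L : t0 ≤ L := ((hT_mem t0).mp ht0).2.1
  have ht0K : t0 < (p + 1) * L := by omega
  have ht0TC : t0 ∈ TC := (hTC_mem t0).mpr ⟨0, by omega, t0, ht0, by omega⟩
  have ht0dTC : t0 + d ∈ TC := (hTC_mem (t0 + d)).mpr ⟨0, by omega, t0 + d, ht0d, by omega⟩
  have ht0C : ((t0 : ℕ) : ZMod ((p + 1) * L)) ∈ C := by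
    rw [hCdef]; exact Finset.mem_image_of_mem _ ht0TC
  have ht0dC : ((t0 : ℕ) : ZMod ((p + 1) * L)) + ((d : ℕ) : ZMod ((p + 1) * L)) ∈ C := by
    have hcast : ((t0 : ℕ) : ZMod ((p + 1) * L)) + ((d : ℕ) : ZMod ((p + 1) * L))
        = ((t0 + d : ℕ) : ZMod ((p + 1) * L)) := by push_cast; ring
    rw [hcast, hCdef]
    exact Finset.mem_image_of_mem _ ht0dTC
  have herase := energy_erase_le U hU C t0 d ht0K hd1 hd2 ht0C ht0dC
  -- the insertion site
  obtain ⟨w, hwdef⟩ : ∃ w : ℕ, w = p * B + L + (p + 1) := ⟨_, rfl⟩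
  have hwtm : tm ≤ w := by omega
  have hznC : ∀ m : ℕ, m ≤ p → ((w + m : ℕ) : ZMod ((p + 1) * L)) ∉ C := by
    intro m hm hin
    rw [hdecode (w + m) (by omega) (by omega)] at hin
    have := hTC_bound _ hin
    omega
  have hzC : ((w : ℕ) : ZMod ((p + 1) * L)) ∉ C := by
    have := hznC 0 (by omega)
    simpa using this
  have hz_notA : ((w : ℕ) : ZMod ((p + 1) * L)) ∉
      C.erase (((t0 : ℕ) : ZMod ((p + 1) * L)) + ((d : ℕ) : ZMod ((p + 1) * L))) :=
    fun h => hzC (Finset.mem_of_mem_erase h)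
  have hinsert := energy_insert_eq (p := p) U
    (C.erase (((t0 : ℕ) : ZMod ((p + 1) * L)) + ((d : ℕ) : ZMod ((p + 1) * L))))
    ((w : ℕ) : ZMod ((p + 1) * L)) hz_notA
    (by
      intro m hm1 hm2
      constructor
      · intro hin
        have hin' := Finset.mem_of_mem_erase hin
        have hcast : ((w : ℕ) : ZMod ((p + 1) * L)) + (m : ZMod ((p + 1) * L))
            = ((w + m : ℕ) : ZMod ((p + 1) * L)) := by push_cast; ring
        rw [hcast] at hin'
        exact hznC m (by omega) hin'
      · intro he
        have hcast : ((w : ℕ) : ZMod ((p + 1) * L)) + (m : ZMod ((p + 1) * L))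
            = ((w + m : ℕ) : ZMod ((p + 1) * L)) := by push_cast; ring
        rw [hcast] at he
        have : w + m = w := cast_eq_window (c := tm) he (by omega) (by omega) (by omega) (by omega)
        omega)
    (by
      intro m hm1 hm2 y hy he
      have hyC := Finset.mem_of_mem_erase hy
      rw [hCdef, Finset.mem_image] at hyC
      obtain ⟨v, hv, hrfl⟩ := hyC
      have hb := hTC_bound v hv
      rw [← hrfl] at he
      have hcast : ((v : ℕ) : ZMod ((p + 1) * L)) + (m : ZMod ((p + 1) * L))
          = ((v + m : ℕ) : ZMod ((p + 1) * L)) := by push_cast; ring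
      rw [hcast] at he
      have : v + m = w := cast_eq_window (c := tm) he (by omega) (by omega) (by omega) (by omega)
      omega)
  -- assembling
  have hS'card : (insert ((w : ℕ) : ZMod ((p + 1) * L))
      (C.erase (((t0 : ℕ) : ZMod ((p + 1) * L)) + ((d : ℕ) : ZMod ((p + 1) * L))))).card
      = (p + 1) * N := by
    rw [Finset.card_insert_of_notMem hz_notA, Finset.card_erase_of_mem ht0dC, hCcard]
    have h1 : 1 ≤ (p + 1) * N := by
      have := Nat.mul_le_mul (by omega : 1 ≤ p + 1) hN
      omega
    omega
  have hfin := hgs (p + 1) (by omega) _ hS'card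
  rw [hinsert] at hfin
  have hUd := hU d hd1 hd2
  rw [hEC2] at herase
  push_cast at hfin
  linarith
end

section
/- Let p ≥ 1, suppose U_m > 0 for all 1 ≤ m ≤ p, and let S ⊆ ZMod L with |S| = N, E(S) > 0, such that S has a gap of length p+1 at some site (there is i ∈ S with i + j ∉ S for all integers 1 ≤ j ≤ p+1). Then there exist an integer k ≥ 1 and a configuration S' ⊆ ZMod (k·L) with |S'| = k·N and E_{kL}(S') < k · E_L(S); that is, a configuration of the same density with strictly lower energy density exists. -/
/-!
Cut the ring open just after the gap: `S` becomes a block `T` of particles on the sites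
`0, …, L - p - 2` of a half-infinite chain, with the same energy. On a ring of `(p + 1) L` sites put
`p + 1` copies of `T` with period `L - 1`. Copies are more than `p` apart, so this has energy
`(p + 1) E(S)`, and the `p + 1` sites saved, together with the `p` empty sites that close the last
copy, leave room for a particle with no neighbour within distance `p`. Since `E(S) > 0`, some
particle has a bond; moving it there strictly lowers the energy because all `U m ≥ 0`.
-/

open Finset

/-- The energy of particles at the sites `T` of the open chain `ℕ` (no wrap-around). -/
noncomputable def openEnergy (p : ℕ) (U : ℕ → ℝ) (T : Finset ℕ) : ℝ :=
  ∑ x ∈ T, ∑ m ∈ Icc 1 p, if x + m ∈ T then U m else 0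

section ZModChain

variable {L : ℕ}

lemma injOn_natCast_range : Set.InjOn (Nat.cast : ℕ → ZMod L) (range L) := by
  intro x hx y hy hxy
  rw [ZMod.natCast_eq_natCast_iff', Nat.mod_eq_of_lt (mem_range.1 hx),
    Nat.mod_eq_of_lt (mem_range.1 hy)] at hxy
  exact hxy

lemma image_natCast_range [NeZero L] : (range L).image (Nat.cast : ℕ → ZMod L) = univ :=
  eq_univ_of_forall fun z =>
    mem_image.2 ⟨z.val, mem_range.2 (ZMod.val_lt z), ZMod.natCast_zmod_val z⟩

lemma energy_eq_sum_mem [NeZero L] (p : ℕ) (U : ℕ → ℝ) (S : Finset (ZMod L)) :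
    energy L p U S = ∑ z ∈ S, ∑ m ∈ Icc 1 p, if z + m ∈ S then U m else 0 := by
  classical
  have hterm : ∀ z : ZMod L, (∑ m ∈ Icc 1 p, U m * (if z ∈ S then (1 : ℝ) else 0) *
      (if z + (m : ZMod L) ∈ S then (1 : ℝ) else 0)) =
      if z ∈ S then ∑ m ∈ Icc 1 p, (if z + m ∈ S then U m else 0) else 0 := by
    intro z
    split_ifs <;> simp
  rw [energy, ← sum_image (g := Nat.cast) (f := fun z : ZMod L => ∑ m ∈ Icc 1 p,
      U m * (if z ∈ S then (1 : ℝ) else 0) * (if z + (m : ZMod L) ∈ S then (1 : ℝ) else 0))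
    injOn_natCast_range, image_natCast_range]
  simp only [hterm, sum_ite_mem, univ_inter]

lemma energy_image_add_right [NeZero L] (p : ℕ) (U : ℕ → ℝ) (S : Finset (ZMod L))
    (c : ZMod L) : energy L p U (S.image (· + c)) = energy L p U S := by
  classical
  have hmem : ∀ z : ZMod L, z + c ∈ S.image (· + c) ↔ z ∈ S := fun z =>
    (add_left_injective c).mem_finset_image
  rw [energy_eq_sum_mem, energy_eq_sum_mem, sum_image fun x _ y _ h => add_left_injective c h]
  refine sum_congr rfl fun z _ => sum_congr rfl fun m _ => ?_
  rw [add_right_comm]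
  exact if_congr (hmem _) rfl rfl

lemma natCast_mem_image_natCast {T : Finset ℕ} (hT : ∀ x ∈ T, x < L) {y : ℕ} (hy : y < L) :
    (y : ZMod L) ∈ T.image Nat.cast ↔ y ∈ T := by
  refine ⟨fun h => ?_, fun h => mem_image_of_mem _ h⟩
  obtain ⟨x, hx, hxy⟩ := mem_image.1 h
  rwa [← injOn_natCast_range (mem_range.2 (hT x hx)) (mem_range.2 hy) hxy]

lemma card_image_natCast {T : Finset ℕ} (hT : ∀ x ∈ T, x < L) :
    (T.image (Nat.cast : ℕ → ZMod L)).card = T.card :=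
  card_image_of_injOn (injOn_natCast_range.mono fun x hx => mem_range.2 (hT x hx))

lemma energy_image_natCast [NeZero L] (p : ℕ) (U : ℕ → ℝ) {T : Finset ℕ}
    (hT : ∀ x ∈ T, x + p < L) :
    energy L p U (T.image Nat.cast) = openEnergy p U T := by
  have hTL : ∀ x ∈ T, x < L := fun x hx => by have := hT x hx; omega
  rw [energy_eq_sum_mem, sum_image (injOn_natCast_range.mono fun x hx => mem_range.2 (hTL x hx)),
    openEnergy]
  refine sum_congr rfl fun x hx => sum_congr rfl fun m hm => ?_
  have hxm : x + m < L := by have := hT x hx; have := (mem_Icc.1 hm).2; omega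
  rw [← Nat.cast_add]
  exact if_congr (natCast_mem_image_natCast hTL hxm) rfl rfl

end ZModChain

section OpenEnergy

variable {p : ℕ} {U : ℕ → ℝ}

lemma openEnergy_image_add_right (T : Finset ℕ) (c : ℕ) :
    openEnergy p U (T.image (· + c)) = openEnergy p U T := by
  have hmem : ∀ y : ℕ, y + c ∈ T.image (· + c) ↔ y ∈ T := fun y =>
    (add_left_injective c).mem_finset_image
  rw [openEnergy, openEnergy, sum_image fun x _ y _ h => add_left_injective c h]
  refine sum_congr rfl fun x _ => sum_congr rfl fun m _ => ?_
  rw [add_right_comm]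
  exact if_congr (hmem _) rfl rfl

lemma openEnergy_union {A B : Finset ℕ} (hAB : ∀ a ∈ A, ∀ b ∈ B, a + p < b) :
    openEnergy p U (A ∪ B) = openEnergy p U A + openEnergy p U B := by
  have hdisj : Disjoint A B := disjoint_left.2 fun a ha hb => by
    have := hAB a ha a hb; omega
  rw [openEnergy, sum_union hdisj]
  congr 1
  · refine sum_congr rfl fun a ha => sum_congr rfl fun m hm => if_congr ?_ rfl rfl
    have := (mem_Icc.1 hm).2
    exact ⟨fun h => (mem_union.1 h).resolve_right fun hB => by
      have := hAB a ha _ hB; omega, mem_union_left B⟩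
  · refine sum_congr rfl fun b hb => sum_congr rfl fun m _ => if_congr ?_ rfl rfl
    exact ⟨fun h => (mem_union.1 h).resolve_left fun hA => by
      have := hAB _ hA b hb; omega, mem_union_right A⟩

lemma openEnergy_insert_of_forall_add_lt {A : Finset ℕ} {b : ℕ} (hA : ∀ a ∈ A, a + p < b) :
    openEnergy p U (insert b A) = openEnergy p U A := by
  have hb : openEnergy p U {b} = 0 :=
    sum_eq_zero fun x hx => sum_eq_zero fun m hm => by
      have := (mem_Icc.1 hm).1
      rw [mem_singleton.1 hx, if_neg (by rw [mem_singleton]; omega)]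
  rw [insert_eq, union_comm, openEnergy_union fun a ha b' hb' => mem_singleton.1 hb' ▸ hA a ha,
    hb, add_zero]

lemma exists_openEnergy_erase_lt (hU : ∀ m ∈ Icc 1 p, 0 ≤ U m) {T : Finset ℕ}
    (hT : 0 < openEnergy p U T) : ∃ a ∈ T, openEnergy p U (T.erase a) < openEnergy p U T := by
  set f : Finset ℕ → ℕ → ℝ := fun A x => ∑ m ∈ Icc 1 p, if x + m ∈ A then U m else 0
  obtain ⟨a, ha, hpos⟩ : ∃ a ∈ T, 0 < f T a :=
    exists_lt_of_sum_lt (by rwa [sum_const_zero])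
  refine ⟨a, ha, ?_⟩
  calc openEnergy p U (T.erase a) ≤ ∑ x ∈ T.erase a, f T x :=
        sum_le_sum fun x _ => sum_le_sum fun m hm => by
          split_ifs with h₁ h₂
          · rfl
          · exact absurd (mem_of_mem_erase h₁) h₂
          · exact hU m hm
          · rfl
    _ < ∑ x ∈ T.erase a, f T x + f T a := lt_add_of_pos_right _ hpos
    _ = openEnergy p U T := sum_erase_add T _ ha

end OpenEnergy

def tile (q k : ℕ) (T : Finset ℕ) : Finset ℕ :=
  (range k).biUnion fun r => T.image (· + r * q)

section Tile

variable {q : ℕ} {T : Finset ℕ}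

lemma tile_succ (k : ℕ) : tile q (k + 1) T = tile q k T ∪ T.image (· + k * q) := by
  rw [tile, range_add_one, biUnion_insert, union_comm, tile]

lemma add_lt_of_mem_tile {d k : ℕ} (hT : ∀ x ∈ T, x + d < q) {y : ℕ} (hy : y ∈ tile q k T) :
    y + d < k * q := by
  obtain ⟨r, hr, x, hx, rfl⟩ : ∃ r ∈ range k, ∃ x ∈ T, x + r * q = y := by
    simpa [tile] using hy
  have := hT x hx
  have : (r + 1) * q ≤ k * q := Nat.mul_le_mul_right q (mem_range.1 hr)
  nlinarith

lemma card_tile (hT : ∀ x ∈ T, x < q) (k : ℕ) : (tile q k T).card = k * T.card := by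
  induction k with
  | zero => simp [tile]
  | succ k ih =>
    have hdisj : Disjoint (tile q k T) (T.image (· + k * q)) :=
      disjoint_left.2 fun y hy hy' => by
        obtain ⟨x, -, rfl⟩ := mem_image.1 hy'
        have := add_lt_of_mem_tile (d := 0) (by simpa using hT) hy
        omega
    rw [tile_succ, card_union_of_disjoint hdisj, ih,
      card_image_of_injective _ (add_left_injective _), add_one_mul]

lemma openEnergy_tile {p : ℕ} {U : ℕ → ℝ} (hT : ∀ x ∈ T, x + p < q) (k : ℕ) :
    openEnergy p U (tile q k T) = k * openEnergy p U T := by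
  induction k with
  | zero => simp [tile, openEnergy]
  | succ k ih =>
    have hsep : ∀ a ∈ tile q k T, ∀ b ∈ T.image (· + k * q), a + p < b := fun a ha b hb => by
      obtain ⟨x, -, rfl⟩ := mem_image.1 hb
      have := add_lt_of_mem_tile hT ha
      omega
    rw [tile_succ, openEnergy_union hsep, ih, openEnergy_image_add_right]
    push_cast
    ring

end Tile

lemma exists_eq_image_of_gap {L g : ℕ} [NeZero L] {S : Finset (ZMod L)} {i : ZMod L}
    (hgap : ∀ j : ℕ, 1 ≤ j → j ≤ g → i + (j : ZMod L) ∉ S) :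
    ∃ T : Finset ℕ, (∀ x ∈ T, x + g < L) ∧
      S = (T.image Nat.cast).image (· + (i + (g + 1 : ℕ))) := by
  classical
  set c : ZMod L := i + (g + 1 : ℕ)
  refine ⟨S.image fun z => (z - c).val, ?_, ?_⟩
  · simp only [mem_image]
    rintro _ ⟨z, hz, rfl⟩
    by_contra! hle
    have hlt := ZMod.val_lt (z - c)
    -- `z` is the site `i + j` of the gap, with `j = (z - c).val + g + 1 - L`
    have hj : (((z - c).val + g + 1 - L : ℕ) : ZMod L) = ((z - c).val + (g + 1) : ℕ) := by
      rw [show (z - c).val + (g + 1) = ((z - c).val + g + 1 - L) + L by omega, Nat.cast_add _ L,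
        ZMod.natCast_self, add_zero]
    refine hgap ((z - c).val + g + 1 - L) (by omega) (by omega) ?_
    rw [hj, Nat.cast_add, ZMod.natCast_zmod_val]
    convert hz using 1
    ring
  · ext z
    simp [image_image, Function.comp_def, c]

theorem exists_lower_energy_density_of_gap_general (L p N : ℕ) (hL : 0 < L)
    (U : ℕ → ℝ) (hU : ∀ m : ℕ, 1 ≤ m → m ≤ p → 0 < U m)
    (S : Finset (ZMod L)) (hS : S.card = N) (hE : 0 < energy L p U S)
    (hgap : ∃ i ∈ S, ∀ j : ℕ, 1 ≤ j → j ≤ p + 1 → i + (j : ZMod L) ∉ S) :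
    ∃ k : ℕ, 1 ≤ k ∧ ∃ S' : Finset (ZMod (k * L)), S'.card = k * N ∧
      energy (k * L) p U S' < (k : ℝ) * energy L p U S := by
  obtain ⟨q, rfl⟩ : ∃ q, L = q + 1 := ⟨L - 1, by omega⟩
  obtain ⟨i, -, hgap⟩ := hgap
  obtain ⟨T, hT, rfl⟩ := exists_eq_image_of_gap hgap
  have hTq : ∀ x ∈ T, x + p < q := fun x hx => by have := hT x hx; omega
  rw [card_image_of_injective _ (add_left_injective _),
    card_image_natCast fun x hx => by have := hT x hx; omega] at hS
  rw [energy_image_add_right, energy_image_natCast p U fun x hx => by have := hT x hx; omega]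
    at hE ⊢
  set W := tile q (p + 1) T
  have hW : openEnergy p U W = (p + 1 : ℕ) * openEnergy p U T := openEnergy_tile hTq _
  obtain ⟨a, ha, hlt⟩ := exists_openEnergy_erase_lt
    (fun m hm => (hU m (mem_Icc.1 hm).1 (mem_Icc.1 hm).2).le) (by rw [hW]; positivity)
  have hsep : ∀ x ∈ W.erase a, x + p < (p + 1) * q := fun x hx =>
    add_lt_of_mem_tile hTq (mem_of_mem_erase hx)
  have hfit : ∀ x ∈ insert ((p + 1) * q) (W.erase a), x + p < (p + 1) * (q + 1) := by
    intro x hx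
    rcases mem_insert.1 hx with rfl | hx
    · nlinarith
    · nlinarith [hsep x hx]
  refine ⟨p + 1, by omega, (insert ((p + 1) * q) (W.erase a)).image Nat.cast, ?_, ?_⟩
  · rw [card_image_natCast fun x hx => by have := hfit x hx; omega,
      card_insert_of_notMem fun h => by have := hsep _ h; omega, card_erase_add_one ha,
      card_tile (fun x hx => by have := hTq x hx; omega), hS]
  · rw [energy_image_natCast p U hfit, openEnergy_insert_of_forall_add_lt hsep, ← hW]
    exact hlt

/-- Key construction of Theorem 2 of the paper: with positive potentials, if a
configuration `S` of `N` particles on `L` sites has strictly positive energy and a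
gap of length `p+1` at some occupied site, then there is a configuration of the same
particle density on some chain of `k·L` sites with strictly lower energy density. -/
theorem exists_lower_energy_density_of_gap (L p N : ℕ) (hL : 0 < L) (hp : 1 ≤ p)
    (U : ℕ → ℝ) (hU : ∀ m : ℕ, 1 ≤ m → m ≤ p → 0 < U m)
    (S : Finset (ZMod L)) (hS : S.card = N) (hE : 0 < energy L p U S)
    (hgap : ∃ i ∈ S, ∀ j : ℕ, 1 ≤ j → j ≤ p + 1 → i + (j : ZMod L) ∉ S) :
    ∃ k : ℕ, 1 ≤ k ∧ ∃ S' : Finset (ZMod (k * L)), S'.card = k * N ∧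
      energy (k * L) p U S' < (k : ℝ) * energy L p U S :=
  exists_lower_energy_density_of_gap_general L p N hL U hU S hS hE hgap
end

section
/- Let p ≥ 1, N ≥ 1, L = N·(p+1), and suppose U_m > 0 for all 1 ≤ m ≤ p. Then the set of N-element configurations of zero energy, {S ⊆ ZMod L : |S| = N ∧ E(S) = 0}, is exactly the set of the p+1 translates {S₀ + r : r = 0, 1, …, p} of the equally spaced configuration S₀ = {j·(p+1) : 0 ≤ j < N}, and it has cardinality exactly p+1. (The ground state at critical density Q = 1/(p+1) is (p+1)-fold degenerate.) -/
private lemma energy_eq_zero_iff (L p : ℕ) [NeZero L] (U : ℕ → ℝ)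
    (hU : ∀ m : ℕ, 1 ≤ m → m ≤ p → 0 < U m) (S : Finset (ZMod L)) :
    energy L p U S = 0 ↔ ∀ s ∈ S, ∀ m : ℕ, 1 ≤ m → m ≤ p → s + (m : ZMod L) ∉ S := by
  have hnn : ∀ i ∈ Finset.range L, ∀ m ∈ Finset.Icc 1 p,
      (0:ℝ) ≤ U m * (if ((i : ℕ) : ZMod L) ∈ S then (1:ℝ) else 0) *
        (if ((i : ℕ) : ZMod L) + (m : ZMod L) ∈ S then (1:ℝ) else 0) := by
    intro i _ m hm
    rw [Finset.mem_Icc] at hm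
    have := (hU m hm.1 hm.2).le
    split_ifs <;> simp <;> linarith
  unfold energy
  rw [Finset.sum_eq_zero_iff_of_nonneg (fun i hi => Finset.sum_nonneg (hnn i hi))]
  constructor
  · intro h s hs m h1 h2 hmem
    have hiv : s.val ∈ Finset.range L := Finset.mem_range.mpr (ZMod.val_lt s)
    have h3 := (Finset.sum_eq_zero_iff_of_nonneg (hnn s.val hiv)).mp (h s.val hiv) m
      (Finset.mem_Icc.mpr ⟨h1, h2⟩)
    have hv : ((s.val : ℕ) : ZMod L) = s := ZMod.natCast_rightInverse s
    rw [hv, if_pos hs, if_pos hmem, mul_one, mul_one] at h3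
    exact absurd h3 (ne_of_gt (hU m h1 h2))
  · intro h i hi
    apply Finset.sum_eq_zero
    intro m hm
    rw [Finset.mem_Icc] at hm
    by_cases hiS : ((i : ℕ) : ZMod L) ∈ S
    · rw [if_neg (h _ hiS m hm.1 hm.2), mul_zero]
    · rw [if_neg hiS, mul_zero, zero_mul]

/-- The ground state at critical density `Q = 1/(p+1)` is `(p+1)`-fold degenerate:
with strictly positive potentials, the set of `N`-element configurations of zero
energy is exactly the set of translates `S₀ + r`, `r = 0, …, p`, of the equally
spaced configuration `S₀ = {j(p+1) : 0 ≤ j < N}`, and has cardinality `p + 1`. -/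
theorem critical_density_degeneracy (p N L : ℕ) (hp : 1 ≤ p) (hN : 1 ≤ N)
    (hL : L = N * (p + 1)) (U : ℕ → ℝ) (hU : ∀ m : ℕ, 1 ≤ m → m ≤ p → 0 < U m) :
    {S : Finset (ZMod L) | S.card = N ∧ energy L p U S = 0} =
      (fun r : ℕ =>
          ((Finset.range N).image fun j => ((j * (p + 1) : ℕ) : ZMod L)).image
            fun s => s + (r : ZMod L)) '' ↑(Finset.range (p + 1)) ∧
    {S : Finset (ZMod L) | S.card = N ∧ energy L p U S = 0}.ncard = p + 1 := by
  haveI : NeZero L := ⟨hL ▸ Nat.mul_ne_zero (by omega) (p.succ_ne_zero)⟩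
  set S₀ : Finset (ZMod L) := (Finset.range N).image fun j => ((j * (p + 1) : ℕ) : ZMod L)
    with hS₀
  have hpL : p + 1 ≤ L := by
    rw [hL]
    calc p + 1 = 1 * (p + 1) := (one_mul _).symm
      _ ≤ N * (p + 1) := Nat.mul_le_mul_right _ hN
  have castinj : ∀ a b : ℕ, a < L → b < L → (a : ZMod L) = (b : ZMod L) → a = b := by
    intro a b ha hb h
    rw [← ZMod.val_cast_of_lt ha, ← ZMod.val_cast_of_lt hb, h]
  have hS₀mem : ∀ x : ZMod L, x ∈ S₀ ↔ ∃ j, j < N ∧ ((j * (p + 1) : ℕ) : ZMod L) = x := by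
    intro x
    rw [hS₀, Finset.mem_image]
    simp only [Finset.mem_range]
  have hS₀card : S₀.card = N := by
    rw [hS₀, Finset.card_image_of_injOn, Finset.card_range]
    intro j hj j' hj' h
    simp only [Finset.coe_range, Set.mem_Iio] at hj hj'
    refine Nat.eq_of_mul_eq_mul_right (Nat.succ_pos p) (castinj _ _ ?_ ?_ h)
    · rw [hL]; exact mul_lt_mul_of_pos_right hj (Nat.succ_pos p)
    · rw [hL]; exact mul_lt_mul_of_pos_right hj' (Nat.succ_pos p)
  -- backward direction: every translate is a zero-energy ground state
  have hback : ∀ r : ℕ, (S₀.image fun s => s + (r : ZMod L)).card = N ∧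
      energy L p U (S₀.image fun s => s + (r : ZMod L)) = 0 := by
    intro r
    constructor
    · rw [Finset.card_image_of_injective _ (add_left_injective _), hS₀card]
    · rw [energy_eq_zero_iff L p U hU]
      rintro s hsmem m h1 h2 hcontra
      obtain ⟨x, hx, rfl⟩ := Finset.mem_image.mp hsmem
      obtain ⟨j, hj, rfl⟩ := (hS₀mem x).mp hx
      obtain ⟨y, hy, heq⟩ := Finset.mem_image.mp hcontra
      obtain ⟨j', hj', rfl⟩ := (hS₀mem y).mp hy
      have h3 : ((j' * (p + 1) : ℕ) : ZMod L) = ((j * (p + 1) + m : ℕ) : ZMod L) := by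
        push_cast at heq ⊢
        linear_combination heq
      have hmod2 : (j' * (p + 1)) % (p + 1) = (j * (p + 1) + m) % (p + 1) :=
        Nat.ModEq.of_dvd ⟨N, by rw [hL]; ring⟩ ((ZMod.natCast_eq_natCast_iff _ _ _).mp h3)
      rw [Nat.mul_mod_left, Nat.add_comm, Nat.add_mul_mod_self_right,
        Nat.mod_eq_of_lt (show m < p + 1 by omega)] at hmod2
      omega
  -- forward direction
  have hfwd : ∀ S : Finset (ZMod L), S.card = N → energy L p U S = 0 →
      ∃ r : ℕ, r < p + 1 ∧ S = S₀.image fun s => s + (r : ZMod L) := by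
    intro S hScard hSE
    have hP := (energy_eq_zero_iff L p U hU S).mp hSE
    have pairstep : ∀ s ∈ S, ∀ t ∈ S, ∀ a b : ℕ, a ≤ b → b ≤ p →
        s + (a : ZMod L) = t + (b : ZMod L) → s = t := by
      intro s hs t ht a b hab hbp heq
      have hb : (b : ZMod L) = ((b - a : ℕ) : ZMod L) + (a : ZMod L) := by
        rw [← Nat.cast_add]; congr 1; omega
      rw [hb, ← add_assoc] at heq
      have h2 : s = t + ((b - a : ℕ) : ZMod L) := add_right_cancel heq
      rcases Nat.eq_zero_or_pos (b - a) with h0 | h0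
      · rw [h0] at h2; simpa using h2
      · exact absurd (h2 ▸ hs) (hP t ht (b - a) (by omega) (by omega))
    have hinj : Set.InjOn (fun x : ZMod L × ℕ => x.1 + (x.2 : ZMod L))
        ↑(S ×ˢ Finset.range (p + 1)) := by
      intro x hx y hy hxy
      simp only [Finset.coe_product, Set.mem_prod, Finset.mem_coe, Finset.coe_range,
        Set.mem_Iio] at hx hy
      have haux : ∀ u v : ZMod L × ℕ, u.1 ∈ S → v.1 ∈ S → u.2 < p + 1 → v.2 < p + 1 →
          u.2 ≤ v.2 → u.1 + (u.2 : ZMod L) = v.1 + (v.2 : ZMod L) → u = v := by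
        intro u v hu hv hu2 hv2 hle he
        have h1 : u.1 = v.1 := pairstep _ hu _ hv _ _ hle (by omega) he
        have h2 : (u.2 : ZMod L) = (v.2 : ZMod L) := by
          rw [h1] at he; exact add_left_cancel he
        have h3 : u.2 = v.2 := castinj _ _ (by omega) (by omega) h2
        exact Prod.ext h1 h3
      rcases le_total x.2 y.2 with h | h
      · exact haux x y hx.1 hy.1 hx.2 hy.2 h hxy
      · exact (haux y x hy.1 hx.1 hy.2 hx.2 h hxy.symm).symm
    have himg : (S ×ˢ Finset.range (p + 1)).image
        (fun x : ZMod L × ℕ => x.1 + (x.2 : ZMod L)) = Finset.univ := by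
      apply Finset.eq_univ_of_card
      rw [Finset.card_image_of_injOn hinj, Finset.card_product, Finset.card_range, hScard,
        ZMod.card]
      exact hL.symm
    have hstep : ∀ s ∈ S, s + ((p + 1 : ℕ) : ZMod L) ∈ S := by
      intro s hs
      have hmem : s + ((p + 1 : ℕ) : ZMod L) ∈ (S ×ˢ Finset.range (p + 1)).image
          (fun x : ZMod L × ℕ => x.1 + (x.2 : ZMod L)) := by
        rw [himg]; exact Finset.mem_univ _
      obtain ⟨⟨t, k⟩, htk, heq⟩ := Finset.mem_image.mp hmem
      rw [Finset.mem_product, Finset.mem_range] at htk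
      rcases Nat.eq_zero_or_pos k with hk | hk
      · subst hk
        simp only [Nat.cast_zero, add_zero] at heq
        rw [← heq]; exact htk.1
      · exfalso
        have hb : ((p + 1 : ℕ) : ZMod L) = ((p + 1 - k : ℕ) : ZMod L) + (k : ZMod L) := by
          rw [← Nat.cast_add]; congr 1; omega
        rw [hb, ← add_assoc] at heq
        have h2 : t = s + ((p + 1 - k : ℕ) : ZMod L) := add_right_cancel heq
        exact hP s hs (p + 1 - k) (by omega) (by omega) (h2 ▸ htk.1)
    have hmulti : ∀ j : ℕ, ∀ s ∈ S, s + ((j * (p + 1) : ℕ) : ZMod L) ∈ S := by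
      intro j
      induction j with
      | zero => intro s hs; simpa using hs
      | succ j ih =>
        intro s hs
        have h1 := hstep _ (ih s hs)
        have h2 : ((j + 1) * (p + 1) : ℕ) = j * (p + 1) + (p + 1) := by ring
        rw [h2, Nat.cast_add, ← add_assoc]
        exact h1
    obtain ⟨s₀, hs₀⟩ : S.Nonempty := Finset.card_pos.mp (by omega)
    have hsub : (S₀.image fun s => s + s₀) ⊆ S := by
      intro x hx
      obtain ⟨y, hy, rfl⟩ := Finset.mem_image.mp hx
      obtain ⟨j, hj, rfl⟩ := (hS₀mem y).mp hy
      rw [add_comm]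
      exact hmulti j s₀ hs₀
    have hScard2 : (S₀.image fun s => s + s₀).card = N := by
      rw [Finset.card_image_of_injective _ (add_left_injective _), hS₀card]
    have hSeq : S = S₀.image fun s => s + s₀ :=
      (Finset.eq_of_subset_of_card_le hsub (by omega)).symm
    -- shift invariance of S₀
    have hS0inv : (S₀.image fun x => x + ((p + 1 : ℕ) : ZMod L)) = S₀ := by
      apply Finset.eq_of_subset_of_card_le
      · intro x hx
        obtain ⟨y, hy, rfl⟩ := Finset.mem_image.mp hx
        obtain ⟨j, hj, rfl⟩ := (hS₀mem y).mp hy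
        rcases Nat.lt_or_ge (j + 1) N with h | h
        · exact (hS₀mem _).mpr ⟨j + 1, h, by push_cast; ring⟩
        · have hj1 : j + 1 = N := by omega
          refine (hS₀mem _).mpr ⟨0, by omega, ?_⟩
          have hzero : ((j * (p + 1) + (p + 1) : ℕ) : ZMod L) = 0 := by
            have hh : j * (p + 1) + (p + 1) = (j + 1) * (p + 1) := by ring
            rw [hh, hj1, ← hL, ZMod.natCast_self]
          push_cast at hzero ⊢
          linear_combination -hzero
      · exact le_of_eq (Finset.card_image_of_injective _ (add_left_injective _)).symm
    have hshift : ∀ a b : ℕ, (S₀.image fun x => x + (((p + 1) * a + b : ℕ) : ZMod L))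
        = S₀.image fun x => x + ((b : ℕ) : ZMod L) := by
      intro a
      induction a with
      | zero => intro b; simp
      | succ a ih =>
        intro b
        have h2 : ((p + 1) * (a + 1) + b : ℕ) = ((p + 1) * a + b) + (p + 1) := by ring
        have h3 : (S₀.image fun x => x + ((((p + 1) * a + b) + (p + 1) : ℕ) : ZMod L))
            = (S₀.image fun x => x + ((p + 1 : ℕ) : ZMod L)).image
                fun x => x + (((p + 1) * a + b : ℕ) : ZMod L) := by
          conv_rhs => rw [Finset.image_image]
          apply Finset.image_congr
          intro x _
          simp only [Function.comp]
          push_cast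
          ring
        rw [h2, h3, hS0inv, ih]
    refine ⟨s₀.val % (p + 1), Nat.mod_lt _ (by omega), ?_⟩
    have hv : ((s₀.val : ℕ) : ZMod L) = s₀ := ZMod.natCast_rightInverse s₀
    have hdm := Nat.div_add_mod s₀.val (p + 1)
    have hrepl : (S₀.image fun s => s + s₀) = S₀.image fun s =>
        s + (((p + 1) * (s₀.val / (p + 1)) + s₀.val % (p + 1) : ℕ) : ZMod L) := by
      rw [show ((p + 1) * (s₀.val / (p + 1)) + s₀.val % (p + 1) : ℕ) = s₀.val from hdm, hv]
    rw [hSeq, hrepl, hshift]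
  -- injectivity of the translate map on range (p+1)
  have hginj : Set.InjOn (fun r : ℕ => S₀.image fun s => s + (r : ZMod L))
      ↑(Finset.range (p + 1)) := by
    intro r hr r' hr' hgg
    simp only [Finset.coe_range, Set.mem_Iio] at hr hr'
    have h0 : ((0 * (p + 1) : ℕ) : ZMod L) ∈ S₀ := (hS₀mem _).mpr ⟨0, by omega, rfl⟩
    have hgg' : (S₀.image fun s => s + (r : ZMod L)) = S₀.image fun s => s + (r' : ZMod L) := hgg
    have hmem : ((0 * (p + 1) : ℕ) : ZMod L) + (r : ZMod L) ∈
        S₀.image fun s => s + (r' : ZMod L) := by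
      rw [← hgg']; exact Finset.mem_image_of_mem _ h0
    obtain ⟨y, hy, heq⟩ := Finset.mem_image.mp hmem
    obtain ⟨j, hj, rfl⟩ := (hS₀mem y).mp hy
    have h3 : ((j * (p + 1) + r' : ℕ) : ZMod L) = ((r : ℕ) : ZMod L) := by
      push_cast at heq ⊢
      linear_combination heq
    have hmod2 : (j * (p + 1) + r') % (p + 1) = r % (p + 1) :=
      Nat.ModEq.of_dvd ⟨N, by rw [hL]; ring⟩ ((ZMod.natCast_eq_natCast_iff _ _ _).mp h3)
    rw [Nat.add_comm, Nat.add_mul_mod_self_right, Nat.mod_eq_of_lt hr',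
      Nat.mod_eq_of_lt hr] at hmod2
    omega
  have hset : {S : Finset (ZMod L) | S.card = N ∧ energy L p U S = 0} =
      (fun r : ℕ => S₀.image fun s => s + (r : ZMod L)) '' ↑(Finset.range (p + 1)) := by
    ext S
    simp only [Set.mem_setOf_eq, Set.mem_image, Finset.coe_range, Set.mem_Iio]
    constructor
    · rintro ⟨h1, h2⟩
      obtain ⟨r, hr, hSr⟩ := hfwd S h1 h2
      exact ⟨r, hr, hSr.symm⟩
    · rintro ⟨r, hr, rfl⟩
      exact hback r
  refine ⟨hset, ?_⟩
  rw [hset, Set.ncard_image_of_injOn hginj, Set.ncard_coe_finset, Finset.card_range]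
end

section
/- Let p ≥ 1, let n be an integer with 1 ≤ n ≤ p, let k ≥ 1, and set L = k·n·p. Define the configuration S ⊆ ZMod L whose unit cell of length n·p consists of one block •○^{p−n} followed by (n−1) blocks •○^{p}; explicitly, S = {c·n·p : 0 ≤ c < k} ∪ {c·n·p + (p−n+1) + i·(p+1) : 0 ≤ c < k, 0 ≤ i ≤ n−2}. Then |S| = k·n and E(S) = k·U_{p−n+1}; in particular the energy per particle is E(S)/|S| = U_{p−n+1}/n. (This is the energy E_n = N·U_{p−n+1}/n of the n-th constructed charge-density-wave phase at critical density Q = 1/p.) -/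


def patt (q p n : ℕ) : Finset ℕ :=
  insert 0 ((Finset.range (n-1)).image fun i => q + i * (p + 1))

lemma patt_lt {q p n : ℕ} (hp : 1 ≤ p) (hn : 1 ≤ n) (hq : p + 1 = n + q)
    {j : ℕ} (hj : j ∈ patt q p n) : j < n * p := by
  have hnp : 1 ≤ n * p := Nat.one_le_iff_ne_zero.mpr (by positivity)
  simp only [patt, Finset.mem_insert, Finset.mem_image, Finset.mem_range] at hj
  rcases hj with rfl | ⟨i, hi, rfl⟩
  · omega
  · -- i < n - 1
    obtain ⟨e, he⟩ : ∃ e, n = i + 2 + e := ⟨n - i - 2, by omega⟩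
    subst he
    have hpv : p = i + 1 + e + q := by omega
    subst hpv
    nlinarith [Nat.zero_le (i*e), Nat.zero_le (i*q), Nat.zero_le (e*q)]

lemma patt_card {q p n : ℕ} (hn : 1 ≤ n) (hq1 : 1 ≤ q) :
    (patt q p n).card = n := by
  rw [patt, Finset.card_insert_of_notMem, Finset.card_image_of_injective _
      (fun a b hab => by simpa [Nat.add_right_cancel_iff] using hab)]
  · simp; omega
  · simp only [Finset.mem_image, Finset.mem_range]
    rintro ⟨i, hi, h⟩
    rcases Nat.add_eq_zero.mp h with ⟨h1, -⟩
    omega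

lemma patt_pair {q p n : ℕ} (hp : 1 ≤ p) (hn : 1 ≤ n) (hq : p + 1 = n + q)
    (hq1 : 1 ≤ q) {j m : ℕ} (hj : j < n * p) (hm1 : 1 ≤ m) (hmp : m ≤ p) :
    (j ∈ patt q p n ∧ (j + m) % (n * p) ∈ patt q p n) ↔ (j = 0 ∧ m = q) := by
  constructor
  · rintro ⟨hjP, hjmP⟩
    simp only [patt, Finset.mem_insert, Finset.mem_image, Finset.mem_range] at hjP
    rcases hjP with rfl | ⟨i, hi, rfl⟩
    · -- j = 0, so (m % (n*p)) ∈ patt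
      refine ⟨rfl, ?_⟩
      rcases Nat.lt_or_ge n 2 with h2 | h2
      · -- n = 1, patt = {0}, n*p = p
        have hn1 : n = 1 := by omega
        have h0 := hjmP
        rw [hn1] at h0
        simp only [patt, Nat.sub_self, Finset.range_zero, Finset.image_empty,
          Finset.mem_insert, Finset.notMem_empty, or_false, Nat.zero_add,
          Nat.one_mul] at h0
        obtain ⟨t, rfl⟩ : p ∣ m := Nat.dvd_of_mod_eq_zero h0
        have ht : t ≤ 1 := Nat.le_of_mul_le_mul_left (by simpa using hmp) (by omega)
        have ht1 : 1 ≤ t := Nat.pos_of_ne_zero (by rintro rfl; simp at hm1)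
        have ht2 : t = 1 := by omega
        subst ht2
        omega
      · -- n ≥ 2
        have hpnp : p < n * p := by nlinarith
        have hmod : (0 + m) % (n * p) = m := by
          rw [Nat.zero_add, Nat.mod_eq_of_lt (by omega)]
        rw [hmod] at hjmP
        simp only [patt, Finset.mem_insert, Finset.mem_image, Finset.mem_range] at hjmP
        rcases hjmP with rfl | ⟨i, hi, rfl⟩
        · omega
        · rcases Nat.eq_zero_or_pos i with rfl | hi1
          · simp
          · nlinarith
    · -- j = q + i*(p+1), i < n-1, so n ≥ 2
      exfalso
      have h2 : 2 ≤ n := by omega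
      -- j + m < n*p
      have hbound : q + i * (p + 1) + m < n * p := by
        obtain ⟨e, he⟩ : ∃ e, n = i + 2 + e := ⟨n - i - 2, by omega⟩
        subst he
        have hpv : p = i + 1 + e + q := by omega
        subst hpv
        nlinarith [Nat.zero_le (i*e), Nat.zero_le (i*q), Nat.zero_le (e*q)]
      rw [Nat.mod_eq_of_lt hbound] at hjmP
      simp only [patt, Finset.mem_insert, Finset.mem_image, Finset.mem_range] at hjmP
      rcases hjmP with h | ⟨i', hi', h⟩
      · omega
      · -- q + i*(p+1) + m = q + i'*(p+1)
        have h' : i * (p+1) + m = i' * (p+1) := by omega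
        rcases Nat.lt_or_ge i' (i+1) with hlt | hge
        · have : i' * (p+1) ≤ i * (p+1) := Nat.mul_le_mul_right _ (by omega)
          omega
        · have : (i+1) * (p+1) ≤ i' * (p+1) := Nat.mul_le_mul_right _ hge
          rw [add_mul, one_mul] at this
          omega
  · rintro ⟨rfl, hm⟩
    refine ⟨by simp [patt], ?_⟩
    rw [hm]
    rcases Nat.lt_or_ge n 2 with h2 | h2
    · have hn1 : n = 1 := by omega
      have hqp : q = p := by omega
      rw [hn1, hqp]
      simp [patt, Nat.mod_self]
    · have h2p : 2 * p ≤ n * p := Nat.mul_le_mul_right p h2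
      have hqnp : 0 + q < n * p := by linarith
      rw [Nat.mod_eq_of_lt hqnp, Nat.zero_add]
      simp only [patt, Finset.mem_insert, Finset.mem_image, Finset.mem_range]
      exact Or.inr ⟨0, by omega, by ring⟩

lemma sum_range_mul_periodic {M : Type*} [AddCommMonoid M] (f : ℕ → M) (N : ℕ)
    (hf : ∀ a, f (a + N) = f a) (k : ℕ) :
    ∑ i ∈ Finset.range (k * N), f i = k • ∑ j ∈ Finset.range N, f j := by
  induction k with
  | zero => simp
  | succ k ih =>
    have hmul : (k + 1) * N = k * N + N := by ring
    rw [hmul, Finset.sum_range_add, ih, succ_nsmul]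
    congr 1
    refine Finset.sum_congr rfl fun j _ => ?_
    have : ∀ c, f (j + c * N) = f j := by
      intro c
      induction c with
      | zero => simp
      | succ c ihc => rw [add_mul, one_mul, ← add_assoc, hf, ihc]
    rw [show k * N + j = j + k * N by ring, this k]

/-- The `n`-th constructed charge-density-wave phase at critical density `Q = 1/p`:
on `L = k·n·p` sites, the configuration whose unit cell of length `n·p` consists of
one block `•○^{p−n}` followed by `n−1` blocks `•○^{p}`, i.e.
`S = {c·n·p} ∪ {c·n·p + (p−n+1) + i·(p+1)}` for `0 ≤ c < k`, `0 ≤ i ≤ n−2`,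
has `k·n` particles and energy `E(S) = k·U_{p−n+1}`, hence energy per particle
`U_{p−n+1}/n`. -/
theorem cdw_phase_energy (p n k L : ℕ) (hp : 1 ≤ p) (hn : 1 ≤ n) (hnp : n ≤ p)
    (hk : 1 ≤ k) (hL : L = k * n * p) (U : ℕ → ℝ) :
    let S : Finset (ZMod L) :=
      ((Finset.range k).image fun c => ((c * n * p : ℕ) : ZMod L)) ∪
        (((Finset.range k) ×ˢ (Finset.range (n - 1))).image
          fun ci => ((ci.1 * n * p + (p - n + 1) + ci.2 * (p + 1) : ℕ) : ZMod L))
    S.card = k * n ∧ energy L p U S = (k : ℝ) * U (p - n + 1) ∧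
      energy L p U S / (S.card : ℝ) = U (p - n + 1) / (n : ℝ) := by
  intro S
  obtain ⟨q, hq, hqdef⟩ : ∃ q, p + 1 = n + q ∧ p - n + 1 = q := ⟨p - n + 1, by omega, rfl⟩
  have patt_lt : ∀ {j : ℕ}, j ∈ patt q p n → j < n * p :=
    fun {j} hj => _root_.patt_lt hp hn hq hj
  have patt_card : (patt q p n).card = n := _root_.patt_card hn (by omega)
  have patt_pair : ∀ {j m : ℕ}, j < n * p → 1 ≤ m → m ≤ p →
      ((j ∈ patt q p n ∧ (j + m) % (n * p) ∈ patt q p n) ↔ (j = 0 ∧ m = q)) :=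
    fun {j m} hj hm1 hmp => _root_.patt_pair hp hn hq (by omega) hj hm1 hmp
  have sum_per : ∀ {M : Type} [AddCommMonoid M] (f : ℕ → M),
      (∀ a, f (a + n * p) = f a) →
      ∑ i ∈ Finset.range (k * (n * p)), f i = k • ∑ j ∈ Finset.range (n * p), f j :=
    fun f hf => sum_range_mul_periodic f (n * p) hf k
  have hq1 : 1 ≤ q := by omega
  have hqp : q ≤ p := by omega
  have hN0 : 0 < n * p := Nat.mul_pos hn hp
  have hLN : L = k * (n * p) := by rw [hL, Nat.mul_assoc]
  have hL0 : 0 < L := by rw [hLN]; positivity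
  haveI : NeZero L := ⟨hL0.ne'⟩
  have hSdef : S = ((Finset.range k).image fun c => ((c * n * p : ℕ) : ZMod L)) ∪
        (((Finset.range k) ×ˢ (Finset.range (n - 1))).image
          fun ci => ((ci.1 * n * p + q + ci.2 * (p + 1) : ℕ) : ZMod L)) := by
    rw [← hqdef]
  have hcast : ∀ a b : ℕ, a < L → b < L → ((a : ZMod L) = (b : ZMod L)) → a = b := by
    intro a b ha hb h
    have h2 := congrArg ZMod.val h
    rwa [ZMod.val_cast_of_lt ha, ZMod.val_cast_of_lt hb] at h2
  have hdvd : (n * p) ∣ L := ⟨k, by rw [hLN]; ring⟩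
  -- membership characterization
  have key : ∀ b : ℕ, b < L → (((b : ZMod L) ∈ S) ↔ b % (n * p) ∈ patt q p n) := by
    intro b hb
    constructor
    · intro hbS
      rw [hSdef, Finset.mem_union] at hbS
      rcases hbS with hbS | hbS
      · rw [Finset.mem_image] at hbS
        obtain ⟨c, hc, hcb⟩ := hbS
        rw [Finset.mem_range] at hc
        have hclt : c * n * p < L := by
          rw [hLN, show c * n * p = c * (n * p) by ring]
          exact Nat.mul_lt_mul_of_lt_of_le hc le_rfl hN0
        have hbe : b = c * n * p := (hcast _ _ hclt hb hcb).symm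
        rw [hbe, show c * n * p = c * (n * p) by ring, Nat.mul_mod_left]
        simp [patt]
      · rw [Finset.mem_image] at hbS
        obtain ⟨⟨c, i⟩, hci, hcb⟩ := hbS
        rw [Finset.mem_product, Finset.mem_range, Finset.mem_range] at hci
        obtain ⟨hc, hi⟩ := hci
        have hrP : q + i * (p + 1) ∈ patt q p n := by
          simp only [patt, Finset.mem_insert, Finset.mem_image, Finset.mem_range]
          exact Or.inr ⟨i, hi, rfl⟩
        have hrlt : q + i * (p + 1) < n * p := patt_lt hrP
        have helt : c * n * p + q + i * (p + 1) < L := by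
          rw [hLN, show c * n * p + q + i * (p + 1) = q + i * (p+1) + c * (n * p) by ring]
          calc q + i * (p+1) + c * (n * p) < n * p + c * (n * p) := by omega
            _ = (c + 1) * (n * p) := by ring
            _ ≤ k * (n * p) := Nat.mul_le_mul_right _ (by omega)
        have hbe : b = c * n * p + q + i * (p + 1) := (hcast _ _ helt hb hcb).symm
        rw [hbe, show c * n * p + q + i * (p + 1) = q + i * (p+1) + c * (n * p) by ring,
          Nat.add_mul_mod_self_right, Nat.mod_eq_of_lt hrlt]
        exact hrP
    · intro hbP
      have hdm := Nat.div_add_mod b (n * p)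
      have hck : b / (n * p) < k := Nat.div_lt_of_lt_mul
        (by rw [show n * p * k = k * (n * p) by ring, ← hLN]; exact hb)
      rw [hSdef, Finset.mem_union]
      simp only [patt, Finset.mem_insert, Finset.mem_image, Finset.mem_range] at hbP
      rcases hbP with h0 | ⟨i, hi, hieq⟩
      · left
        rw [Finset.mem_image]
        refine ⟨b / (n * p), Finset.mem_range.mpr hck, ?_⟩
        show (((b / (n * p)) * n * p : ℕ) : ZMod L) = (b : ZMod L)
        refine congrArg (fun t : ℕ => (t : ZMod L)) ?_
        have e1 : b / (n * p) * n * p = n * p * (b / (n * p)) := by ring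
        omega
      · right
        rw [Finset.mem_image]
        refine ⟨⟨b / (n * p), i⟩, ?_, ?_⟩
        · rw [Finset.mem_product, Finset.mem_range, Finset.mem_range]
          exact ⟨hck, hi⟩
        · show (((b / (n * p)) * n * p + q + i * (p + 1) : ℕ) : ZMod L) = (b : ZMod L)
          refine congrArg (fun t : ℕ => (t : ZMod L)) ?_
          have e1 : b / (n * p) * n * p = n * p * (b / (n * p)) := by ring
          omega
  have hMem : ∀ a : ℕ, ((a : ZMod L) ∈ S ↔ a % (n * p) ∈ patt q p n) := by
    intro a
    have h1 : ((a % L : ℕ) : ZMod L) = (a : ZMod L) := ZMod.natCast_mod a L ▸ rfl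
    rw [← h1, key (a % L) (Nat.mod_lt a hL0), Nat.mod_mod_of_dvd a hdvd]
  -- cardinality
  have hcard : S.card = k * n := by
    have h1 : (Finset.filter (fun i : ℕ => (Nat.cast i : ZMod L) ∈ S) (Finset.range L)).card
        = S.card := by
      apply Finset.card_nbij (fun a : ℕ => (Nat.cast a : ZMod L))
      · intro a ha
        exact (Finset.mem_filter.mp ha).2
      · intro a ha b hb hab
        simp only [Finset.coe_filter, Set.mem_setOf_eq, Finset.mem_range] at ha hb
        exact hcast a b ha.1 hb.1 hab
      · intro x hx
        refine ⟨x.val, ?_, ZMod.natCast_rightInverse x⟩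
        simp only [Finset.coe_filter, Set.mem_setOf_eq, Finset.mem_range]
        exact ⟨ZMod.val_lt x, by rwa [ZMod.natCast_rightInverse x]⟩
    have h2 : (Finset.filter (fun i : ℕ => (Nat.cast i : ZMod L) ∈ S) (Finset.range L)).card
        = ∑ i ∈ Finset.range L, if i % (n * p) ∈ patt q p n then 1 else 0 := by
      rw [Finset.card_filter]
      exact Finset.sum_congr rfl fun i _ => if_congr (hMem i) rfl rfl
    have h3 : ∑ i ∈ Finset.range L, (if i % (n * p) ∈ patt q p n then 1 else 0)
        = k * n := by
      rw [hLN, sum_per (fun i => if i % (n * p) ∈ patt q p n then 1 else 0)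
        (fun a => by simp only [Nat.add_mod_right])]
      have h4 : ∑ j ∈ Finset.range (n * p), (if j % (n * p) ∈ patt q p n then 1 else 0)
          = n := by
        rw [Finset.sum_congr rfl (fun j hj => if_congr
          (by rw [Nat.mod_eq_of_lt (Finset.mem_range.mp hj)]) rfl rfl)]
        rw [Finset.sum_ite_mem, Finset.inter_eq_right.mpr
          (fun j hj => Finset.mem_range.mpr (patt_lt hj)), Finset.sum_const, patt_card]
        simp
      rw [h4, smul_eq_mul]
    omega
  -- energy
  have hE : energy L p U S = (k : ℝ) * U q := by
    have hterm : ∀ i ∈ Finset.range L,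
        (∑ m ∈ Finset.Icc 1 p, U m * (if (i : ZMod L) ∈ S then (1:ℝ) else 0) *
          (if (i : ZMod L) + (m : ZMod L) ∈ S then (1:ℝ) else 0))
        = ∑ m ∈ Finset.Icc 1 p, U m * (if i % (n*p) ∈ patt q p n then (1:ℝ) else 0) *
          (if (i + m) % (n*p) ∈ patt q p n then (1:ℝ) else 0) := by
      intro i _
      refine Finset.sum_congr rfl fun m _ => ?_
      have hc : (i : ZMod L) + (m : ZMod L) = ((i + m : ℕ) : ZMod L) := by push_cast; ring
      rw [hc]
      rw [if_congr (hMem i) rfl rfl, if_congr (hMem (i+m)) rfl rfl]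
    rw [energy, Finset.sum_congr rfl hterm]
    rw [hLN, sum_per (fun i => ∑ m ∈ Finset.Icc 1 p,
        U m * (if i % (n*p) ∈ patt q p n then (1:ℝ) else 0) *
          (if (i + m) % (n*p) ∈ patt q p n then (1:ℝ) else 0))
      (fun a => by
        show (∑ m ∈ Finset.Icc 1 p,
            U m * (if (a + n*p) % (n*p) ∈ patt q p n then (1:ℝ) else 0) *
              (if (a + n*p + m) % (n*p) ∈ patt q p n then (1:ℝ) else 0)) = _
        refine Finset.sum_congr rfl fun m _ => ?_
        rw [Nat.add_mod_right, show a + n*p + m = a + m + n*p by ring, Nat.add_mod_right])]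
    have hcell : ∑ j ∈ Finset.range (n*p), ∑ m ∈ Finset.Icc 1 p,
        U m * (if j % (n*p) ∈ patt q p n then (1:ℝ) else 0) *
          (if (j + m) % (n*p) ∈ patt q p n then (1:ℝ) else 0) = U q := by
      have hrow0 : ∀ j ∈ Finset.range (n*p), j ≠ 0 →
          (∑ m ∈ Finset.Icc 1 p,
            U m * (if j % (n*p) ∈ patt q p n then (1:ℝ) else 0) *
              (if (j + m) % (n*p) ∈ patt q p n then (1:ℝ) else 0)) = 0 := by
        intro j hj hj0
        have hjlt := Finset.mem_range.mp hj
        refine Finset.sum_eq_zero fun m hm => ?_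
        obtain ⟨hm1, hmp⟩ := Finset.mem_Icc.mp hm
        rw [Nat.mod_eq_of_lt hjlt]
        by_cases h1 : j ∈ patt q p n
        · by_cases h2 : (j + m) % (n * p) ∈ patt q p n
          · exact absurd ((patt_pair hjlt hm1 hmp).mp ⟨h1, h2⟩).1 hj0
          · rw [if_neg h2]; ring
        · rw [if_neg h1]; ring
      rw [Finset.sum_eq_single_of_mem 0 (Finset.mem_range.mpr hN0) hrow0]
      have hcol0 : ∀ m ∈ Finset.Icc 1 p, m ≠ q →
          (U m * (if (0:ℕ) % (n*p) ∈ patt q p n then (1:ℝ) else 0) *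
            (if ((0:ℕ) + m) % (n*p) ∈ patt q p n then (1:ℝ) else 0)) = 0 := by
        intro m hm hmq
        obtain ⟨hm1, hmp⟩ := Finset.mem_Icc.mp hm
        rw [Nat.zero_mod]
        by_cases h1 : (0:ℕ) ∈ patt q p n
        · by_cases h2 : ((0:ℕ) + m) % (n * p) ∈ patt q p n
          · exact absurd ((patt_pair hN0 hm1 hmp).mp ⟨h1, h2⟩).2 hmq
          · rw [if_neg h2]; ring
        · rw [if_neg h1]; ring
      rw [Finset.sum_eq_single_of_mem q (Finset.mem_Icc.mpr ⟨hq1, hqp⟩) hcol0]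
      have hpp := (patt_pair hN0 hq1 hqp).mpr ⟨rfl, rfl⟩
      rw [Nat.zero_mod, if_pos hpp.1, if_pos hpp.2]
      ring
    rw [hcell, nsmul_eq_mul]
  refine ⟨hcard, ?_, ?_⟩
  · rw [hqdef, hE]
  · rw [hqdef, hE, hcard]
    have hk0 : (k : ℝ) ≠ 0 := Nat.cast_ne_zero.mpr (by omega)
    push_cast
    rw [mul_div_mul_left _ _ hk0]
end

section
/- Let p ≥ 2, suppose U_m > 0 for all 1 ≤ m ≤ p, let α be an integer with 1 ≤ α ≤ p, and suppose the dominance condition holds: for every integer β with 1 ≤ β ≤ p and β ≠ α, U_α < ((p − α + 1)/(p − β + 1)) · U_β. Let N be a positive integer divisible by p − α + 1 and let L = p·N. Then the minimum of E(S) over all N-element subsets S ⊆ ZMod L equals N · U_α / (p − α + 1). (This is the paper's result that at critical density Q = 1/p, the phase with energy E_(α) = N·U_α/(p−α+1) is dominant under the stated condition on the potentials.) -/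
open Finset


namespace DPE

/-- Offsets of occupied sites within one super-block of length `p*(p-α+1)`. -/
def offs (p α : ℕ) : Finset ℕ :=
  insert 0 ((Finset.range (p - α)).image (fun j => α + j * (p + 1)))

lemma mem_offs_iff {p α o : ℕ} :
    o ∈ offs p α ↔ o = 0 ∨ ∃ j < p - α, o = α + j * (p + 1) := by
  simp [offs, eq_comm]

lemma offs_card {p α : ℕ} (hα1 : 1 ≤ α) : (offs p α).card = p - α + 1 := by
  rw [offs, card_insert_of_notMem, card_image_of_injective, card_range]
  · intro a b h
    simp only at h
    exact Nat.eq_of_mul_eq_mul_right (show 0 < p + 1 by omega) (by omega)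
  · simp only [mem_image, mem_range]
    rintro ⟨j, -, h⟩
    omega

lemma offs_le {p α o : ℕ} (hα1 : 1 ≤ α) (hαp : α ≤ p) (hne : o ≠ 0)
    (ho : o ∈ offs p α) : o + p + 1 ≤ p * (p - α + 1) := by
  rw [mem_offs_iff] at ho
  rcases ho with rfl | ⟨j, hj, rfl⟩
  · omega
  · obtain ⟨r, rfl⟩ : ∃ r, p = α + r := ⟨p - α, by omega⟩
    have h1 : α + r - α = r := by omega
    rw [h1] at hj ⊢
    obtain ⟨s, rfl⟩ : ∃ s, r = j + s + 1 := ⟨r - j - 1, by omega⟩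
    nlinarith [Nat.zero_le (α * s), Nat.zero_le (j * s)]

lemma offs_lt {p α o : ℕ} (hα1 : 1 ≤ α) (hαp : α ≤ p)
    (ho : o ∈ offs p α) : o < p * (p - α + 1) := by
  rcases eq_or_ne o 0 with rfl | hne
  · have : 0 < p := by omega
    have : 0 < p - α + 1 := by omega
    positivity
  · have := offs_le hα1 hαp hne ho
    omega

end DPE

namespace DPE
open Finset

lemma key_offs {p α m o : ℕ} (hα1 : 1 ≤ α) (hαp : α ≤ p)
    (hm1 : 1 ≤ m) (hmp : m ≤ p) (ho : o ∈ offs p α) :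
    ((o + m) % (p * (p - α + 1)) ∈ offs p α) ↔ (m = α ∧ o = 0) := by
  rw [mem_offs_iff] at ho
  rcases ho with rfl | ⟨j, hj, rfl⟩
  · -- o = 0
    rw [Nat.zero_add]
    rcases eq_or_lt_of_le hαp with rfl | hlt
    · -- α = p, P = p
      have hP : α * (α - α + 1) = α := by rw [Nat.sub_self]; ring
      rw [hP]
      rcases eq_or_lt_of_le hmp with rfl | hmlt
      · simp [mem_offs_iff, Nat.mod_self]
      · rw [Nat.mod_eq_of_lt hmlt, mem_offs_iff]
        constructor
        · rintro (rfl | ⟨j, hj, rfl⟩) <;> omega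
        · rintro ⟨rfl, -⟩; omega
    · -- α < p
      have hP : m < p * (p - α + 1) := by
        have h2 : 2 ≤ p - α + 1 := by omega
        have := Nat.mul_le_mul_left p h2
        omega
      rw [Nat.mod_eq_of_lt hP, mem_offs_iff]
      constructor
      · rintro (rfl | ⟨j, hj, rfl⟩)
        · omega
        · rcases j with _ | j
          · simp
          · have : (j + 1) * (p + 1) = j * (p + 1) + (p + 1) := by ring
            omega
      · rintro ⟨rfl, -⟩
        exact Or.inr ⟨0, by omega, by omega⟩
  · -- o = α + j*(p+1)
    have hne : α + j * (p + 1) ≠ 0 := by omega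
    have hle := offs_le hα1 hαp hne (mem_offs_iff.2 (Or.inr ⟨j, hj, rfl⟩))
    rw [Nat.mod_eq_of_lt (by omega), mem_offs_iff]
    constructor
    · rintro (h | ⟨j', hj', h⟩)
      · omega
      · -- j*(p+1) + m = j'*(p+1), 1 ≤ m ≤ p : contradiction
        exfalso
        rcases le_or_gt j' j with hle' | hlt'
        · have := Nat.mul_le_mul_right (p + 1) hle'
          omega
        · have h2 : j + 1 ≤ j' := hlt'
          have := Nat.mul_le_mul_right (p + 1) h2
          have h3 : (j + 1) * (p + 1) = j * (p + 1) + (p + 1) := by ring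
          omega
    · rintro ⟨-, h⟩; omega

end DPE

namespace DPE
open Finset

lemma mod_add (i m P : ℕ) : (i + m) % P = (i % P + m) % P := by
  conv_lhs => rw [← Nat.mod_add_div' i P, Nat.add_assoc, Nat.add_comm (i / P * P) m,
    ← Nat.add_assoc, Nat.add_mul_mod_self_right]

lemma key_offs' {p α m o : ℕ} (hα1 : 1 ≤ α) (hαp : α ≤ p)
    (hm1 : 1 ≤ m) (hmp : m ≤ p) :
    (o ∈ offs p α ∧ (o + m) % (p * (p - α + 1)) ∈ offs p α) ↔ (m = α ∧ o = 0) := by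
  constructor
  · rintro ⟨ho, hb⟩
    exact (key_offs hα1 hαp hm1 hmp ho).1 hb
  · rintro ⟨rfl, rfl⟩
    have h0 : (0 : ℕ) ∈ offs p m := mem_offs_iff.2 (Or.inl rfl)
    exact ⟨h0, (key_offs hα1 hαp hm1 hmp h0).2 ⟨rfl, rfl⟩⟩

/-- The ground state configuration. -/
def gsSet (p α K L : ℕ) : Finset (ZMod L) :=
  ((Finset.range K) ×ˢ offs p α).image
    (fun z => ((z.1 * (p * (p - α + 1)) + z.2 : ℕ) : ZMod L))

lemma pair_lt {p α K k o : ℕ} (hα1 : 1 ≤ α) (hαp : α ≤ p) (hk : k < K)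
    (ho : o ∈ offs p α) : k * (p * (p - α + 1)) + o < p * (p - α + 1) * K := by
  set P := p * (p - α + 1) with hP
  have h1 : o < P := offs_lt hα1 hαp ho
  have h2 : (k + 1) * P ≤ K * P := Nat.mul_le_mul_right P hk
  have h3 : (k + 1) * P = k * P + P := by ring
  have h4 : P * K = K * P := by ring
  omega

lemma gs_mem {p α K L : ℕ} (hα1 : 1 ≤ α) (hαp : α ≤ p)
    (hL : L = p * (p - α + 1) * K) {i : ℕ} (hi : i < L) :
    ((i : ZMod L) ∈ gsSet p α K L) ↔ i % (p * (p - α + 1)) ∈ offs p α := by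
  haveI : NeZero L := ⟨by omega⟩
  set P := p * (p - α + 1) with hP
  constructor
  · rw [gsSet, mem_image]
    rintro ⟨⟨k, o⟩, hz, hcast⟩
    rw [mem_product, mem_range] at hz
    have hlt : k * P + o < L := by rw [hL]; exact pair_lt hα1 hαp hz.1 hz.2
    have := congrArg ZMod.val hcast
    rw [ZMod.val_cast_of_lt hlt, ZMod.val_cast_of_lt hi] at this
    rw [← this, Nat.mul_comm k P, Nat.mul_add_mod, Nat.mod_eq_of_lt (offs_lt hα1 hαp hz.2)]
    exact hz.2
  · intro ho
    rw [gsSet, mem_image]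
    refine ⟨(i / P, i % P), ?_, ?_⟩
    · rw [mem_product, mem_range]
      have hPpos : 0 < P := by
        have h1 : 0 < p := by omega
        have h2 : 0 < p - α + 1 := by omega
        exact Nat.mul_pos h1 h2
      refine ⟨?_, ho⟩
      simp only
      rw [Nat.div_lt_iff_lt_mul hPpos, Nat.mul_comm K P]
      omega
    · have hnat : (i / P, i % P).1 * (p * (p - α + 1)) + (i / P, i % P).2 = i := by
        simp only [← hP]
        have := Nat.mod_add_div' i P
        omega
      rw [hnat]

lemma gs_card {p α K L : ℕ} (hα1 : 1 ≤ α) (hαp : α ≤ p)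
    (hL : L = p * (p - α + 1) * K) (hK : 0 < K) :
    (gsSet p α K L).card = K * (p - α + 1) := by
  have hLpos : 0 < L := by
    rw [hL]
    have h1 : 0 < p := by omega
    have h2 : 0 < p - α + 1 := by omega
    exact Nat.mul_pos (Nat.mul_pos h1 h2) hK
  haveI : NeZero L := ⟨by omega⟩
  set P := p * (p - α + 1) with hP
  rw [gsSet, card_image_of_injOn, card_product, card_range, offs_card hα1]
  rintro ⟨k, o⟩ hz ⟨k', o'⟩ hz' heq
  rw [mem_coe, mem_product, mem_range] at hz hz'
  simp only at heq
  have h1 : k * P + o < L := by rw [hL]; exact pair_lt hα1 hαp hz.1 hz.2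
  have h2 : k' * P + o' < L := by rw [hL]; exact pair_lt hα1 hαp hz'.1 hz'.2
  have := congrArg ZMod.val heq
  rw [ZMod.val_cast_of_lt h1, ZMod.val_cast_of_lt h2] at this
  have ho : o < P := offs_lt hα1 hαp hz.2
  have ho' : o' < P := offs_lt hα1 hαp hz'.2
  have hoo : o = o' := by
    have e1 : (k * P + o) % P = o := by rw [Nat.mul_comm, Nat.mul_add_mod, Nat.mod_eq_of_lt ho]
    have e2 : (k' * P + o') % P = o' := by rw [Nat.mul_comm, Nat.mul_add_mod, Nat.mod_eq_of_lt ho']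
    rw [← e1, ← e2, this]
  have hkk : k = k' := by
    have hPpos : 0 < P := by omega
    exact Nat.eq_of_mul_eq_mul_right hPpos (by omega)
  simp [hkk, hoo]

lemma count_multiples (P K : ℕ) (hP : 0 < P) :
    ((Finset.range (P * K)).filter (fun i => i % P = 0)).card = K := by
  have himg : (Finset.range (P * K)).filter (fun i => i % P = 0)
      = (Finset.range K).image (fun k => k * P) := by
    ext i
    simp only [mem_filter, mem_range, mem_image]
    constructor
    · rintro ⟨hi, hmod⟩
      refine ⟨i / P, ?_, ?_⟩
      · rw [Nat.div_lt_iff_lt_mul hP, Nat.mul_comm K P]; exact hi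
      · have := Nat.mod_add_div' i P
        omega
    · rintro ⟨k, hk, rfl⟩
      constructor
      · have h2 : (k + 1) * P ≤ K * P := Nat.mul_le_mul_right P hk
        have h3 : (k + 1) * P = k * P + P := by ring
        have h4 : P * K = K * P := by ring
        omega
      · simp [Nat.mul_mod_left]
  rw [himg, card_image_of_injective, card_range]
  intro a b h
  exact Nat.eq_of_mul_eq_mul_right hP h

lemma ite_mul_ite (A B : Prop) [Decidable A] [Decidable B] (u : ℝ) :
    u * (if A then (1:ℝ) else 0) * (if B then (1:ℝ) else 0)
      = if A ∧ B then u else 0 := by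
  split_ifs with h1 h2 h3 <;> simp_all

lemma gs_energy {p α K L : ℕ} (hα1 : 1 ≤ α) (hαp : α ≤ p) (hK : 0 < K)
    (hL : L = p * (p - α + 1) * K) (U : ℕ → ℝ) :
    energy L p U (gsSet p α K L) = (K : ℝ) * U α := by
  have hLpos : 0 < L := by
    rw [hL]
    have h1 : 0 < p := by omega
    have h2 : 0 < p - α + 1 := by omega
    exact Nat.mul_pos (Nat.mul_pos h1 h2) hK
  set P := p * (p - α + 1) with hP
  have hdvd : P ∣ L := ⟨K, hL⟩
  rw [energy]
  have hstep : ∀ i ∈ Finset.range L, ∀ m ∈ Finset.Icc 1 p,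
      U m * (if (i : ZMod L) ∈ gsSet p α K L then (1:ℝ) else 0) *
        (if (i : ZMod L) + (m : ZMod L) ∈ gsSet p α K L then (1:ℝ) else 0)
      = if (m = α ∧ i % P = 0) then U m else 0 := by
    intro i hi m hm
    rw [mem_range] at hi
    rw [mem_Icc] at hm
    have h1 : ((i : ZMod L) ∈ gsSet p α K L) ↔ i % P ∈ offs p α := gs_mem hα1 hαp hL hi
    have h2 : ((i : ZMod L) + (m : ZMod L) ∈ gsSet p α K L)
        ↔ (i % P + m) % P ∈ offs p α := by
      have hc : (i : ZMod L) + (m : ZMod L) = (((i + m) % L : ℕ) : ZMod L) := by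
        rw [ZMod.natCast_mod, Nat.cast_add]
      rw [hc, gs_mem hα1 hαp hL (Nat.mod_lt _ hLpos),
        Nat.mod_mod_of_dvd _ hdvd, mod_add]
    rw [ite_mul_ite]
    have h3 : (i % P ∈ offs p α ∧ (i % P + m) % P ∈ offs p α) ↔ (m = α ∧ i % P = 0) :=
      key_offs' hα1 hαp hm.1 hm.2
    simp only [h1, h2, h3]
  rw [Finset.sum_congr rfl (fun i hi => Finset.sum_congr rfl (fun m hm => hstep i hi m hm))]
  have hinner : ∀ i : ℕ, (∑ m ∈ Finset.Icc 1 p, if (m = α ∧ i % P = 0) then U m else 0)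
      = if i % P = 0 then U α else 0 := by
    intro i
    by_cases h : i % P = 0
    · rw [if_pos h]
      have hc : ∀ m : ℕ, (m = α ∧ i % P = 0) = (m = α) := by intro m; simp [h]
      simp only [hc]
      rw [Finset.sum_ite_eq' (Finset.Icc 1 p) α U, if_pos (by rw [mem_Icc]; exact ⟨hα1, hαp⟩)]
    · simp [h]
  rw [Finset.sum_congr rfl (fun i _ => hinner i)]
  rw [Finset.sum_ite, Finset.sum_const, Finset.sum_const_zero, add_zero]
  have hPpos : 0 < P := by
    have h1 : 0 < p := by omega
    have h2 : 0 < p - α + 1 := by omega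
    exact Nat.mul_pos h1 h2
  rw [hL, count_multiples P K hPpos, nsmul_eq_mul]

end DPE

namespace DPE
open Finset

lemma sum_range_zmod {L : ℕ} [NeZero L] (f : ZMod L → ℝ) :
    ∑ i ∈ Finset.range L, f (i : ZMod L) = ∑ x : ZMod L, f x := by
  refine Finset.sum_nbij' (fun i => (i : ZMod L)) (fun x => x.val) ?_ ?_ ?_ ?_ ?_
  · intro a _; exact mem_univ _
  · intro x _; rw [mem_range]; exact ZMod.val_lt x
  · intro a ha; rw [mem_range] at ha; exact ZMod.val_cast_of_lt ha
  · intro x _; exact ZMod.natCast_rightInverse x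
  · intro a _; rfl

lemma shift_sum {L : ℕ} [NeZero L] (d : ZMod L) (f : ZMod L → ℝ) :
    ∑ x : ZMod L, f (x + d) = ∑ x : ZMod L, f x :=
  Fintype.sum_equiv (Equiv.addRight d) _ _ (fun _ => rfl)

/-- pairs `(a,b)` with `0 ≤ a < b ≤ p` -/
def Dp (p : ℕ) : Finset (ℕ × ℕ) :=
  ((Finset.range (p+1)) ×ˢ (Finset.range (p+1))).filter (fun z => z.1 < z.2)

lemma Dp_image (p : ℕ) : (Dp p).image (fun z => z.2 - z.1) = Finset.Icc 1 p := by
  ext m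
  simp only [Dp, mem_image, mem_filter, mem_product, mem_range, mem_Icc]
  constructor
  · rintro ⟨⟨a, b⟩, ⟨⟨ha, hb⟩, hab⟩, rfl⟩
    omega
  · rintro ⟨hm1, hmp⟩
    exact ⟨(0, m), ⟨⟨by omega, by omega⟩, by omega⟩, by omega⟩

lemma Dp_fiber {p m : ℕ} (hm1 : 1 ≤ m) (hmp : m ≤ p) :
    ((Dp p).filter (fun z => z.2 - z.1 = m)).card = p + 1 - m := by
  have himg : (Dp p).filter (fun z => z.2 - z.1 = m)
      = (Finset.range (p + 1 - m)).image (fun a => (a, a + m)) := by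
    ext ⟨a, b⟩
    simp only [Dp, mem_filter, mem_product, mem_range, mem_image, filter_filter,
      Prod.mk.injEq]
    constructor
    · rintro ⟨⟨h1, h2⟩, h3, h4⟩
      exact ⟨a, by omega, by omega, by omega⟩
    · rintro ⟨x, hx, rfl, rfl⟩
      exact ⟨⟨by omega, by omega⟩, by omega, by omega⟩
  rw [himg, card_image_of_injective, card_range]
  intro a b h
  simpa using congrArg Prod.fst h

/-- off-diagonal sum identity for idempotent weights -/
lemma offdiag_sum (n : ℕ) (g : ℕ → ℝ) (hg : ∀ a, g a * g a = g a) :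
    ∑ z ∈ ((Finset.range n) ×ˢ (Finset.range n)).filter (fun z => z.1 < z.2), g z.1 * g z.2
      = ((∑ a ∈ Finset.range n, g a) ^ 2 - ∑ a ∈ Finset.range n, g a) / 2 := by
  set s := Finset.range n
  set Sq := s ×ˢ s with hSq
  set c := ∑ a ∈ s, g a with hc
  have hsq : ∑ z ∈ Sq, g z.1 * g z.2 = c ^ 2 := by
    rw [hSq, Finset.sum_product, hc, sq, Finset.sum_mul_sum]
  have hsplit1 : ∑ z ∈ Sq, g z.1 * g z.2
      = ∑ z ∈ Sq.filter (fun z => z.1 < z.2), g z.1 * g z.2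
        + ∑ z ∈ Sq.filter (fun z => ¬ z.1 < z.2), g z.1 * g z.2 :=
    (Finset.sum_filter_add_sum_filter_not Sq _ _).symm
  have hsplit2 : ∑ z ∈ Sq.filter (fun z => ¬ z.1 < z.2), g z.1 * g z.2
      = ∑ z ∈ (Sq.filter (fun z => ¬ z.1 < z.2)).filter (fun z => z.2 < z.1), g z.1 * g z.2
        + ∑ z ∈ (Sq.filter (fun z => ¬ z.1 < z.2)).filter (fun z => ¬ z.2 < z.1), g z.1 * g z.2 :=
    (Finset.sum_filter_add_sum_filter_not _ _ _).symm
  have hB : ∑ z ∈ (Sq.filter (fun z => ¬ z.1 < z.2)).filter (fun z => z.2 < z.1), g z.1 * g z.2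
      = ∑ z ∈ Sq.filter (fun z => z.1 < z.2), g z.1 * g z.2 := by
    refine Finset.sum_nbij' (fun z => (z.2, z.1)) (fun z => (z.2, z.1)) ?_ ?_ ?_ ?_ ?_
    · intro z hz
      simp only [filter_filter, mem_filter, hSq, mem_product] at hz ⊢
      exact ⟨⟨hz.1.2, hz.1.1⟩, hz.2.2⟩
    · intro z hz
      simp only [filter_filter, mem_filter, hSq, mem_product] at hz ⊢
      exact ⟨⟨hz.1.2, hz.1.1⟩, by omega, hz.2⟩
    · intro z _; rfl
    · intro z _; rfl
    · intro z _; exact mul_comm _ _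
  have hC : ∑ z ∈ (Sq.filter (fun z => ¬ z.1 < z.2)).filter (fun z => ¬ z.2 < z.1), g z.1 * g z.2
      = c := by
    have hset : (Sq.filter (fun z => ¬ z.1 < z.2)).filter (fun z => ¬ z.2 < z.1)
        = s.image (fun a => (a, a)) := by
      ext ⟨a, b⟩
      simp only [filter_filter, mem_filter, hSq, mem_product, mem_image, Prod.mk.injEq]
      constructor
      · rintro ⟨⟨h1, h2⟩, h3, h4⟩
        exact ⟨a, h1, by omega, by omega⟩
      · rintro ⟨x, hx, rfl, rfl⟩
        exact ⟨⟨hx, hx⟩, by omega, by omega⟩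
    rw [hset, Finset.sum_image (by intro a _ b _ h; simpa using congrArg Prod.fst h)]
    rw [hc]
    exact Finset.sum_congr rfl (fun a _ => hg a)
  have := hsq
  rw [hsplit1, hsplit2, hB, hC] at this
  linarith

lemma nat_quad (n : ℕ) : ((n : ℝ) - 1) ≤ (((n : ℝ) ^ 2 - (n : ℝ)) / 2) := by
  rcases Nat.lt_or_ge n 2 with h | h
  · interval_cases n <;> norm_num
  · have h2 : (2 : ℝ) ≤ (n : ℝ) := by exact_mod_cast h
    nlinarith

end DPE

namespace DPE
open Finset

noncomputable def chi {L : ℕ} (S : Finset (ZMod L)) : ZMod L → ℝ :=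
  fun y => if y ∈ S then (1 : ℝ) else 0

lemma chi_nonneg {L : ℕ} (S : Finset (ZMod L)) (y : ZMod L) : 0 ≤ chi S y := by
  by_cases h : y ∈ S <;> simp [chi, h]

lemma chi_sq {L : ℕ} (S : Finset (ZMod L)) (y : ZMod L) : chi S y * chi S y = chi S y := by
  by_cases h : y ∈ S <;> simp [chi, h]

lemma chi_sum {L : ℕ} [NeZero L] (S : Finset (ZMod L)) :
    ∑ y : ZMod L, chi S y = (S.card : ℝ) := by
  simp only [chi]
  rw [Finset.sum_boole, Finset.filter_univ_mem]

lemma energy_eq {L p : ℕ} [NeZero L] (U : ℕ → ℝ) (S : Finset (ZMod L)) :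
    energy L p U S = ∑ x : ZMod L, ∑ m ∈ Finset.Icc 1 p,
      U m * chi S x * chi S (x + (m : ZMod L)) := by
  rw [energy]
  exact sum_range_zmod (fun x : ZMod L => ∑ m ∈ Finset.Icc 1 p,
    U m * chi S x * chi S (x + (m : ZMod L)))

lemma lower_bound {p N L : ℕ} (hp : 2 ≤ p) (U : ℕ → ℝ)
    (hU : ∀ m : ℕ, 1 ≤ m → m ≤ p → 0 < U m)
    (α : ℕ) (hα1 : 1 ≤ α) (hαp : α ≤ p)
    (hdom : ∀ β : ℕ, 1 ≤ β → β ≤ p → β ≠ α →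
      U α < (((p : ℝ) - (α : ℝ) + 1) / ((p : ℝ) - (β : ℝ) + 1)) * U β)
    (hN : 1 ≤ N) (hL : L = p * N) (S : Finset (ZMod L)) (hS : S.card = N) :
    (N : ℝ) * U α / ((p : ℝ) - (α : ℝ) + 1) ≤ energy L p U S := by
  have hLpos : 0 < L := by rw [hL]; exact Nat.mul_pos (by omega) hN
  haveI : NeZero L := ⟨hLpos.ne'⟩
  have hqpos : 0 < (p : ℝ) - (α : ℝ) + 1 := by
    have : (α : ℝ) ≤ (p : ℝ) := by exact_mod_cast hαp
    linarith
  set t : ℝ := U α / ((p : ℝ) - (α : ℝ) + 1) with ht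
  have htpos : 0 < t := div_pos (hU α hα1 hαp) hqpos
  have hUm : ∀ m : ℕ, 1 ≤ m → m ≤ p → ((p : ℝ) - m + 1) * t ≤ U m := by
    intro m hm1 hmp
    have hmpos : 0 < (p : ℝ) - (m : ℝ) + 1 := by
      have : (m : ℝ) ≤ (p : ℝ) := by exact_mod_cast hmp
      linarith
    rcases eq_or_ne m α with rfl | hne
    · rw [ht, mul_comm, div_mul_cancel₀ _ (ne_of_gt hqpos)]
    · have hd := hdom m hm1 hmp hne
      rw [div_mul_eq_mul_div, lt_div_iff₀ hmpos] at hd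
      rw [ht, mul_comm, div_mul_eq_mul_div, div_le_iff₀ hqpos]
      nlinarith
  set k : ℕ → ℝ := fun m => ∑ x : ZMod L, chi S x * chi S (x + (m : ZMod L)) with hk
  -- Step: energy is at least t * weighted pair count
  have e2 : ∑ x : ZMod L, ∑ m ∈ Finset.Icc 1 p,
      ((p : ℝ) - m + 1) * t * (chi S x * chi S (x + (m : ZMod L))) ≤ energy L p U S := by
    rw [energy_eq U S]
    refine Finset.sum_le_sum fun x _ => Finset.sum_le_sum fun m hm => ?_
    rw [mem_Icc] at hm
    rw [mul_assoc (U m)]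
    exact mul_le_mul_of_nonneg_right (hUm m hm.1 hm.2)
      (mul_nonneg (chi_nonneg S _) (chi_nonneg S _))
  have e3 : ∑ x : ZMod L, ∑ m ∈ Finset.Icc 1 p,
      ((p : ℝ) - m + 1) * t * (chi S x * chi S (x + (m : ZMod L)))
      = t * ∑ m ∈ Finset.Icc 1 p, ((p : ℝ) - m + 1) * k m := by
    rw [Finset.sum_comm, Finset.mul_sum]
    refine Finset.sum_congr rfl fun m _ => ?_
    rw [hk]
    simp only
    rw [← Finset.mul_sum]
    ring
  have e4 : ∑ m ∈ Finset.Icc 1 p, ((p : ℝ) - m + 1) * k m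
      = ∑ z ∈ Dp p, k (z.2 - z.1) := by
    rw [Finset.sum_comp k (fun z : ℕ × ℕ => z.2 - z.1), Dp_image]
    refine Finset.sum_congr rfl fun m hm => ?_
    rw [mem_Icc] at hm
    rw [nsmul_eq_mul]
    congr 1
    rw [Dp_fiber hm.1 hm.2]
    push_cast [Nat.cast_sub (show m ≤ p + 1 by omega)]
    ring
  have e5 : ∀ z ∈ Dp p, k (z.2 - z.1)
      = ∑ x : ZMod L, chi S (x + (z.1 : ZMod L)) * chi S (x + (z.2 : ZMod L)) := by
    rintro ⟨a, b⟩ hz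
    simp only [Dp, mem_filter, mem_product, mem_range] at hz
    obtain ⟨⟨ha, hb⟩, hab⟩ := hz
    have hcast : ((a : ZMod L)) + ((b - a : ℕ) : ZMod L) = (b : ZMod L) := by
      rw [← Nat.cast_add]
      congr 1
      omega
    rw [hk]
    simp only
    rw [← shift_sum (a : ZMod L) (fun y => chi S y * chi S (y + ((b - a : ℕ) : ZMod L)))]
    refine Finset.sum_congr rfl fun x _ => ?_
    rw [add_assoc, hcast]
  set c : ZMod L → ℝ := fun x => ∑ a ∈ Finset.range (p + 1), chi S (x + (a : ZMod L)) with hcdef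
  have e6 : ∑ z ∈ Dp p, k (z.2 - z.1) = ∑ x : ZMod L, (c x ^ 2 - c x) / 2 := by
    rw [Finset.sum_congr rfl e5, Finset.sum_comm]
    refine Finset.sum_congr rfl fun x _ => ?_
    exact offdiag_sum (p + 1) (fun a => chi S (x + (a : ZMod L))) (fun a => chi_sq S _)
  have e7 : ∀ x : ZMod L, (c x - 1) ≤ (c x ^ 2 - c x) / 2 := by
    intro x
    obtain ⟨n, hn⟩ : ∃ n : ℕ, c x = n := by
      refine ⟨((Finset.range (p + 1)).filter (fun a : ℕ => x + (a : ZMod L) ∈ S)).card, ?_⟩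
      rw [hcdef]
      simp only [chi]
      rw [Finset.sum_boole]
    rw [hn]
    exact nat_quad n
  have e8 : ∑ x : ZMod L, (c x - 1) = (N : ℝ) := by
    rw [Finset.sum_sub_distrib, Finset.sum_const, Finset.card_univ, ZMod.card,
      nsmul_eq_mul, mul_one]
    have hcs : ∑ x : ZMod L, c x = ((p : ℝ) + 1) * N := by
      rw [hcdef]
      simp only
      rw [Finset.sum_comm]
      have hrow : ∀ a ∈ Finset.range (p + 1),
          ∑ x : ZMod L, chi S (x + (a : ZMod L)) = (N : ℝ) := by
        intro a _
        rw [shift_sum, chi_sum, hS]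
      rw [Finset.sum_congr rfl hrow, Finset.sum_const, Finset.card_range, nsmul_eq_mul]
      push_cast
      ring
    rw [hcs, hL]
    push_cast
    ring
  calc (N : ℝ) * U α / ((p : ℝ) - (α : ℝ) + 1) = t * (N : ℝ) := by rw [ht]; ring
  _ = t * ∑ x : ZMod L, (c x - 1) := by rw [e8]
  _ ≤ t * ∑ x : ZMod L, (c x ^ 2 - c x) / 2 :=
      mul_le_mul_of_nonneg_left (Finset.sum_le_sum fun x _ => e7 x) htpos.le
  _ = t * ∑ z ∈ Dp p, k (z.2 - z.1) := by rw [e6]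
  _ = t * ∑ m ∈ Finset.Icc 1 p, ((p : ℝ) - m + 1) * k m := by rw [e4]
  _ = ∑ x : ZMod L, ∑ m ∈ Finset.Icc 1 p,
      ((p : ℝ) - m + 1) * t * (chi S x * chi S (x + (m : ZMod L))) := e3.symm
  _ ≤ energy L p U S := e2

end DPE

/-- Dominance of the `α`-phase at critical density `Q = 1/p`: if
`U_α < ((p−α+1)/(p−β+1))·U_β` for every `β ≠ α` in `{1, …, p}`, then the minimum of
the energy over all `N`-element configurations on `L = p·N` sites (with
`(p−α+1) ∣ N`) equals `N·U_α/(p−α+1)`. -/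
theorem dominant_phase_energy (p N L : ℕ) (hp : 2 ≤ p) (U : ℕ → ℝ)
    (hU : ∀ m : ℕ, 1 ≤ m → m ≤ p → 0 < U m)
    (α : ℕ) (hα1 : 1 ≤ α) (hαp : α ≤ p)
    (hdom : ∀ β : ℕ, 1 ≤ β → β ≤ p → β ≠ α →
      U α < (((p : ℝ) - (α : ℝ) + 1) / ((p : ℝ) - (β : ℝ) + 1)) * U β)
    (hN : 1 ≤ N) (hdvd : (p - α + 1) ∣ N) (hL : L = p * N) :
    IsLeast {x : ℝ | ∃ S : Finset (ZMod L), S.card = N ∧ energy L p U S = x}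
      ((N : ℝ) * U α / ((p : ℝ) - (α : ℝ) + 1)) := by

  obtain ⟨K, hKdef⟩ := hdvd
  have hK : 0 < K := by
    rcases Nat.eq_zero_or_pos K with rfl | h
    · simp at hKdef; omega
    · exact h
  have hL' : L = p * (p - α + 1) * K := by rw [hL, hKdef]; ring
  have hcast : ((p - α + 1 : ℕ) : ℝ) = (p : ℝ) - (α : ℝ) + 1 := by
    push_cast [Nat.cast_sub hαp]
    ring
  constructor
  · refine ⟨DPE.gsSet p α K L, ?_, ?_⟩
    · rw [DPE.gs_card hα1 hαp hL' hK, hKdef]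
      ring
    · rw [DPE.gs_energy hα1 hαp hK hL' U]
      have hNc : (N : ℝ) = ((p : ℝ) - (α : ℝ) + 1) * K := by
        rw [hKdef]
        push_cast [Nat.cast_sub hαp]
        ring
      rw [hNc]
      have hqpos : (0 : ℝ) < (p : ℝ) - (α : ℝ) + 1 := by
        have : (α : ℝ) ≤ (p : ℝ) := by exact_mod_cast hαp
        linarith
      field_simp
  · rintro x ⟨S, hcard, rfl⟩
    exact DPE.lower_bound hp U hU α hα1 hαp hdom hN hL S hcard
end

section
/- Let p ≥ 2, suppose U_m > 0 for all 1 ≤ m ≤ p, let α be an integer with 1 ≤ α ≤ p and 2α > p, and suppose that for every integer β with 1 ≤ β ≤ p and β ≠ α, U_α < ((p − α + 1)/(p − β + 1)) · U_β. Let N be a positive integer divisible by p − α + 1 and let L = p·N. Then the number of N-element subsets S ⊆ ZMod L achieving the minimal energy E(S) = N · U_α / (p − α + 1) is exactly p · C(N, N/(p − α + 1)), where C denotes the binomial coefficient. (This is the paper's degeneracy formula f for the dominant phase at critical density Q = 1/p in the case 2α > p.) -/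
namespace DPD
attribute [local instance] Classical.propDecidable
noncomputable section

variable {L : ℕ} [NeZero L]

/-- distance from `x` to the next occupied site (cyclically), at least 1. -/
def gap (S : Finset (ZMod L)) (x : ZMod L) : ℕ :=
  if h : ∃ k : ℕ, x + ((k + 1 : ℕ) : ZMod L) ∈ S then Nat.find h + 1 else 0

lemma gap_exists {S : Finset (ZMod L)} {x : ZMod L} (hx : x ∈ S) :
    ∃ k : ℕ, x + ((k + 1 : ℕ) : ZMod L) ∈ S := by
  refine ⟨L - 1, ?_⟩
  have hL : 0 < L := Nat.pos_of_ne_zero (NeZero.ne L)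
  have : (L - 1) + 1 = L := Nat.succ_pred_eq_of_pos hL
  rw [this]
  simpa [ZMod.natCast_self] using hx

lemma gap_pos {S : Finset (ZMod L)} {x : ZMod L} (hx : x ∈ S) : 1 ≤ gap S x := by
  rw [gap, dif_pos (gap_exists hx)]; omega

lemma gap_spec {S : Finset (ZMod L)} {x : ZMod L} (hx : x ∈ S) :
    x + ((gap S x : ℕ) : ZMod L) ∈ S := by
  rw [gap, dif_pos (gap_exists hx)]
  exact Nat.find_spec (gap_exists hx)

lemma gap_le {S : Finset (ZMod L)} {x : ZMod L} (hx : x ∈ S) {s : ℕ} (hs : 1 ≤ s)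
    (h : x + (s : ZMod L) ∈ S) : gap S x ≤ s := by
  rw [gap, dif_pos (gap_exists hx)]
  have : x + (((s - 1) + 1 : ℕ) : ZMod L) ∈ S := by
    have : s - 1 + 1 = s := Nat.succ_pred_eq_of_pos hs
    rw [this]; exact h
  have hle : Nat.find (gap_exists hx) ≤ s - 1 := Nat.find_min' (gap_exists hx) this
  omega

lemma notMem_of_lt_gap {S : Finset (ZMod L)} {x : ZMod L} (hx : x ∈ S) {s : ℕ}
    (hs : 1 ≤ s) (h : s < gap S x) : x + (s : ZMod L) ∉ S := by
  intro hmem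
  exact absurd (gap_le hx hs hmem) (by omega)

lemma gap_eq_of {S : Finset (ZMod L)} {x : ZMod L} (hx : x ∈ S) {g : ℕ} (hg : 1 ≤ g)
    (h1 : x + (g : ZMod L) ∈ S) (h2 : ∀ s, 1 ≤ s → s < g → x + (s : ZMod L) ∉ S) :
    gap S x = g := by
  refine le_antisymm (gap_le hx hg h1) ?_
  by_contra hlt
  exact h2 _ (gap_pos hx) (by omega) (gap_spec hx)

/-- the walk around the cycle starting at `x`, stepping by gaps -/
def walk (S : Finset (ZMod L)) (x : ZMod L) : ℕ → ZMod L
  | 0 => x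
  | k + 1 => walk S x k + ((gap S (walk S x k) : ℕ) : ZMod L)

/-- cumulative gap sums along the walk -/
def csum (S : Finset (ZMod L)) (x : ZMod L) : ℕ → ℕ
  | 0 => 0
  | k + 1 => csum S x k + gap S (walk S x k)

lemma walk_mem {S : Finset (ZMod L)} {x : ZMod L} (hx : x ∈ S) (k : ℕ) :
    walk S x k ∈ S := by
  induction k with
  | zero => exact hx
  | succ k ih => exact gap_spec ih

lemma walk_eq {S : Finset (ZMod L)} {x : ZMod L} (k : ℕ) :
    walk S x k = x + ((csum S x k : ℕ) : ZMod L) := by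
  induction k with
  | zero => simp [walk, csum]
  | succ k ih => simp [walk, csum, ih, add_assoc, Nat.cast_add]

lemma csum_strictMono {S : Finset (ZMod L)} {x : ZMod L} (hx : x ∈ S) :
    StrictMono (csum S x) := by
  apply strictMono_nat_of_lt_succ
  intro k
  have := gap_pos (walk_mem hx k)
  simp only [csum]; omega



lemma cast_inj_lt {a b : ℕ} (ha : a < L) (hb : b < L) (h : (a : ZMod L) = b) : a = b := by
  have := congrArg ZMod.val h
  rwa [ZMod.val_cast_of_lt ha, ZMod.val_cast_of_lt hb] at this

lemma exists_nat_repr (x y : ZMod L) : ∃ t : ℕ, t < L ∧ y = x + (t : ZMod L) := by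
  refine ⟨(y - x).val, ZMod.val_lt _, ?_⟩
  have : (((y - x).val : ℕ) : ZMod L) = y - x := by simp [ZMod.natCast_val, ZMod.cast_id]
  rw [this]; ring


variable {L : ℕ} [NeZero L]

lemma key {S : Finset (ZMod L)} {x : ZMod L} (hx : x ∈ S) :
    ∀ k, k ≤ S.card → csum S x k ≤ L ∧
      (∀ t, t < csum S x k → ((x + (t : ZMod L)) ∈ S ↔ ∃ j < k, t = csum S x j)) := by
  intro k
  induction k with
  | zero => intro _; simp [csum]
  | succ k ih =>
    intro hk1
    obtain ⟨hle, hiff⟩ := ih (by omega)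
    have hlt : csum S x k < L := by
      rcases lt_or_eq_of_le hle with h | h
      · exact h
      · exfalso
        have hsub : S ⊆ (Finset.range k).image (walk S x) := by
          intro y hy
          obtain ⟨t, htL, hty⟩ := exists_nat_repr x y
          have hmem : x + (t : ZMod L) ∈ S := hty ▸ hy
          obtain ⟨j, hj, htj⟩ := (hiff t (by omega)).mp hmem
          simp only [Finset.mem_image, Finset.mem_range]
          exact ⟨j, hj, by rw [walk_eq, ← htj, ← hty]⟩
        have h1 := Finset.card_le_card hsub
        have h2 := Finset.card_image_le (s := Finset.range k) (f := walk S x)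
        simp only [Finset.card_range] at h2
        omega
    have hwk : walk S x k ∈ S := walk_mem hx k
    have hgpos : 1 ≤ gap S (walk S x k) := gap_pos hwk
    have hle' : csum S x (k+1) ≤ L := by
      by_contra hgt
      push_neg at hgt
      have hs1 : 1 ≤ L - csum S x k := by omega
      have hs2 : L - csum S x k < gap S (walk S x k) := by
        simp only [csum] at hgt; omega
      have hmem : walk S x k + ((L - csum S x k : ℕ) : ZMod L) ∈ S := by
        rw [walk_eq, add_assoc, ← Nat.cast_add]
        have he : csum S x k + (L - csum S x k) = L := by omega
        rw [he]
        simpa [ZMod.natCast_self] using hx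
      exact notMem_of_lt_gap hwk hs1 hs2 hmem
    refine ⟨hle', ?_⟩
    intro t ht
    rcases lt_or_ge t (csum S x k) with htk | htk
    · rw [hiff t htk]
      constructor
      · rintro ⟨j, hj, h⟩; exact ⟨j, by omega, h⟩
      · rintro ⟨j, hj, h⟩
        refine ⟨j, ?_, h⟩
        by_contra hjk
        have hjek : j = k := by omega
        subst hjek
        omega
    · have hxt : x + (t : ZMod L) = walk S x k + ((t - csum S x k : ℕ) : ZMod L) := by
        rw [walk_eq, add_assoc, ← Nat.cast_add, Nat.add_sub_cancel' htk]
      rcases eq_or_lt_of_le htk with h0 | hpos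
      · constructor
        · intro _; exact ⟨k, by omega, by omega⟩
        · intro _
          rw [hxt]
          have hz : t - csum S x k = 0 := by omega
          rw [hz]
          simpa using hwk
      · have hs1 : 1 ≤ t - csum S x k := by omega
        have hslt : t - csum S x k < gap S (walk S x k) := by
          simp only [csum] at ht; omega
        constructor
        · intro hmem
          exact absurd (hxt ▸ hmem) (notMem_of_lt_gap hwk hs1 hslt)
        · rintro ⟨j, hj, htj⟩
          rcases Nat.lt_or_ge j k with h' | h'
          · have h1 : csum S x j < csum S x k := csum_strictMono hx h'
            exact absurd htj.symm (Nat.ne_of_lt (lt_of_lt_of_le h1 htk))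
          · have hjek : j = k := by omega
            subst hjek
            exact absurd htj.symm (Nat.ne_of_lt hpos)

lemma csum_eq_sum {S : Finset (ZMod L)} (x : ZMod L) (k : ℕ) :
    csum S x k = ∑ j ∈ Finset.range k, gap S (walk S x j) := by
  induction k with
  | zero => simp [csum]
  | succ k ih => rw [Finset.sum_range_succ, ← ih]; rfl

lemma csum_lt_of_lt {S : Finset (ZMod L)} {x : ZMod L} (hx : x ∈ S) {j : ℕ}
    (hj : j < S.card) : csum S x j < L := by
  have hle := (key hx S.card le_rfl).1
  exact lt_of_lt_of_le (csum_strictMono hx hj) hle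

lemma walk_injOn {S : Finset (ZMod L)} {x : ZMod L} (hx : x ∈ S) {j j' : ℕ}
    (hj : j < S.card) (hj' : j' < S.card) (h : walk S x j = walk S x j') : j = j' := by
  rw [walk_eq, walk_eq] at h
  have h2 : ((csum S x j : ℕ) : ZMod L) = ((csum S x j' : ℕ) : ZMod L) := by
    have := congrArg (fun z => z - x) h
    simpa [add_sub_cancel_left] using this
  have := cast_inj_lt (csum_lt_of_lt hx hj) (csum_lt_of_lt hx hj') h2
  exact (csum_strictMono hx).injective this

lemma image_walk_eq {S : Finset (ZMod L)} {x : ZMod L} (hx : x ∈ S) :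
    (Finset.range S.card).image (walk S x) = S := by
  apply Finset.eq_of_subset_of_card_le
  · intro y hy
    simp only [Finset.mem_image, Finset.mem_range] at hy
    obtain ⟨j, _, rfl⟩ := hy
    exact walk_mem hx j
  · rw [Finset.card_image_of_injOn, Finset.card_range]
    intro a ha b hb hab
    simp only [Finset.coe_range, Set.mem_Iio] at ha hb
    exact walk_injOn hx ha hb hab

lemma csum_card_eq {S : Finset (ZMod L)} {x : ZMod L} (hx : x ∈ S) :
    csum S x S.card = L := by
  have hle := (key hx S.card le_rfl).1
  rcases eq_or_lt_of_le hle with h | h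
  · exact h
  · exfalso
    have hmem : walk S x S.card ∈ (Finset.range S.card).image (walk S x) := by
      rw [image_walk_eq hx]; exact walk_mem hx _
    simp only [Finset.mem_image, Finset.mem_range] at hmem
    obtain ⟨j, hj, hje⟩ := hmem
    rw [walk_eq, walk_eq] at hje
    have h2 : ((csum S x j : ℕ) : ZMod L) = ((csum S x S.card : ℕ) : ZMod L) := by
      have := congrArg (fun z => z - x) hje
      simpa [add_sub_cancel_left] using this
    have := cast_inj_lt (csum_lt_of_lt hx hj) h h2
    have := csum_strictMono hx hj
    omega

lemma sum_gap {S : Finset (ZMod L)} {x : ZMod L} (hx : x ∈ S) :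
    ∑ y ∈ S, gap S y = L := by
  have hinj : ∀ a ∈ Finset.range S.card, ∀ b ∈ Finset.range S.card,
      walk S x a = walk S x b → a = b := by
    intro a ha b hb hab
    simp only [Finset.mem_range] at ha hb
    exact walk_injOn hx ha hb hab
  calc ∑ y ∈ S, gap S y = ∑ y ∈ (Finset.range S.card).image (walk S x), gap S y := by
        rw [image_walk_eq hx]
    _ = ∑ j ∈ Finset.range S.card, gap S (walk S x j) := Finset.sum_image hinj
    _ = L := by rw [← csum_eq_sum, csum_card_eq hx]

lemma mem_iff_csum {S : Finset (ZMod L)} {x : ZMod L} (hx : x ∈ S) {t : ℕ} (ht : t < L) :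
    (x + (t : ZMod L) ∈ S ↔ ∃ j < S.card, t = csum S x j) := by
  have h := (key hx S.card le_rfl).2
  rw [csum_card_eq hx] at h
  exact h t ht

lemma energy_eq_sum {p : ℕ} {U : ℕ → ℝ} (S : Finset (ZMod L)) :
    energy L p U S
      = ∑ i ∈ S, ∑ m ∈ Finset.Icc 1 p, U m * (if i + (m : ZMod L) ∈ S then (1:ℝ) else 0) := by
  rw [energy]
  have h1 : ∑ i ∈ Finset.range L, ∑ m ∈ Finset.Icc 1 p,
      U m * (if (i : ZMod L) ∈ S then (1:ℝ) else 0) *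
        (if (i : ZMod L) + (m : ZMod L) ∈ S then (1:ℝ) else 0)
      = ∑ z : ZMod L, ∑ m ∈ Finset.Icc 1 p,
          U m * (if z ∈ S then (1:ℝ) else 0) * (if z + (m : ZMod L) ∈ S then (1:ℝ) else 0) := by
    refine Finset.sum_nbij' (fun a => ((a : ℕ) : ZMod L)) (fun z => z.val) ?_ ?_ ?_ ?_ ?_
    · intro a _; exact Finset.mem_univ _
    · intro z _; exact Finset.mem_range.mpr (ZMod.val_lt z)
    · intro a ha; exact ZMod.val_cast_of_lt (Finset.mem_range.mp ha)
    · intro z _; simp [ZMod.natCast_val, ZMod.cast_id]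
    · intro a _; rfl
  rw [h1]
  rw [← Finset.sum_subset (Finset.subset_univ S) ?_]
  · refine Finset.sum_congr rfl fun i hi => Finset.sum_congr rfl fun m _ => ?_
    rw [if_pos hi, mul_one]
  · intro z _ hz
    apply Finset.sum_eq_zero
    intro m _
    rw [if_neg hz, mul_zero, zero_mul]

variable {p N α : ℕ} {U : ℕ → ℝ}

/-- the normalized minimal energy per α-gap -/
lemma inner_ge (hp : 2 ≤ p) (hU : ∀ m : ℕ, 1 ≤ m → m ≤ p → 0 < U m)
    (hα1 : 1 ≤ α) (hαp : α ≤ p)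
    (hdom : ∀ β : ℕ, 1 ≤ β → β ≤ p → β ≠ α →
      U α < (((p : ℝ) - (α : ℝ) + 1) / ((p : ℝ) - (β : ℝ) + 1)) * U β)
    {S : Finset (ZMod L)} {i : ZMod L} (hi : i ∈ S) :
    U α / ((p : ℝ) - α + 1) * ((p : ℝ) + 1 - gap S i)
      ≤ ∑ m ∈ Finset.Icc 1 p, U m * (if i + (m : ZMod L) ∈ S then (1:ℝ) else 0) := by
  have hαr : (0:ℝ) < (p : ℝ) - α + 1 := by
    have : (α : ℝ) ≤ p := by exact_mod_cast hαp
    linarith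
  have hc : 0 < U α / ((p : ℝ) - α + 1) := div_pos (hU α hα1 hαp) hαr
  have hnonneg : ∀ m ∈ Finset.Icc 1 p,
      0 ≤ U m * (if i + (m : ZMod L) ∈ S then (1:ℝ) else 0) := by
    intro m hm
    simp only [Finset.mem_Icc] at hm
    have := (hU m hm.1 hm.2).le
    positivity
  rcases Nat.lt_or_ge p (gap S i) with hg | hg
  · -- gap > p : RHS ≥ 0 ≥ LHS
    have h0 : (0:ℝ) ≤ ∑ m ∈ Finset.Icc 1 p,
        U m * (if i + (m : ZMod L) ∈ S then (1:ℝ) else 0) := Finset.sum_nonneg hnonneg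
    have : ((p:ℝ) + 1 - gap S i) ≤ 0 := by
      have : (p:ℝ) + 1 ≤ (gap S i : ℝ) := by exact_mod_cast hg
      linarith
    nlinarith
  · -- gap ≤ p
    set g := gap S i with hgdef
    have hg1 : 1 ≤ g := gap_pos hi
    have hterm : U g ≤ ∑ m ∈ Finset.Icc 1 p,
        U m * (if i + (m : ZMod L) ∈ S then (1:ℝ) else 0) := by
      have hmem : g ∈ Finset.Icc 1 p := Finset.mem_Icc.mpr ⟨hg1, hg⟩
      have := Finset.single_le_sum hnonneg hmem
      rwa [if_pos (gap_spec hi), mul_one] at this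
    have hgr : (0:ℝ) < (p : ℝ) - g + 1 := by
      have : (g : ℝ) ≤ p := by exact_mod_cast hg
      linarith
    have hUg : U α / ((p : ℝ) - α + 1) * ((p : ℝ) + 1 - g) ≤ U g := by
      rcases eq_or_ne g α with rfl | hne
      · have he : U g / ((p : ℝ) - g + 1) * ((p : ℝ) + 1 - g) = U g := by
          rw [div_mul_eq_mul_div, show ((p:ℝ) + 1 - (g:ℝ)) = ((p:ℝ) - (g:ℝ) + 1) from by ring]
          exact mul_div_cancel_right₀ _ hgr.ne'
        rw [he]
      · have hd := hdom g hg1 hg hne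
        rw [div_mul_eq_mul_div, div_le_iff₀ hαr]
        rw [div_mul_eq_mul_div, lt_div_iff₀ hgr] at hd
        nlinarith
    linarith

lemma sum_gap_real {S : Finset (ZMod L)} {x : ZMod L} (hx : x ∈ S) :
    ∑ y ∈ S, ((gap S y : ℝ)) = (L : ℝ) := by
  rw [← Nat.cast_sum]
  exact_mod_cast congrArg (Nat.cast : ℕ → ℝ) (sum_gap hx)

lemma Ugap_le_inner (hU : ∀ m : ℕ, 1 ≤ m → m ≤ p → 0 < U m)
    {S : Finset (ZMod L)} {i : ZMod L} (hi : i ∈ S) (hgle : gap S i ≤ p) :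
    U (gap S i) ≤ ∑ m ∈ Finset.Icc 1 p, U m * (if i + (m : ZMod L) ∈ S then (1:ℝ) else 0) := by
  have hnonneg : ∀ m ∈ Finset.Icc 1 p,
      0 ≤ U m * (if i + (m : ZMod L) ∈ S then (1:ℝ) else 0) := by
    intro m hm
    simp only [Finset.mem_Icc] at hm
    have := (hU m hm.1 hm.2).le
    positivity
  have hmem : gap S i ∈ Finset.Icc 1 p := Finset.mem_Icc.mpr ⟨gap_pos hi, hgle⟩
  have := Finset.single_le_sum hnonneg hmem
  rwa [if_pos (gap_spec hi), mul_one] at this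

lemma gaps_of_energy_eq (hp : 2 ≤ p) (hU : ∀ m : ℕ, 1 ≤ m → m ≤ p → 0 < U m)
    (hα1 : 1 ≤ α) (hαp : α ≤ p)
    (hdom : ∀ β : ℕ, 1 ≤ β → β ≤ p → β ≠ α →
      U α < (((p : ℝ) - (α : ℝ) + 1) / ((p : ℝ) - (β : ℝ) + 1)) * U β)
    (hN : 1 ≤ N) (hL : L = p * N) {S : Finset (ZMod L)} (hcard : S.card = N)
    (hE : energy L p U S = (N : ℝ) * U α / ((p : ℝ) - (α : ℝ) + 1)) :
    ∀ i ∈ S, gap S i = α ∨ gap S i = p + 1 := by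
  have hSne : S.Nonempty := Finset.card_pos.mp (by omega)
  obtain ⟨x, hx⟩ := hSne
  have hαr : (0:ℝ) < (p : ℝ) - α + 1 := by
    have : (α : ℝ) ≤ p := by exact_mod_cast hαp
    linarith
  set c := U α / ((p : ℝ) - α + 1) with hc
  have hcpos : 0 < c := div_pos (hU α hα1 hαp) hαr
  have hsum : ∑ i ∈ S, ((p : ℝ) + 1 - gap S i) = N := by
    rw [Finset.sum_sub_distrib, sum_gap_real hx, Finset.sum_const, hcard, hL]
    push_cast
    ring
  set inner := fun i => ∑ m ∈ Finset.Icc 1 p,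
      U m * (if i + (m : ZMod L) ∈ S then (1:ℝ) else 0) with hinner
  have hge : ∀ i ∈ S, c * ((p : ℝ) + 1 - gap S i) ≤ inner i := fun i hi =>
    inner_ge hp hU hα1 hαp hdom hi
  have hEs : ∑ i ∈ S, inner i = c * N := by
    rw [← energy_eq_sum, hE, hc]
    ring
  have hzero : ∑ i ∈ S, (inner i - c * ((p : ℝ) + 1 - gap S i)) = 0 := by
    rw [Finset.sum_sub_distrib, hEs, ← Finset.mul_sum, hsum]
    ring
  have hpt : ∀ i ∈ S, inner i - c * ((p : ℝ) + 1 - gap S i) = 0 := by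
    rw [← Finset.sum_eq_zero_iff_of_nonneg]
    · exact hzero
    · intro i hi
      have := hge i hi
      linarith
  intro i hi
  have heq : inner i = c * ((p : ℝ) + 1 - gap S i) := by
    have := hpt i hi
    linarith
  rcases Nat.lt_or_ge p (gap S i) with hg | hg
  · -- gap > p, show gap = p + 1
    right
    have hin0 : (0:ℝ) ≤ inner i := by
      apply Finset.sum_nonneg
      intro m hm
      simp only [Finset.mem_Icc] at hm
      have := (hU m hm.1 hm.2).le
      positivity
    have h1 : (p:ℝ) + 1 - gap S i ≤ 0 := by
      have : (p:ℝ) + 1 ≤ (gap S i : ℝ) := by exact_mod_cast hg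
      linarith
    have h2 : c * ((p:ℝ) + 1 - gap S i) ≤ 0 := mul_nonpos_of_nonneg_of_nonpos hcpos.le h1
    have h3 : c * ((p:ℝ) + 1 - gap S i) = 0 := le_antisymm h2 (heq ▸ hin0)
    have h4 : (p:ℝ) + 1 - gap S i = 0 := by
      rcases mul_eq_zero.mp h3 with h | h
      · exact absurd h hcpos.ne'
      · exact h
    have : ((gap S i : ℝ)) = (p:ℝ) + 1 := by linarith
    exact_mod_cast this
  · -- gap ≤ p, show gap = α
    left
    by_contra hne
    have hg1 : 1 ≤ gap S i := gap_pos hi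
    have hgr : (0:ℝ) < (p : ℝ) - gap S i + 1 := by
      have : ((gap S i : ℝ)) ≤ p := by exact_mod_cast hg
      linarith
    have hd := hdom (gap S i) hg1 hg hne
    have hstrict : c * ((p : ℝ) + 1 - gap S i) < U (gap S i) := by
      rw [hc, div_mul_eq_mul_div, div_lt_iff₀ hαr]
      rw [div_mul_eq_mul_div, lt_div_iff₀ hgr] at hd
      nlinarith
    have hle2 := Ugap_le_inner hU hi hg
    have hle3 : U (gap S i) ≤ inner i := hle2
    rw [heq] at hle3
    linarith

lemma no_between (h2α : p < 2 * α) (hαp : α ≤ p)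
    {S : Finset (ZMod L)} (hgaps : ∀ i ∈ S, gap S i = α ∨ gap S i = p + 1)
    {i : ZMod L} (hi : i ∈ S) {m : ℕ} (hm1 : 1 ≤ m) (hmp : m ≤ p) :
    i + (m : ZMod L) ∈ S ↔ (gap S i = α ∧ m = α) := by
  constructor
  · intro hmem
    have hle : gap S i ≤ m := gap_le hi hm1 hmem
    rcases hgaps i hi with hga | hga
    · refine ⟨hga, ?_⟩
      by_contra hne
      have hlt : α < m := by omega
      have hj : i + (α : ZMod L) ∈ S := by rw [← hga]; exact gap_spec hi
      have hj2 : (i + (α : ZMod L)) + ((m - α : ℕ) : ZMod L) ∈ S := by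
        rw [add_assoc, ← Nat.cast_add]
        have : α + (m - α) = m := by omega
        rw [this]
        exact hmem
      have hgj := gap_le hj (by omega) hj2
      rcases hgaps _ hj with h | h <;> omega
    · omega
  · rintro ⟨hga, rfl⟩
    rw [← hga]
    exact gap_spec hi

lemma filter_card_eq (hαp : α ≤ p) (hL : L = p * N)
    {S : Finset (ZMod L)} (hcard : S.card = N) (hN : 1 ≤ N)
    (hgaps : ∀ i ∈ S, gap S i = α ∨ gap S i = p + 1) :
    (S.filter (fun i => gap S i = α)).card * (p - α + 1) = N := by
  obtain ⟨x, hx⟩ : S.Nonempty := Finset.card_pos.mp (by omega)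
  set a := (S.filter (fun i => gap S i = α)).card with ha
  have hsplit := Finset.sum_filter_add_sum_filter_not S (fun i => gap S i = α) (gap S)
  have h1 : ∑ i ∈ S.filter (fun i => gap S i = α), gap S i = a * α := by
    rw [Finset.sum_congr rfl (fun i hi => (Finset.mem_filter.mp hi).2), Finset.sum_const,
      smul_eq_mul]
  have hcc : (S.filter (fun i => ¬ gap S i = α)).card = N - a := by
    have := Finset.card_filter_add_card_filter_not (s := S)
      (p := fun i => gap S i = α)
    omega
  have h2 : ∑ i ∈ S.filter (fun i => ¬ gap S i = α), gap S i = (N - a) * (p + 1) := by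
    rw [Finset.sum_congr rfl (fun i hi => ?_), Finset.sum_const, smul_eq_mul, hcc]
    have hmem := Finset.mem_filter.mp hi
    rcases hgaps i hmem.1 with h | h
    · exact absurd h hmem.2
    · exact h
  have hLsum := sum_gap hx
  have haN : a ≤ N := by
    rw [ha, ← hcard]
    exact Finset.card_filter_le _ _
  -- a * α + (N - a) * (p + 1) = p * N  ⟹  a * (p - α + 1) = N
  have heq : a * α + (N - a) * (p + 1) = p * N := by
    rw [← h1, ← h2, hsplit, hLsum, hL]
  have hz : (a : ℤ) * α + ((N : ℤ) - a) * (p + 1) = p * N := by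
    have := congrArg (Nat.cast : ℕ → ℤ) heq
    push_cast [Nat.cast_sub haN] at this
    linarith [this]
  have hgoal : (a : ℤ) * ((p : ℤ) - α + 1) = N := by nlinarith [hz]
  have : (a * (p - α + 1) : ℤ) = (N : ℤ) := by
    push_cast [Nat.cast_sub hαp]
    linarith [hgoal]
  exact_mod_cast this

lemma energy_of_gaps (hαp : α ≤ p) (h2α : p < 2 * α) (hα1 : 1 ≤ α)
    (hL : L = p * N) (hN : 1 ≤ N)
    {S : Finset (ZMod L)} (hcard : S.card = N)
    (hgaps : ∀ i ∈ S, gap S i = α ∨ gap S i = p + 1) :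
    energy L p U S = (N : ℝ) * U α / ((p : ℝ) - (α : ℝ) + 1) := by
  have hαr : (0:ℝ) < (p : ℝ) - α + 1 := by
    have : (α : ℝ) ≤ p := by exact_mod_cast hαp
    linarith
  rw [energy_eq_sum]
  have hinner : ∀ i ∈ S, ∑ m ∈ Finset.Icc 1 p,
      U m * (if i + (m : ZMod L) ∈ S then (1:ℝ) else 0)
      = if gap S i = α then U α else 0 := by
    intro i hi
    have hstep : ∀ m ∈ Finset.Icc 1 p,
        U m * (if i + (m : ZMod L) ∈ S then (1:ℝ) else 0)
        = if m = α then (if gap S i = α then U α else 0) else 0 := by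
      intro m hm
      simp only [Finset.mem_Icc] at hm
      rw [if_congr (no_between h2α hαp hgaps hi hm.1 hm.2) rfl rfl]
      rcases eq_or_ne m α with rfl | hne
      · rcases eq_or_ne (gap S i) m with h | h
        · simp [h]
        · simp [h]
      · simp only [if_neg hne]
        have : ¬ (gap S i = α ∧ m = α) := fun h => hne h.2
        rw [if_neg this, mul_zero]
    rw [Finset.sum_congr rfl hstep, Finset.sum_ite_eq' (Finset.Icc 1 p) α
      (fun _ => if gap S i = α then U α else 0)]
    rw [if_pos (Finset.mem_Icc.mpr ⟨hα1, hαp⟩)]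
  rw [Finset.sum_congr rfl hinner, ← Finset.sum_filter, Finset.sum_const, nsmul_eq_mul]
  have hfc := filter_card_eq hαp hL hcard hN hgaps
  have hNr : (N : ℝ) = ((S.filter (fun i => gap S i = α)).card : ℝ) * ((p : ℝ) - α + 1) := by
    have := congrArg (Nat.cast : ℕ → ℝ) hfc
    push_cast [Nat.cast_sub hαp] at this
    linarith [this]
  rw [hNr]
  field_simp

/-- block-length sequence determined by the set `T` of short blocks -/
def gfun (α p : ℕ) (T : Finset ℕ) (j : ℕ) : ℕ := if j ∈ T then α else p + 1

/-- partial sums of block lengths -/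
def psum (α p : ℕ) (T : Finset ℕ) (k : ℕ) : ℕ := ∑ j ∈ Finset.range k, gfun α p T j

lemma psum_succ (α p : ℕ) (T : Finset ℕ) (k : ℕ) :
    psum α p T (k + 1) = psum α p T k + gfun α p T k := Finset.sum_range_succ _ _

lemma gfun_pos {α p : ℕ} (hα1 : 1 ≤ α) (T : Finset ℕ) (j : ℕ) : 1 ≤ gfun α p T j := by
  rw [gfun]; split <;> omega

lemma psum_strictMono {α p : ℕ} (hα1 : 1 ≤ α) (T : Finset ℕ) :
    StrictMono (psum α p T) := by
  apply strictMono_nat_of_lt_succ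
  intro k
  rw [psum_succ]
  have := gfun_pos (p := p) hα1 T k
  omega

lemma psum_total {α p N n L : ℕ} (hα1 : 1 ≤ α) (hαp : α ≤ p)
    (hn : n * (p - α + 1) = N) (hL : L = p * N) {T : Finset ℕ}
    (hT : T ⊆ Finset.range N) (hTc : T.card = n) :
    psum α p T N = L := by
  have hfe : (Finset.range N).filter (fun j => j ∈ T) = T := by
    ext j
    simp only [Finset.mem_filter]
    exact ⟨fun h => h.2, fun h => ⟨hT h, h⟩⟩
  have hsplit := Finset.card_filter_add_card_filter_not
    (s := Finset.range N) (p := fun j => j ∈ T)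
  rw [hfe, hTc, Finset.card_range] at hsplit
  have hnN : n ≤ N := by omega
  have : psum α p T N = n * α + (N - n) * (p + 1) := by
    rw [psum]
    simp only [gfun]
    rw [Finset.sum_ite, Finset.sum_const, Finset.sum_const, smul_eq_mul, smul_eq_mul, hfe, hTc]
    have : ((Finset.range N).filter (fun j => ¬ j ∈ T)).card = N - n := by omega
    rw [this]
  rw [this, hL]
  have hz : ((n:ℤ)) * ((p:ℤ) - α + 1) = N := by
    have := congrArg (Nat.cast : ℕ → ℤ) hn
    push_cast [Nat.cast_sub hαp] at this
    linarith [this]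
  have : (n * α + (N - n) * (p + 1) : ℤ) = ((p * N : ℕ) : ℤ) := by
    push_cast [Nat.cast_sub hnN]
    nlinarith [hz]
  exact_mod_cast this

variable {p N α n : ℕ}

/-- the configuration built from a base point `x` and a set `T` of short-block indices -/
def config (N α p : ℕ) (x : ZMod L) (T : Finset ℕ) : Finset (ZMod L) :=
  (Finset.range N).image (fun k => x + ((psum α p T k : ℕ) : ZMod L))

section ConfigLemmas

variable (hα1 : 1 ≤ α) (hαp : α ≤ p) (hn : n * (p - α + 1) = N) (hL : L = p * N)
  (hN : 1 ≤ N) {T : Finset ℕ} (hT : T ⊆ Finset.range N) (hTc : T.card = n) (x : ZMod L)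

include hα1 hαp hn hL hN hT hTc

lemma psum_lt_L {k : ℕ} (hk : k < N) : psum α p T k < L := by
  rw [← psum_total hα1 hαp hn hL hT hTc]
  exact psum_strictMono hα1 T hk

lemma mem_config (k : ℕ) (hk : k < N) :
    x + ((psum α p T k : ℕ) : ZMod L) ∈ config N α p x T :=
  Finset.mem_image.mpr ⟨k, Finset.mem_range.mpr hk, rfl⟩

lemma base_mem_config : x ∈ config N α p x T := by
  have := mem_config hα1 hαp hn hL hN hT hTc x 0 (by omega)
  simpa [psum] using this

lemma mem_config_iff {t : ℕ} (ht : t < L) :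
    x + (t : ZMod L) ∈ config N α p x T ↔ ∃ k < N, t = psum α p T k := by
  constructor
  · intro h
    obtain ⟨k, hk, hke⟩ := Finset.mem_image.mp h
    rw [Finset.mem_range] at hk
    refine ⟨k, hk, ?_⟩
    have h2 : ((psum α p T k : ℕ) : ZMod L) = (t : ZMod L) := by
      have := congrArg (fun z => z - x) hke
      simpa [add_sub_cancel_left] using this
    exact (cast_inj_lt (psum_lt_L hα1 hαp hn hL hN hT hTc hk) ht h2).symm
  · rintro ⟨k, hk, rfl⟩
    exact mem_config hα1 hαp hn hL hN hT hTc x k hk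

lemma config_card : (config N α p x T).card = N := by
  rw [config, Finset.card_image_of_injOn, Finset.card_range]
  intro a ha b hb hab
  simp only [Finset.coe_range, Set.mem_Iio] at ha hb
  have h2 : ((psum α p T a : ℕ) : ZMod L) = ((psum α p T b : ℕ) : ZMod L) := by
    have := congrArg (fun z => z - x) hab
    simpa [add_sub_cancel_left] using this
  have := cast_inj_lt (psum_lt_L hα1 hαp hn hL hN hT hTc (k := a) ha)
    (psum_lt_L hα1 hαp hn hL hN hT hTc (k := b) hb) h2
  exact (psum_strictMono hα1 T).injective this

lemma gap_config {k : ℕ} (hk : k < N) :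
    gap (config N α p x T) (x + ((psum α p T k : ℕ) : ZMod L)) = gfun α p T k := by
  have hxk : x + ((psum α p T k : ℕ) : ZMod L) ∈ config N α p x T :=
    mem_config hα1 hαp hn hL hN hT hTc x k hk
  apply gap_eq_of hxk (gfun_pos hα1 T k)
  · -- next block endpoint is in the configuration
    have harith : x + ((psum α p T k : ℕ) : ZMod L) + ((gfun α p T k : ℕ) : ZMod L)
        = x + ((psum α p T (k+1) : ℕ) : ZMod L) := by
      rw [add_assoc, ← Nat.cast_add, ← psum_succ]
    rw [harith]
    rcases Nat.lt_or_ge (k+1) N with h | h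
    · exact mem_config hα1 hαp hn hL hN hT hTc x (k+1) h
    · have hke : k + 1 = N := by omega
      rw [hke, psum_total hα1 hαp hn hL hT hTc]
      simpa [ZMod.natCast_self] using base_mem_config hα1 hαp hn hL hN hT hTc x
  · intro s hs1 hs2 hmem
    have harith : x + ((psum α p T k : ℕ) : ZMod L) + (s : ZMod L)
        = x + (((psum α p T k + s : ℕ)) : ZMod L) := by
      rw [add_assoc, ← Nat.cast_add]
    rw [harith] at hmem
    have htlt : psum α p T k + s < psum α p T (k+1) := by
      rw [psum_succ]; omega
    have htL : psum α p T k + s < L := by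
      rcases Nat.lt_or_ge (k+1) N with h | h
      · exact lt_trans htlt (psum_lt_L hα1 hαp hn hL hN hT hTc h)
      · have hke : k + 1 = N := by omega
        rw [hke, psum_total hα1 hαp hn hL hT hTc] at htlt
        exact htlt
    obtain ⟨j, hj, hje⟩ := (mem_config_iff hα1 hαp hn hL hN hT hTc x htL).mp hmem
    rcases Nat.lt_or_ge k j with h | h
    · have : psum α p T (k+1) ≤ psum α p T j := (psum_strictMono hα1 T).monotone h
      omega
    · have : psum α p T j ≤ psum α p T k := (psum_strictMono hα1 T).monotone h
      omega

lemma config_gaps : ∀ i ∈ config N α p x T, gap (config N α p x T) i = α ∨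
    gap (config N α p x T) i = p + 1 := by
  intro i hi
  obtain ⟨k, hk, rfl⟩ := Finset.mem_image.mp hi
  rw [Finset.mem_range] at hk
  rw [gap_config hα1 hαp hn hL hN hT hTc x hk, gfun]
  split
  · exact Or.inl rfl
  · exact Or.inr rfl

end ConfigLemmas

lemma config_inj (hα1 : 1 ≤ α) (hαp : α ≤ p) (hn : n * (p - α + 1) = N)
    (hL : L = p * N) (hN : 1 ≤ N) {T T' : Finset ℕ}
    (hT : T ⊆ Finset.range N) (hTc : T.card = n)
    (hT' : T' ⊆ Finset.range N) (hTc' : T'.card = n) (x : ZMod L)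
    (heq : config N α p x T = config N α p x T') : T = T' := by
  have hps : ∀ k, k ≤ N → psum α p T k = psum α p T' k ∧
      (∀ j, j < k → (j ∈ T ↔ j ∈ T')) := by
    intro k
    induction k with
    | zero => intro _; exact ⟨by simp [psum], by omega⟩
    | succ k ih =>
      intro hk
      obtain ⟨hpe, hmem⟩ := ih (by omega)
      have hk' : k < N := by omega
      have hg : gfun α p T k = gfun α p T' k := by
        have h1 := gap_config hα1 hαp hn hL hN hT hTc x hk'
        have h2 := gap_config hα1 hαp hn hL hN hT' hTc' x hk'
        rw [← h1, ← h2, hpe, heq]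
      have hmemk : k ∈ T ↔ k ∈ T' := by
        constructor
        · intro h1
          by_contra h2
          rw [gfun, gfun, if_pos h1, if_neg h2] at hg
          omega
        · intro h2
          by_contra h1
          rw [gfun, gfun, if_neg h1, if_pos h2] at hg
          omega
      refine ⟨by rw [psum_succ, psum_succ, hpe, hg], ?_⟩
      intro j hj
      rcases Nat.lt_or_ge j k with h | h
      · exact hmem j h
      · have : j = k := by omega
        subst this
        exact hmemk
  ext j
  rcases Nat.lt_or_ge j N with h | h
  · exact (hps N le_rfl).2 j h
  · constructor
    · intro hj
      exact absurd (Finset.mem_range.mp (hT hj)) (by omega)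
    · intro hj
      exact absurd (Finset.mem_range.mp (hT' hj)) (by omega)

lemma exists_T (hα1 : 1 ≤ α) (hαp : α ≤ p) (hn : n * (p - α + 1) = N)
    (hL : L = p * N) (hN : 1 ≤ N) {S : Finset (ZMod L)} (hS : S.card = N)
    (hgaps : ∀ i ∈ S, gap S i = α ∨ gap S i = p + 1) {x : ZMod L} (hx : x ∈ S) :
    ∃ T : Finset ℕ, T ⊆ Finset.range N ∧ T.card = n ∧ config N α p x T = S := by
  set T := (Finset.range N).filter (fun k => gap S (walk S x k) = α) with hTdef
  have hT : T ⊆ Finset.range N := Finset.filter_subset _ _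
  have hgf : ∀ k, k < N → gfun α p T k = gap S (walk S x k) := by
    intro k hk
    by_cases h : gap S (walk S x k) = α
    · have : k ∈ T := Finset.mem_filter.mpr ⟨Finset.mem_range.mpr hk, h⟩
      rw [gfun, if_pos this, h]
    · have : k ∉ T := fun hc => h (Finset.mem_filter.mp hc).2
      rw [gfun, if_neg this]
      rcases hgaps _ (walk_mem hx k) with h' | h'
      · exact absurd h' h
      · exact h'.symm
  have hps : ∀ k, k ≤ N → psum α p T k = csum S x k := by
    intro k
    induction k with
    | zero => intro _; simp [psum, csum]
    | succ k ih =>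
      intro hk
      have h1 : csum S x (k+1) = csum S x k + gap S (walk S x k) := rfl
      rw [psum_succ, h1, ih (by omega), hgf k (by omega)]
  have hconfig : config N α p x T = S := by
    have hcong : ∀ k ∈ Finset.range N,
        x + ((psum α p T k : ℕ) : ZMod L) = walk S x k := by
      intro k hk
      rw [Finset.mem_range] at hk
      rw [hps k (by omega), ← walk_eq]
    rw [config, Finset.image_congr hcong]
    have := image_walk_eq hx
    rwa [hS] at this
  have hTc : T.card = n := by
    have h1 := filter_card_eq hαp hL hS hN hgaps
    have himg : T.image (walk S x) = S.filter (fun i => gap S i = α) := by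
      ext y
      constructor
      · intro hy
        obtain ⟨k, hk, rfl⟩ := Finset.mem_image.mp hy
        obtain ⟨hk1, hk2⟩ := Finset.mem_filter.mp hk
        exact Finset.mem_filter.mpr ⟨walk_mem hx _, hk2⟩
      · intro hy
        obtain ⟨hy1, hy2⟩ := Finset.mem_filter.mp hy
        have : y ∈ (Finset.range S.card).image (walk S x) := by
          rw [image_walk_eq hx]; exact hy1
        obtain ⟨k, hk, rfl⟩ := Finset.mem_image.mp this
        rw [Finset.mem_range, hS] at hk
        refine Finset.mem_image.mpr ⟨k, ?_, rfl⟩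
        exact Finset.mem_filter.mpr ⟨Finset.mem_range.mpr hk, hy2⟩
    have hinj : ∀ a ∈ T, ∀ b ∈ T, walk S x a = walk S x b → a = b := by
      intro a ha b hb hab
      have ha' := Finset.mem_range.mp (hT ha)
      have hb' := Finset.mem_range.mp (hT hb)
      exact walk_injOn hx (by omega) (by omega) hab
    have := Finset.card_image_of_injOn (s := T) (f := walk S x)
      (fun a ha b hb => hinj a ha b hb)
    rw [himg] at this
    have h2 : T.card * (p - α + 1) = n * (p - α + 1) := by
      rw [this] at h1
      rw [h1, hn]
    exact Nat.eq_of_mul_eq_mul_right (by omega) h2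
  exact ⟨T, hT, hTc, hconfig⟩

lemma fiber_card (hα1 : 1 ≤ α) (hαp : α ≤ p) (hn : n * (p - α + 1) = N)
    (hL : L = p * N) (hN : 1 ≤ N) {S : Finset (ZMod L)} (hS : S.card = N)
    (hgaps : ∀ i ∈ S, gap S i = α ∨ gap S i = p + 1) :
    (((Finset.univ : Finset (ZMod L)) ×ˢ (Finset.range N).powersetCard n).filter
      (fun z => config N α p z.1 z.2 = S)).card = N := by
  suffices h : (((Finset.univ : Finset (ZMod L)) ×ˢ (Finset.range N).powersetCard n).filter
      (fun z => config N α p z.1 z.2 = S)).card = S.card by rw [h, hS]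
  apply Finset.card_bij (fun z _ => z.1)
  · rintro ⟨x, T⟩ hz
    obtain ⟨hz1, hz2⟩ := Finset.mem_filter.mp hz
    obtain ⟨hT, hTc⟩ := Finset.mem_powersetCard.mp (Finset.mem_product.mp hz1).2
    have := base_mem_config hα1 hαp hn hL hN hT hTc x
    rwa [hz2] at this
  · rintro ⟨x, T⟩ hz ⟨x', T'⟩ hz' hxx
    obtain ⟨hz1, hz2⟩ := Finset.mem_filter.mp hz
    obtain ⟨hz1', hz2'⟩ := Finset.mem_filter.mp hz'
    obtain ⟨hT, hTc⟩ := Finset.mem_powersetCard.mp (Finset.mem_product.mp hz1).2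
    obtain ⟨hT', hTc'⟩ := Finset.mem_powersetCard.mp (Finset.mem_product.mp hz1').2
    simp only at hxx
    subst hxx
    have hTT : T = T' := by
      apply config_inj hα1 hαp hn hL hN hT hTc hT' hTc' x
      rw [hz2, hz2']
    rw [hTT]
  · intro y hy
    obtain ⟨T, hT, hTc, hconfig⟩ := exists_T hα1 hαp hn hL hN hS hgaps hy
    refine ⟨(y, T), ?_, rfl⟩
    refine Finset.mem_filter.mpr ⟨?_, hconfig⟩
    exact Finset.mem_product.mpr ⟨Finset.mem_univ _,
      Finset.mem_powersetCard.mpr ⟨hT, hTc⟩⟩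

lemma card_Sfin (hα1 : 1 ≤ α) (hαp : α ≤ p) (hn : n * (p - α + 1) = N)
    (hL : L = p * N) (hN : 1 ≤ N) (hp : 2 ≤ p) :
    ((Finset.univ : Finset (Finset (ZMod L))).filter
      (fun S => S.card = N ∧ ∀ i ∈ S, gap S i = α ∨ gap S i = p + 1)).card
      = p * Nat.choose N n := by
  classical
  set D := (Finset.univ : Finset (ZMod L)) ×ˢ (Finset.range N).powersetCard n with hD
  set F := ((Finset.univ : Finset (Finset (ZMod L))).filter
      (fun S => S.card = N ∧ ∀ i ∈ S, gap S i = α ∨ gap S i = p + 1)) with hF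
  have hmap : ∀ z ∈ D, config N α p z.1 z.2 ∈ F := by
    rintro ⟨x, T⟩ hz
    obtain ⟨hT, hTc⟩ := Finset.mem_powersetCard.mp (Finset.mem_product.mp hz).2
    refine Finset.mem_filter.mpr ⟨Finset.mem_univ _, ?_, ?_⟩
    · exact config_card hα1 hαp hn hL hN hT hTc x
    · exact config_gaps hα1 hαp hn hL hN hT hTc x
  have h1 := Finset.card_eq_sum_card_fiberwise hmap
  have h2 : ∀ S ∈ F, (D.filter (fun z => config N α p z.1 z.2 = S)).card = N := by
    intro S hSF
    obtain ⟨_, hS, hgaps⟩ := Finset.mem_filter.mp hSF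
    exact fiber_card hα1 hαp hn hL hN hS hgaps
  rw [Finset.sum_congr rfl h2, Finset.sum_const, smul_eq_mul] at h1
  have hDcard : D.card = L * Nat.choose N n := by
    rw [hD, Finset.card_product, Finset.card_powersetCard, Finset.card_range,
      Finset.card_univ, ZMod.card]
  rw [hDcard] at h1
  have key : N * (p * Nat.choose N n) = N * F.card := by
    calc N * (p * Nat.choose N n) = (p * N) * Nat.choose N n := by ring
      _ = L * Nat.choose N n := by rw [← hL]
      _ = F.card * N := h1
      _ = N * F.card := by ring
  exact (Nat.eq_of_mul_eq_mul_left (by omega) key).symm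

end
end DPD

attribute [local instance] Classical.propDecidable

/-- Degeneracy of the dominant phase at critical density `Q = 1/p` in the case
`2α > p`: under the dominance condition, the number of `N`-element configurations on
`L = p·N` sites achieving the minimal energy `N·U_α/(p−α+1)` is exactly
`p · C(N, N/(p−α+1))`. -/
theorem dominant_phase_degeneracy (p N L : ℕ) (hp : 2 ≤ p) (U : ℕ → ℝ)
    (hU : ∀ m : ℕ, 1 ≤ m → m ≤ p → 0 < U m)
    (α : ℕ) (hα1 : 1 ≤ α) (hαp : α ≤ p) (h2α : p < 2 * α)
    (hdom : ∀ β : ℕ, 1 ≤ β → β ≤ p → β ≠ α →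
      U α < (((p : ℝ) - (α : ℝ) + 1) / ((p : ℝ) - (β : ℝ) + 1)) * U β)
    (hN : 1 ≤ N) (hdvd : (p - α + 1) ∣ N) (hL : L = p * N) :
    {S : Finset (ZMod L) | S.card = N ∧
        energy L p U S = (N : ℝ) * U α / ((p : ℝ) - (α : ℝ) + 1)}.ncard =
      p * Nat.choose N (N / (p - α + 1)) := by
  haveI : NeZero L := ⟨by rw [hL]; exact Nat.mul_ne_zero (by omega) (by omega)⟩
  have hn : (N / (p - α + 1)) * (p - α + 1) = N := Nat.div_mul_cancel hdvd
  have hset : {S : Finset (ZMod L) | S.card = N ∧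
      energy L p U S = (N : ℝ) * U α / ((p : ℝ) - (α : ℝ) + 1)}
      = ↑((Finset.univ : Finset (Finset (ZMod L))).filter
          (fun S => S.card = N ∧ ∀ i ∈ S, DPD.gap S i = α ∨ DPD.gap S i = p + 1)) := by
    ext S
    simp only [Set.mem_setOf_eq, Finset.coe_filter, Finset.mem_univ, true_and,
      Set.mem_setOf_eq]
    constructor
    · rintro ⟨hc, hE⟩
      exact ⟨hc, DPD.gaps_of_energy_eq hp hU hα1 hαp hdom hN hL hc hE⟩
    · rintro ⟨hc, hg⟩
      exact ⟨hc, DPD.energy_of_gaps hαp h2α hα1 hL hN hc hg⟩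
  rw [hset, Set.ncard_coe_finset]
  exact DPD.card_Sfin hα1 hαp hn hL hN hp
end

section
/- Let p = 3, L = 24, and let U_1, U_2, U_3 ≥ 0. Then the minimum of E(S) over all 12-element subsets S ⊆ ZMod 24 equals min{12·U_2, 6·(U_1 + U_3), 4·(2·U_1 + U_2)}. (These three values are the total energies of the periodic configurations with unit cells •○, ••○○, and •••○○○ respectively; the paper's brute-force analysis shows these are the only charge-density-wave ground states for p = 3 at half filling.) -/
/-- Indicator function of a configuration. -/
def chi (S : Finset (ZMod 24)) : ZMod 24 → ℝ := fun i => if i ∈ S then 1 else 0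

lemma chi_nonneg (S : Finset (ZMod 24)) (i : ZMod 24) : 0 ≤ chi S i := by
  unfold chi; split_ifs <;> norm_num

lemma chi_zero_or_one (S : Finset (ZMod 24)) (i : ZMod 24) : chi S i = 0 ∨ chi S i = 1 := by
  unfold chi; split_ifs <;> simp

lemma sum_range_univ (g : ZMod 24 → ℝ) :
    ∑ i ∈ Finset.range 24, g (i : ZMod 24) = ∑ i : ZMod 24, g i := by
  apply Finset.sum_nbij' (fun i => ((i : ℕ) : ZMod 24)) (fun a => a.val)
  · intros; exact Finset.mem_univ _
  · intro a _; exact Finset.mem_range.2 (ZMod.val_lt a)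
  · intro i hi; exact ZMod.val_cast_of_lt (Finset.mem_range.1 hi)
  · intro a _; exact ZMod.natCast_rightInverse a
  · intros; rfl

lemma sum_shift (g : ZMod 24 → ℝ) : ∑ i : ZMod 24, g (i + 1) = ∑ i : ZMod 24, g i :=
  Fintype.sum_equiv (Equiv.addRight 1) _ _ (fun _ => rfl)

lemma card_zmod24 : (Finset.univ : Finset (ZMod 24)).card = 24 := by decide

lemma energy_eq (U : ℕ → ℝ) (S : Finset (ZMod 24)) :
    energy 24 3 U S = ∑ i : ZMod 24,
      (U 1 * (chi S i * chi S (i+1)) + U 2 * (chi S i * chi S (i+2))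
        + U 3 * (chi S i * chi S (i+3))) := by
  rw [energy, ← sum_range_univ (fun i => (U 1 * (chi S i * chi S (i+1))
    + U 2 * (chi S i * chi S (i+2)) + U 3 * (chi S i * chi S (i+3))))]
  apply Finset.sum_congr rfl
  intro i _
  rw [show (Finset.Icc 1 3 : Finset ℕ) = {1,2,3} by decide]
  simp [chi, Finset.sum_insert, Finset.mem_insert]
  ring

lemma energy_split (U : ℕ → ℝ) (S : Finset (ZMod 24)) :
    energy 24 3 U S = U 1 * (∑ i : ZMod 24, chi S i * chi S (i+1))
      + U 2 * (∑ i : ZMod 24, chi S i * chi S (i+2))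
      + U 3 * (∑ i : ZMod 24, chi S i * chi S (i+3)) := by
  rw [energy_eq]
  rw [Finset.sum_add_distrib, Finset.sum_add_distrib, ← Finset.mul_sum, ← Finset.mul_sum,
    ← Finset.mul_sum]

lemma sum_chi (S : Finset (ZMod 24)) (m : ZMod 24) :
    ∑ i : ZMod 24, chi S i * chi S (i+m)
      = ((Finset.univ.filter (fun i : ZMod 24 => i ∈ S ∧ i + m ∈ S)).card : ℝ) := by
  rw [Finset.card_filter]
  push_cast
  apply Finset.sum_congr rfl
  intro i _
  simp only [chi]
  split_ifs with h1 h2 <;> simp_all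

lemma sum_chi_one (S : Finset (ZMod 24)) : ∑ i : ZMod 24, chi S i = (S.card : ℝ) := by
  simp [chi, Finset.sum_ite_mem]

/-- Certificate inequality 1: `n₁ + n₂ + n₃ ≥ 12` at half filling. -/
lemma ineq1 (x : ZMod 24 → ℝ) (hx : ∀ i, x i = 0 ∨ x i = 1)
    (hs : ∑ i : ZMod 24, x i = 12) :
    12 ≤ (∑ i : ZMod 24, x i * x (i+1)) + (∑ i : ZMod 24, x i * x (i+2))
        + ∑ i : ZMod 24, x i * x (i+3) := by
  set H : ZMod 24 → ℝ := fun i => -2 * x i - x (i+1) - x (i+2) + x i * x (i+2) with hH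
  have key : ∀ i : ZMod 24,
      0 ≤ (x i * x (i+1) + x i * x (i+2) + x i * x (i+3)) - 3 * x i + 1 + H (i+1) - H i := by
    intro i
    have e2 : i + 1 + 1 = i + 2 := by ring
    have e3 : i + 1 + 2 = i + 3 := by ring
    simp only [hH, e2, e3]
    rcases hx i with h0|h0 <;> rcases hx (i+1) with h1|h1 <;> rcases hx (i+2) with h2|h2 <;>
      rcases hx (i+3) with h3|h3 <;> rw [h0, h1, h2, h3] <;> norm_num
  have hsum : 0 ≤ ∑ i : ZMod 24,
      ((x i * x (i+1) + x i * x (i+2) + x i * x (i+3)) - 3 * x i + 1 + H (i+1) - H i) :=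
    Finset.sum_nonneg fun i _ => key i
  have htel : ∑ i : ZMod 24, H (i+1) = ∑ i : ZMod 24, H i := sum_shift H
  have expand : ∑ i : ZMod 24,
      ((x i * x (i+1) + x i * x (i+2) + x i * x (i+3)) - 3 * x i + 1 + H (i+1) - H i)
      = (∑ i : ZMod 24, x i * x (i+1)) + (∑ i : ZMod 24, x i * x (i+2))
        + (∑ i : ZMod 24, x i * x (i+3)) - 3 * (∑ i : ZMod 24, x i) + 24
        + (∑ i : ZMod 24, H (i+1)) - ∑ i : ZMod 24, H i := by
    simp only [Finset.sum_sub_distrib, Finset.sum_add_distrib, Finset.mul_sum,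
      Finset.sum_const, card_zmod24, nsmul_eq_mul]
    ring
  rw [expand, htel, hs] at hsum
  linarith

/-- Certificate inequality 2: `2n₁ + n₂ ≥ 12` at half filling. -/
lemma ineq2 (x : ZMod 24 → ℝ) (hx : ∀ i, x i = 0 ∨ x i = 1)
    (hs : ∑ i : ZMod 24, x i = 12) :
    12 ≤ 2 * (∑ i : ZMod 24, x i * x (i+1)) + ∑ i : ZMod 24, x i * x (i+2) := by
  set H : ZMod 24 → ℝ := fun i => -2 * x i - x (i+1) + x i * x (i+1) with hH
  have key : ∀ i : ZMod 24,
      0 ≤ (2 * (x i * x (i+1)) + x i * x (i+2)) - 3 * x i + 1 + H (i+1) - H i := by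
    intro i
    have e2 : i + 1 + 1 = i + 2 := by ring
    simp only [hH, e2]
    rcases hx i with h0|h0 <;> rcases hx (i+1) with h1|h1 <;> rcases hx (i+2) with h2|h2 <;>
      rw [h0, h1, h2] <;> norm_num
  have hsum : 0 ≤ ∑ i : ZMod 24,
      ((2 * (x i * x (i+1)) + x i * x (i+2)) - 3 * x i + 1 + H (i+1) - H i) :=
    Finset.sum_nonneg fun i _ => key i
  have htel : ∑ i : ZMod 24, H (i+1) = ∑ i : ZMod 24, H i := sum_shift H
  have expand : ∑ i : ZMod 24,
      ((2 * (x i * x (i+1)) + x i * x (i+2)) - 3 * x i + 1 + H (i+1) - H i)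
      = 2 * (∑ i : ZMod 24, x i * x (i+1)) + (∑ i : ZMod 24, x i * x (i+2))
        - 3 * (∑ i : ZMod 24, x i) + 24
        + (∑ i : ZMod 24, H (i+1)) - ∑ i : ZMod 24, H i := by
    simp only [Finset.sum_sub_distrib, Finset.sum_add_distrib, Finset.mul_sum,
      Finset.sum_const, card_zmod24, nsmul_eq_mul]
    ring
  rw [expand, htel, hs] at hsum
  linarith

/-- Certificate inequality 3: `3n₂ + 2n₃ ≥ 12` at half filling. -/
lemma ineq3 (x : ZMod 24 → ℝ) (hx : ∀ i, x i = 0 ∨ x i = 1)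
    (hs : ∑ i : ZMod 24, x i = 12) :
    12 ≤ 3 * (∑ i : ZMod 24, x i * x (i+2)) + 2 * ∑ i : ZMod 24, x i * x (i+3) := by
  set H : ZMod 24 → ℝ := fun i =>
    -3 * x i - x (i+1) - 2 * x (i+2) - 2 * (x i * x (i+1)) + 3 * (x i * x (i+2))
      - x (i+1) * x (i+2) with hH
  have key : ∀ i : ZMod 24,
      0 ≤ (3 * (x i * x (i+2)) + 2 * (x i * x (i+3))) - 5 * x i + 2 + H (i+1) - H i := by
    intro i
    have e2 : i + 1 + 1 = i + 2 := by ring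
    have e3 : i + 1 + 2 = i + 3 := by ring
    simp only [hH, e2, e3]
    rcases hx i with h0|h0 <;> rcases hx (i+1) with h1|h1 <;> rcases hx (i+2) with h2|h2 <;>
      rcases hx (i+3) with h3|h3 <;> rw [h0, h1, h2, h3] <;> norm_num
  have hsum : 0 ≤ ∑ i : ZMod 24,
      ((3 * (x i * x (i+2)) + 2 * (x i * x (i+3))) - 5 * x i + 2 + H (i+1) - H i) :=
    Finset.sum_nonneg fun i _ => key i
  have htel : ∑ i : ZMod 24, H (i+1) = ∑ i : ZMod 24, H i := sum_shift H
  have expand : ∑ i : ZMod 24,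
      ((3 * (x i * x (i+2)) + 2 * (x i * x (i+3))) - 5 * x i + 2 + H (i+1) - H i)
      = 3 * (∑ i : ZMod 24, x i * x (i+2)) + 2 * (∑ i : ZMod 24, x i * x (i+3))
        - 5 * (∑ i : ZMod 24, x i) + 48
        + (∑ i : ZMod 24, H (i+1)) - ∑ i : ZMod 24, H i := by
    simp only [Finset.sum_sub_distrib, Finset.sum_add_distrib, Finset.mul_sum,
      Finset.sum_const, card_zmod24, nsmul_eq_mul]
    ring
  rw [expand, htel, hs] at hsum
  linarith

/-- Linear-programming step: the three certificate inequalities imply the lower bound. -/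
lemma lpCert (U1 U2 U3 a b c : ℝ) (hU1 : 0 ≤ U1) (hU2 : 0 ≤ U2) (hU3 : 0 ≤ U3)
    (ha : 0 ≤ a) (hb : 0 ≤ b) (hc : 0 ≤ c)
    (h1 : 12 ≤ a + b + c) (h2 : 12 ≤ 2*a + b) (h3 : 12 ≤ 3*b + 2*c) :
    min (12 * U2) (min (6 * (U1 + U3)) (4 * (2 * U1 + U2))) ≤ U1*a + U2*b + U3*c := by
  rcases le_total (2*U2) (U1+U3) with h | h
  · rcases le_total U3 U2 with h' | h'
    · refine le_trans (min_le_left _ _) ?_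
      linarith [mul_nonneg hU3 (by linarith : (0:ℝ) ≤ a+b+c-12),
        mul_nonneg (by linarith : (0:ℝ) ≤ U2-U3) (by linarith : (0:ℝ) ≤ 2*a+b-12),
        mul_nonneg (by linarith : (0:ℝ) ≤ U1+U3-2*U2) ha]
    · rcases le_total U2 U1 with h'' | h''
      · refine le_trans (min_le_left _ _) ?_
        linarith [mul_nonneg hU2 (by linarith : (0:ℝ) ≤ a+b+c-12),
          mul_nonneg (by linarith : (0:ℝ) ≤ U1-U2) ha,
          mul_nonneg (by linarith : (0:ℝ) ≤ U3-U2) hc]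
      · refine le_trans (le_trans (min_le_right _ _) (min_le_right _ _)) ?_
        linarith [mul_nonneg hU1 (by linarith : (0:ℝ) ≤ a+b+c-12),
          mul_nonneg (by linarith : (0:ℝ) ≤ (U2-U1)/3) (by linarith : (0:ℝ) ≤ 3*b+2*c-12),
          mul_nonneg (by linarith : (0:ℝ) ≤ U3-(U1+2*U2)/3) hc]
  · rcases le_total (U1 + 3*U3) (2*U2) with h' | h'
    · refine le_trans (le_trans (min_le_right _ _) (min_le_left _ _)) ?_
      linarith [mul_nonneg (by linarith : (0:ℝ) ≤ U1/2) (by linarith : (0:ℝ) ≤ 2*a+b-12),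
        mul_nonneg (by linarith : (0:ℝ) ≤ U3/2) (by linarith : (0:ℝ) ≤ 3*b+2*c-12),
        mul_nonneg (by linarith : (0:ℝ) ≤ U2-(U1+3*U3)/2) hb]
    · rcases le_total (3*U3) (U1+2*U2) with h'' | h''
      · refine le_trans (le_trans (min_le_right _ _) (min_le_left _ _)) ?_
        linarith [mul_nonneg (by linarith : (0:ℝ) ≤ (U1+3*U3-2*U2)/2)
            (by linarith : (0:ℝ) ≤ a+b+c-12),
          mul_nonneg (by linarith : (0:ℝ) ≤ (U1+2*U2-3*U3)/4) (by linarith : (0:ℝ) ≤ 2*a+b-12),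
          mul_nonneg (by linarith : (0:ℝ) ≤ (2*U2-U1-U3)/4) (by linarith : (0:ℝ) ≤ 3*b+2*c-12)]
      · refine le_trans (le_trans (min_le_right _ _) (min_le_right _ _)) ?_
        linarith [mul_nonneg hU1 (by linarith : (0:ℝ) ≤ a+b+c-12),
          mul_nonneg (by linarith : (0:ℝ) ≤ (U2-U1)/3) (by linarith : (0:ℝ) ≤ 3*b+2*c-12),
          mul_nonneg (by linarith : (0:ℝ) ≤ U3-(U1+2*U2)/3) hc]

/-- The `•○` configuration. -/
def cfg1 : Finset (ZMod 24) := {0,2,4,6,8,10,12,14,16,18,20,22}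
/-- The `••○○` configuration. -/
def cfg2 : Finset (ZMod 24) := {0,1,4,5,8,9,12,13,16,17,20,21}
/-- The `•••○○○` configuration. -/
def cfg3 : Finset (ZMod 24) := {0,1,2,6,7,8,12,13,14,18,19,20}

/-- Half filling with interaction range `p = 3` on `L = 24` sites: the minimum of the
energy over all `12`-element configurations equals
`min{12·U₂, 6·(U₁+U₃), 4·(2U₁+U₂)}` — the energies of the periodic configurations
with unit cells `•○`, `••○○`, and `•••○○○`. -/
theorem half_filling_p3 (U : ℕ → ℝ) (hU1 : 0 ≤ U 1) (hU2 : 0 ≤ U 2) (hU3 : 0 ≤ U 3) :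
    IsLeast {x : ℝ | ∃ S : Finset (ZMod 24), S.card = 12 ∧ energy 24 3 U S = x}
      (min (12 * U 2) (min (6 * (U 1 + U 3)) (4 * (2 * U 1 + U 2)))) := by
  constructor
  · -- membership: the minimum is achieved by one of the three configurations
    have e1 : energy 24 3 U cfg1 = 12 * U 2 := by
      rw [energy_split, sum_chi, sum_chi, sum_chi,
        show (Finset.univ.filter (fun i : ZMod 24 => i ∈ cfg1 ∧ i + 1 ∈ cfg1)).card = 0 by decide,
        show (Finset.univ.filter (fun i : ZMod 24 => i ∈ cfg1 ∧ i + 2 ∈ cfg1)).card = 12 by decide,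
        show (Finset.univ.filter (fun i : ZMod 24 => i ∈ cfg1 ∧ i + 3 ∈ cfg1)).card = 0 by decide]
      push_cast; ring
    have e2 : energy 24 3 U cfg2 = 6 * (U 1 + U 3) := by
      rw [energy_split, sum_chi, sum_chi, sum_chi,
        show (Finset.univ.filter (fun i : ZMod 24 => i ∈ cfg2 ∧ i + 1 ∈ cfg2)).card = 6 by decide,
        show (Finset.univ.filter (fun i : ZMod 24 => i ∈ cfg2 ∧ i + 2 ∈ cfg2)).card = 0 by decide,
        show (Finset.univ.filter (fun i : ZMod 24 => i ∈ cfg2 ∧ i + 3 ∈ cfg2)).card = 6 by decide]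
      push_cast; ring
    have e3 : energy 24 3 U cfg3 = 4 * (2 * U 1 + U 2) := by
      rw [energy_split, sum_chi, sum_chi, sum_chi,
        show (Finset.univ.filter (fun i : ZMod 24 => i ∈ cfg3 ∧ i + 1 ∈ cfg3)).card = 8 by decide,
        show (Finset.univ.filter (fun i : ZMod 24 => i ∈ cfg3 ∧ i + 2 ∈ cfg3)).card = 4 by decide,
        show (Finset.univ.filter (fun i : ZMod 24 => i ∈ cfg3 ∧ i + 3 ∈ cfg3)).card = 0 by decide]
      push_cast; ring
    rcases min_cases (12 * U 2) (min (6 * (U 1 + U 3)) (4 * (2 * U 1 + U 2))) with ⟨hm, _⟩ | ⟨hm, _⟩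
    · rw [hm]; exact ⟨cfg1, by decide, e1⟩
    · rw [hm]
      rcases min_cases (6 * (U 1 + U 3)) (4 * (2 * U 1 + U 2)) with ⟨hm', _⟩ | ⟨hm', _⟩
      · rw [hm']; exact ⟨cfg2, by decide, e2⟩
      · rw [hm']; exact ⟨cfg3, by decide, e3⟩
  · -- lower bound
    rintro x ⟨S, hcard, rfl⟩
    rw [energy_split]
    have hx := chi_zero_or_one S
    have hs : ∑ i : ZMod 24, chi S i = 12 := by rw [sum_chi_one, hcard]; norm_num
    have ha : 0 ≤ ∑ i : ZMod 24, chi S i * chi S (i+1) :=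
      Finset.sum_nonneg fun i _ => mul_nonneg (chi_nonneg S i) (chi_nonneg S _)
    have hb : 0 ≤ ∑ i : ZMod 24, chi S i * chi S (i+2) :=
      Finset.sum_nonneg fun i _ => mul_nonneg (chi_nonneg S i) (chi_nonneg S _)
    have hc : 0 ≤ ∑ i : ZMod 24, chi S i * chi S (i+3) :=
      Finset.sum_nonneg fun i _ => mul_nonneg (chi_nonneg S i) (chi_nonneg S _)
    exact lpCert (U 1) (U 2) (U 3) _ _ _ hU1 hU2 hU3 ha hb hc
      (ineq1 (chi S) hx hs) (ineq2 (chi S) hx hs) (ineq3 (chi S) hx hs)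
end

section
/- There exist reals U_1, U_2, U_3, U_4 > 0 such that, for p = 4 and L = 24, the configuration S* = {8j, 8j+1, 8j+3, 8j+6 : j = 0, 1, 2} ⊆ ZMod 24 (periodic repetition of the unit cell ••○•○○•○) satisfies E(S*) = 3·(U_1 + 2·U_2 + 3·U_3), E(S*) ≤ E(S) for every 12-element subset S ⊆ ZMod 24, and E(S*) is strictly smaller than the energies 12·(U_2 + U_4), 6·(U_1 + U_3 + 2·U_4), 4·(2·U_1 + U_2 + U_4), and 3·(3·U_1 + 2·U_2 + U_3) of the configurations with unit cells •○, ••○○, •••○○○, and ••••○○○○. -/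
/-- The configuration `S* = {8j, 8j+1, 8j+3, 8j+6 : j = 0, 1, 2} ⊆ ZMod 24`:
the periodic repetition of the unit cell `••○•○○•○`. -/
def Sstar : Finset (ZMod 24) :=
  ((Finset.range 3) ×ˢ ({0, 1, 3, 6} : Finset ℕ)).image
    fun q => ((8 * q.1 + q.2 : ℕ) : ZMod 24)

/-- The chosen potentials: `U₁ = 8`, `U₂ = 5`, `U₃ = 2`, `U₄ = 3`. -/
noncomputable def Ugs : ℕ → ℝ := fun m => if m = 1 then 8 else if m = 2 then 5 else if m = 3 then 2 else 3

/-- Real indicator of occupation of site `i` (as a natural number, reduced mod 24). -/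
def X (S : Finset (ZMod 24)) (i : ℕ) : ℝ := if ((i : ℕ) : ZMod 24) ∈ S then 1 else 0

set_option maxHeartbeats 1000000 in
lemma Fnn (a b c d e : ℝ) (ha : a = 0 ∨ a = 1) (hb : b = 0 ∨ b = 1) (hc : c = 0 ∨ c = 1)
    (hd : d = 0 ∨ d = 1) (he : e = 0 ∨ e = 1) :
    0 ≤ ((a + b + c + d + e) - 2) * ((a + b + c + d + e) - 3)
      + (-a + b + c + d - e) * ((-a + b + c + d - e) - 1) / 2 := by
  rcases ha with rfl|rfl <;> rcases hb with rfl|rfl <;> rcases hc with rfl|rfl <;>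
    rcases hd with rfl|rfl <;> rcases he with rfl|rfl <;> norm_num

set_option maxHeartbeats 4000000 in
lemma core (x : ℕ → ℝ) (hx : ∀ i, x i = 0 ∨ x i = 1)
    (h24 : x 24 = x 0) (h25 : x 25 = x 1) (h26 : x 26 = x 2) (h27 : x 27 = x 3)
    (hsum : x 0 + x 1 + x 2 + x 3 + x 4 + x 5 + x 6 + x 7 + x 8 + x 9 + x 10 + x 11 + x 12 + x 13 + x 14 + x 15 + x 16 + x 17 + x 18 + x 19 + x 20 + x 21 + x 22 + x 23 = 12) :
    72 ≤ ∑ i ∈ Finset.range 24,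
      (8 * x i * x (i+1) + 5 * x i * x (i+2) + 2 * x i * x (i+3) + 3 * x i * x (i+4)) := by
  have sq : ∀ i, x i ^ 2 = x i := fun i => by rcases hx i with h|h <;> rw [h] <;> ring
  have q0 := Fnn (x 0) (x 1) (x 2) (x 3) (x 4) (hx 0) (hx 1) (hx 2) (hx 3) (hx 4)
  have q1 := Fnn (x 1) (x 2) (x 3) (x 4) (x 5) (hx 1) (hx 2) (hx 3) (hx 4) (hx 5)
  have q2 := Fnn (x 2) (x 3) (x 4) (x 5) (x 6) (hx 2) (hx 3) (hx 4) (hx 5) (hx 6)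
  have q3 := Fnn (x 3) (x 4) (x 5) (x 6) (x 7) (hx 3) (hx 4) (hx 5) (hx 6) (hx 7)
  have q4 := Fnn (x 4) (x 5) (x 6) (x 7) (x 8) (hx 4) (hx 5) (hx 6) (hx 7) (hx 8)
  have q5 := Fnn (x 5) (x 6) (x 7) (x 8) (x 9) (hx 5) (hx 6) (hx 7) (hx 8) (hx 9)
  have q6 := Fnn (x 6) (x 7) (x 8) (x 9) (x 10) (hx 6) (hx 7) (hx 8) (hx 9) (hx 10)
  have q7 := Fnn (x 7) (x 8) (x 9) (x 10) (x 11) (hx 7) (hx 8) (hx 9) (hx 10) (hx 11)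
  have q8 := Fnn (x 8) (x 9) (x 10) (x 11) (x 12) (hx 8) (hx 9) (hx 10) (hx 11) (hx 12)
  have q9 := Fnn (x 9) (x 10) (x 11) (x 12) (x 13) (hx 9) (hx 10) (hx 11) (hx 12) (hx 13)
  have q10 := Fnn (x 10) (x 11) (x 12) (x 13) (x 14) (hx 10) (hx 11) (hx 12) (hx 13) (hx 14)
  have q11 := Fnn (x 11) (x 12) (x 13) (x 14) (x 15) (hx 11) (hx 12) (hx 13) (hx 14) (hx 15)
  have q12 := Fnn (x 12) (x 13) (x 14) (x 15) (x 16) (hx 12) (hx 13) (hx 14) (hx 15) (hx 16)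
  have q13 := Fnn (x 13) (x 14) (x 15) (x 16) (x 17) (hx 13) (hx 14) (hx 15) (hx 16) (hx 17)
  have q14 := Fnn (x 14) (x 15) (x 16) (x 17) (x 18) (hx 14) (hx 15) (hx 16) (hx 17) (hx 18)
  have q15 := Fnn (x 15) (x 16) (x 17) (x 18) (x 19) (hx 15) (hx 16) (hx 17) (hx 18) (hx 19)
  have q16 := Fnn (x 16) (x 17) (x 18) (x 19) (x 20) (hx 16) (hx 17) (hx 18) (hx 19) (hx 20)
  have q17 := Fnn (x 17) (x 18) (x 19) (x 20) (x 21) (hx 17) (hx 18) (hx 19) (hx 20) (hx 21)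
  have q18 := Fnn (x 18) (x 19) (x 20) (x 21) (x 22) (hx 18) (hx 19) (hx 20) (hx 21) (hx 22)
  have q19 := Fnn (x 19) (x 20) (x 21) (x 22) (x 23) (hx 19) (hx 20) (hx 21) (hx 22) (hx 23)
  have q20 := Fnn (x 20) (x 21) (x 22) (x 23) (x 0) (hx 20) (hx 21) (hx 22) (hx 23) (hx 0)
  have q21 := Fnn (x 21) (x 22) (x 23) (x 0) (x 1) (hx 21) (hx 22) (hx 23) (hx 0) (hx 1)
  have q22 := Fnn (x 22) (x 23) (x 0) (x 1) (x 2) (hx 22) (hx 23) (hx 0) (hx 1) (hx 2)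
  have q23 := Fnn (x 23) (x 0) (x 1) (x 2) (x 3) (hx 23) (hx 0) (hx 1) (hx 2) (hx 3)
  have hQ : (0:ℝ) ≤ (((x 0 + x 1 + x 2 + x 3 + x 4) - 2) * ((x 0 + x 1 + x 2 + x 3 + x 4) - 3) + (-x 0 + x 1 + x 2 + x 3 - x 4) * ((-x 0 + x 1 + x 2 + x 3 - x 4) - 1) / 2) + (((x 1 + x 2 + x 3 + x 4 + x 5) - 2) * ((x 1 + x 2 + x 3 + x 4 + x 5) - 3) + (-x 1 + x 2 + x 3 + x 4 - x 5) * ((-x 1 + x 2 + x 3 + x 4 - x 5) - 1) / 2) + (((x 2 + x 3 + x 4 + x 5 + x 6) - 2) * ((x 2 + x 3 + x 4 + x 5 + x 6) - 3) + (-x 2 + x 3 + x 4 + x 5 - x 6) * ((-x 2 + x 3 + x 4 + x 5 - x 6) - 1) / 2) + (((x 3 + x 4 + x 5 + x 6 + x 7) - 2) * ((x 3 + x 4 + x 5 + x 6 + x 7) - 3) + (-x 3 + x 4 + x 5 + x 6 - x 7) * ((-x 3 + x 4 + x 5 + x 6 - x 7) - 1) / 2) + (((x 4 + x 5 + x 6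 + x 7 + x 8) - 2) * ((x 4 + x 5 + x 6 + x 7 + x 8) - 3) + (-x 4 + x 5 + x 6 + x 7 - x 8) * ((-x 4 + x 5 + x 6 + x 7 - x 8) - 1) / 2) + (((x 5 + x 6 + x 7 + x 8 + x 9) - 2) * ((x 5 + x 6 + x 7 + x 8 + x 9) - 3) + (-x 5 + x 6 + x 7 + x 8 - x 9) * ((-x 5 + x 6 + x 7 + x 8 - x 9) - 1) / 2) + (((x 6 + x 7 + x 8 + x 9 + x 10) - 2) * ((x 6 + x 7 + x 8 + x 9 + x 10) - 3) + (-x 6 + x 7 + x 8 + x 9 - x 10) * ((-x 6 + x 7 + x 8 + x 9 - x 10) - 1) / 2) + (((x 7 + x 8 + x 9 + x 10 + x 11) - 2) * ((x 7 + x 8 + x 9 + x 10 + x 11) - 3) + (-x 7 + x 8 + x 9 + x 10 - x 11) * ((-x 7 + x 8 + x 9 + x 10 - x 11) - 1) / 2) + (((x 8 + x 9 + x 10 + x 11 + x 12) - 2) * ((x 8 + x 9 + x 10 + x 11 + x 12) - 3) + (-x 8 + x 9 + x 10 + x 11 - x 12) * ((-x 8 + x 9 + x 10 + x 11 - x 12)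 - 1) / 2) + (((x 9 + x 10 + x 11 + x 12 + x 13) - 2) * ((x 9 + x 10 + x 11 + x 12 + x 13) - 3) + (-x 9 + x 10 + x 11 + x 12 - x 13) * ((-x 9 + x 10 + x 11 + x 12 - x 13) - 1) / 2) + (((x 10 + x 11 + x 12 + x 13 + x 14) - 2) * ((x 10 + x 11 + x 12 + x 13 + x 14) - 3) + (-x 10 + x 11 + x 12 + x 13 - x 14) * ((-x 10 + x 11 + x 12 + x 13 - x 14) - 1) / 2) + (((x 11 + x 12 + x 13 + x 14 + x 15) - 2) * ((x 11 + x 12 + x 13 + x 14 + x 15) - 3) + (-x 11 + x 12 + x 13 + x 14 - x 15) * ((-x 11 + x 12 + x 13 + x 14 - x 15) - 1) / 2) + (((x 12 + x 13 + x 14 + x 15 + x 16) - 2) * ((x 12 + x 13 + x 14 + x 15 + x 16) - 3) + (-x 12 + x 13 + x 14 + x 15 - x 16) * ((-x 12 + x 13 + x 14 + x 15 - x 16) - 1) / 2) + (((x 13 + x 14 + x 15 + x 16 + x 17) - 2) * ((x 13 + x 14 + x 15 + x 16 + x 17) - 3) + (-x 13 + x 14 + x 15 + x 16 - x 17) * ((-x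 13 + x 14 + x 15 + x 16 - x 17) - 1) / 2) + (((x 14 + x 15 + x 16 + x 17 + x 18) - 2) * ((x 14 + x 15 + x 16 + x 17 + x 18) - 3) + (-x 14 + x 15 + x 16 + x 17 - x 18) * ((-x 14 + x 15 + x 16 + x 17 - x 18) - 1) / 2) + (((x 15 + x 16 + x 17 + x 18 + x 19) - 2) * ((x 15 + x 16 + x 17 + x 18 + x 19) - 3) + (-x 15 + x 16 + x 17 + x 18 - x 19) * ((-x 15 + x 16 + x 17 + x 18 - x 19) - 1) / 2) + (((x 16 + x 17 + x 18 + x 19 + x 20) - 2) * ((x 16 + x 17 + x 18 + x 19 + x 20) - 3) + (-x 16 + x 17 + x 18 + x 19 - x 20) * ((-x 16 + x 17 + x 18 + x 19 - x 20) - 1) / 2) + (((x 17 + x 18 + x 19 + x 20 + x 21) - 2) * ((x 17 + x 18 + x 19 + x 20 + x 21) - 3) + (-x 17 + x 18 + x 19 + x 20 - x 21) * ((-x 17 + x 18 + x 19 + x 20 - x 21) - 1) / 2) + (((x 18 + x 19 + x 20 + x 21 + x 22) - 2) * ((x 18 + x 19 + x 20 + x 21 + x 22) - 3) + (-x 18 +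 x 19 + x 20 + x 21 - x 22) * ((-x 18 + x 19 + x 20 + x 21 - x 22) - 1) / 2) + (((x 19 + x 20 + x 21 + x 22 + x 23) - 2) * ((x 19 + x 20 + x 21 + x 22 + x 23) - 3) + (-x 19 + x 20 + x 21 + x 22 - x 23) * ((-x 19 + x 20 + x 21 + x 22 - x 23) - 1) / 2) + (((x 20 + x 21 + x 22 + x 23 + x 0) - 2) * ((x 20 + x 21 + x 22 + x 23 + x 0) - 3) + (-x 20 + x 21 + x 22 + x 23 - x 0) * ((-x 20 + x 21 + x 22 + x 23 - x 0) - 1) / 2) + (((x 21 + x 22 + x 23 + x 0 + x 1) - 2) * ((x 21 + x 22 + x 23 + x 0 + x 1) - 3) + (-x 21 + x 22 + x 23 + x 0 - x 1) * ((-x 21 + x 22 + x 23 + x 0 - x 1) - 1) / 2) + (((x 22 + x 23 + x 0 + x 1 + x 2) - 2) * ((x 22 + x 23 + x 0 + x 1 + x 2) - 3) + (-x 22 + x 23 + x 0 + x 1 - x 2) * ((-x 22 + x 23 + x 0 + x 1 - x 2) - 1) / 2) + (((x 23 + x 0 + x 1 + x 2 + x 3) - 2) * ((x 23 + x 0 +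 x 1 + x 2 + x 3) - 3) + (-x 23 + x 0 + x 1 + x 2 - x 3) * ((-x 23 + x 0 + x 1 + x 2 - x 3) - 1) / 2) := by
    linarith [q0, q1, q2, q3, q4, q5, q6, q7, q8, q9, q10, q11, q12, q13, q14, q15, q16, q17, q18, q19, q20, q21, q22, q23]
  have key : (∑ i ∈ Finset.range 24,
      (8 * x i * x (i+1) + 5 * x i * x (i+2) + 2 * x i * x (i+3) + 3 * x i * x (i+4)))
      = 72 + ((((x 0 + x 1 + x 2 + x 3 + x 4) - 2) * ((x 0 + x 1 + x 2 + x 3 + x 4) - 3) + (-x 0 + x 1 + x 2 + x 3 - x 4) * ((-x 0 + x 1 + x 2 + x 3 - x 4) - 1) / 2) + (((x 1 + x 2 + x 3 + x 4 + x 5) - 2) * ((x 1 + x 2 + x 3 + x 4 + x 5) - 3) + (-x 1 + x 2 + x 3 + x 4 - x 5) * ((-x 1 + x 2 + x 3 + x 4 - x 5) - 1) / 2) + (((x 2 + x 3 + x 4 + x 5 + x 6) - 2) * ((x 2 + x 3 + x 4 + x 5 + x 6) - 3) + (-x 2 + x 3 + x 4 + x 5 - x 6) * ((-x 2 + x 3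 + x 4 + x 5 - x 6) - 1) / 2) + (((x 3 + x 4 + x 5 + x 6 + x 7) - 2) * ((x 3 + x 4 + x 5 + x 6 + x 7) - 3) + (-x 3 + x 4 + x 5 + x 6 - x 7) * ((-x 3 + x 4 + x 5 + x 6 - x 7) - 1) / 2) + (((x 4 + x 5 + x 6 + x 7 + x 8) - 2) * ((x 4 + x 5 + x 6 + x 7 + x 8) - 3) + (-x 4 + x 5 + x 6 + x 7 - x 8) * ((-x 4 + x 5 + x 6 + x 7 - x 8) - 1) / 2) + (((x 5 + x 6 + x 7 + x 8 + x 9) - 2) * ((x 5 + x 6 + x 7 + x 8 + x 9) - 3) + (-x 5 + x 6 + x 7 + x 8 - x 9) * ((-x 5 + x 6 + x 7 + x 8 - x 9) - 1) / 2) + (((x 6 + x 7 + x 8 + x 9 + x 10) - 2) * ((x 6 + x 7 + x 8 + x 9 + x 10) - 3) + (-x 6 + x 7 + x 8 + x 9 - x 10) * ((-x 6 + x 7 + x 8 + x 9 - x 10) - 1) / 2) + (((x 7 + x 8 + x 9 + x 10 + x 11) - 2) * ((x 7 + x 8 + x 9 + x 10 + x 11) - 3) + (-x 7 + x 8 + x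 9 + x 10 - x 11) * ((-x 7 + x 8 + x 9 + x 10 - x 11) - 1) / 2) + (((x 8 + x 9 + x 10 + x 11 + x 12) - 2) * ((x 8 + x 9 + x 10 + x 11 + x 12) - 3) + (-x 8 + x 9 + x 10 + x 11 - x 12) * ((-x 8 + x 9 + x 10 + x 11 - x 12) - 1) / 2) + (((x 9 + x 10 + x 11 + x 12 + x 13) - 2) * ((x 9 + x 10 + x 11 + x 12 + x 13) - 3) + (-x 9 + x 10 + x 11 + x 12 - x 13) * ((-x 9 + x 10 + x 11 + x 12 - x 13) - 1) / 2) + (((x 10 + x 11 + x 12 + x 13 + x 14) - 2) * ((x 10 + x 11 + x 12 + x 13 + x 14) - 3) + (-x 10 + x 11 + x 12 + x 13 - x 14) * ((-x 10 + x 11 + x 12 + x 13 - x 14) - 1) / 2) + (((x 11 + x 12 + x 13 + x 14 + x 15) - 2) * ((x 11 + x 12 + x 13 + x 14 + x 15) - 3) + (-x 11 + x 12 + x 13 + x 14 - x 15) * ((-x 11 + x 12 + x 13 + x 14 - x 15) - 1) / 2) + (((x 12 + x 13 + x 14 + x 15 + x 16) - 2) * ((x 12 + x 13 + x 14 + x 15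 + x 16) - 3) + (-x 12 + x 13 + x 14 + x 15 - x 16) * ((-x 12 + x 13 + x 14 + x 15 - x 16) - 1) / 2) + (((x 13 + x 14 + x 15 + x 16 + x 17) - 2) * ((x 13 + x 14 + x 15 + x 16 + x 17) - 3) + (-x 13 + x 14 + x 15 + x 16 - x 17) * ((-x 13 + x 14 + x 15 + x 16 - x 17) - 1) / 2) + (((x 14 + x 15 + x 16 + x 17 + x 18) - 2) * ((x 14 + x 15 + x 16 + x 17 + x 18) - 3) + (-x 14 + x 15 + x 16 + x 17 - x 18) * ((-x 14 + x 15 + x 16 + x 17 - x 18) - 1) / 2) + (((x 15 + x 16 + x 17 + x 18 + x 19) - 2) * ((x 15 + x 16 + x 17 + x 18 + x 19) - 3) + (-x 15 + x 16 + x 17 + x 18 - x 19) * ((-x 15 + x 16 + x 17 + x 18 - x 19) - 1) / 2) + (((x 16 + x 17 + x 18 + x 19 + x 20) - 2) * ((x 16 + x 17 + x 18 + x 19 + x 20) - 3) + (-x 16 + x 17 + x 18 + x 19 - x 20) * ((-x 16 + x 17 + x 18 + x 19 - x 20) - 1) / 2) + (((x 17 + x 18 + x 19 + x 20 + x 21)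 - 2) * ((x 17 + x 18 + x 19 + x 20 + x 21) - 3) + (-x 17 + x 18 + x 19 + x 20 - x 21) * ((-x 17 + x 18 + x 19 + x 20 - x 21) - 1) / 2) + (((x 18 + x 19 + x 20 + x 21 + x 22) - 2) * ((x 18 + x 19 + x 20 + x 21 + x 22) - 3) + (-x 18 + x 19 + x 20 + x 21 - x 22) * ((-x 18 + x 19 + x 20 + x 21 - x 22) - 1) / 2) + (((x 19 + x 20 + x 21 + x 22 + x 23) - 2) * ((x 19 + x 20 + x 21 + x 22 + x 23) - 3) + (-x 19 + x 20 + x 21 + x 22 - x 23) * ((-x 19 + x 20 + x 21 + x 22 - x 23) - 1) / 2) + (((x 20 + x 21 + x 22 + x 23 + x 0) - 2) * ((x 20 + x 21 + x 22 + x 23 + x 0) - 3) + (-x 20 + x 21 + x 22 + x 23 - x 0) * ((-x 20 + x 21 + x 22 + x 23 - x 0) - 1) / 2) + (((x 21 + x 22 + x 23 + x 0 + x 1) - 2) * ((x 21 + x 22 + x 23 + x 0 + x 1) - 3) + (-x 21 + x 22 + x 23 + x 0 - x 1) * ((-x 21 + x 22 + x 23 + x 0 - x 1) - 1) / 2) +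 (((x 22 + x 23 + x 0 + x 1 + x 2) - 2) * ((x 22 + x 23 + x 0 + x 1 + x 2) - 3) + (-x 22 + x 23 + x 0 + x 1 - x 2) * ((-x 22 + x 23 + x 0 + x 1 - x 2) - 1) / 2) + (((x 23 + x 0 + x 1 + x 2 + x 3) - 2) * ((x 23 + x 0 + x 1 + x 2 + x 3) - 3) + (-x 23 + x 0 + x 1 + x 2 - x 3) * ((-x 23 + x 0 + x 1 + x 2 - x 3) - 1) / 2)) := by
    simp only [Finset.sum_range_succ, Finset.sum_range_zero]
    norm_num
    rw [h24, h25, h26, h27]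
    linear_combination (-15/2 : ℝ) * sq 0 + (-15/2 : ℝ) * sq 1 + (-15/2 : ℝ) * sq 2 + (-15/2 : ℝ) * sq 3 + (-15/2 : ℝ) * sq 4 + (-15/2 : ℝ) * sq 5 + (-15/2 : ℝ) * sq 6 + (-15/2 : ℝ) * sq 7 + (-15/2 : ℝ) * sq 8 + (-15/2 : ℝ) * sq 9 + (-15/2 : ℝ) * sq 10 + (-15/2 : ℝ) * sq 11 + (-15/2 : ℝ) * sq 12 + (-15/2 : ℝ) * sq 13 + (-15/2 : ℝ) * sq 14 + (-15/2 : ℝ) * sq 15 + (-15/2 : ℝ) * sq 16 + (-15/2 : ℝ) * sq 17 + (-15/2 : ℝ) * sq 18 + (-15/2 : ℝ) * sq 19 + (-15/2 : ℝ) * sq 20 + (-15/2 : ℝ) * sq 21 + (-15/2 : ℝ) * sq 22 + (-15/2 : ℝ) * sq 23 + 18 * hsum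
  linarith

lemma energy_expand (S : Finset (ZMod 24)) :
    energy 24 4 Ugs S = ∑ i ∈ Finset.range 24,
      (8 * X S i * X S (i+1) + 5 * X S i * X S (i+2) + 2 * X S i * X S (i+3) + 3 * X S i * X S (i+4)) := by
  unfold energy
  refine Finset.sum_congr rfl fun i _ => ?_
  rw [show (Finset.Icc 1 4 : Finset ℕ) = {1,2,3,4} from by decide]
  rw [Finset.sum_insert (by decide), Finset.sum_insert (by decide), Finset.sum_insert (by decide),
    Finset.sum_singleton]
  simp only [X, Ugs]
  push_cast
  norm_num
  ring

lemma sum_indicator (S : Finset (ZMod 24)) (h : S.card = 12) :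
    ∑ i ∈ Finset.range 24, X S i = 12 := by
  unfold X
  rw [← Fin.sum_univ_eq_sum_range (fun i : ℕ => if ((i:ℕ) : ZMod 24) ∈ S then (1:ℝ) else 0) 24]
  have hv : ∀ i : Fin 24, ((i.val : ℕ) : ZMod 24) = i := by intro i; fin_cases i <;> rfl
  rw [Finset.sum_congr rfl (fun i _ => by rw [hv i])]
  change (∑ i : ZMod 24, if i ∈ S then (1:ℝ) else 0) = 12
  rw [Finset.sum_ite_mem]
  simp [Finset.univ_inter, h]

lemma ground (S : Finset (ZMod 24)) (h : S.card = 12) : 72 ≤ energy 24 4 Ugs S := by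
  rw [energy_expand]
  have hx : ∀ i, X S i = 0 ∨ X S i = 1 := by
    intro i; unfold X; by_cases hi : ((i : ℕ) : ZMod 24) ∈ S <;> simp [hi]
  have h24 : X S 24 = X S 0 := by
    unfold X; rw [show ((24:ℕ) : ZMod 24) = ((0:ℕ) : ZMod 24) from by decide]
  have h25 : X S 25 = X S 1 := by
    unfold X; rw [show ((25:ℕ) : ZMod 24) = ((1:ℕ) : ZMod 24) from by decide]
  have h26 : X S 26 = X S 2 := by
    unfold X; rw [show ((26:ℕ) : ZMod 24) = ((2:ℕ) : ZMod 24) from by decide]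
  have h27 : X S 27 = X S 3 := by
    unfold X; rw [show ((27:ℕ) : ZMod 24) = ((3:ℕ) : ZMod 24) from by decide]
  have hs := sum_indicator S h
  simp only [Finset.sum_range_succ, Finset.sum_range_zero] at hs
  refine core (X S) hx h24 h25 h26 h27 (by linarith)

set_option maxHeartbeats 1000000 in
lemma energy_Sstar : energy 24 4 Ugs Sstar = 72 := by
  simp (config := { decide := true }) [energy, Ugs, Finset.sum_range_succ,
    show (Finset.Icc 1 4 : Finset ℕ) = {1,2,3,4} from by decide]
  norm_num

/-- For `p = 4` at half filling on `24` sites, there are positive potentials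
`U₁, …, U₄` for which the configuration with unit cell `••○•○○•○` has energy
`3·(U₁+2U₂+3U₃)`, is a ground state, and has strictly lower energy than the
configurations with unit cells `•○`, `••○○`, `•••○○○`, and `••••○○○○`. -/
theorem exotic_ground_state_p4 :
    ∃ U : ℕ → ℝ, (0 < U 1 ∧ 0 < U 2 ∧ 0 < U 3 ∧ 0 < U 4) ∧
      energy 24 4 U Sstar = 3 * (U 1 + 2 * U 2 + 3 * U 3) ∧
      (∀ S : Finset (ZMod 24), S.card = 12 → energy 24 4 U Sstar ≤ energy 24 4 U S) ∧
      energy 24 4 U Sstar < 12 * (U 2 + U 4) ∧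
      energy 24 4 U Sstar < 6 * (U 1 + U 3 + 2 * U 4) ∧
      energy 24 4 U Sstar < 4 * (2 * U 1 + U 2 + U 4) ∧
      energy 24 4 U Sstar < 3 * (3 * U 1 + 2 * U 2 + U 3) := by
  refine ⟨Ugs, ⟨by norm_num [Ugs], by norm_num [Ugs], by norm_num [Ugs], by norm_num [Ugs]⟩,
    ?_, ?_, ?_, ?_, ?_, ?_⟩
  · rw [energy_Sstar]; norm_num [Ugs]
  · intro S h; rw [energy_Sstar]; exact ground S h
  · rw [energy_Sstar]; norm_num [Ugs]
  · rw [energy_Sstar]; norm_num [Ugs]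
  · rw [energy_Sstar]; norm_num [Ugs]
  · rw [energy_Sstar]; norm_num [Ugs]
end
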